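/- arXiv:0905.0135 — 12 statements merged into one kernel-verified Lean document; each statement's English description precedes it below -/
import Mathlib

section
/- Let G = (V, E) be a finite graph with maximal degree Δ ≥ 1, and suppose the edges of G are properly coloured with at most k colours (i.e., edges sharing an endpoint receive different colours). Then G contains a matching M with at least |E|/(4Δ) edges whose edges use at most ⌈k/(2Δ)⌉ distinct colours. -/
/-!
Greedy: starting from `M = ∅`, repeatedly add to `M` a largest colour class of the set `R` of
edges sharing no vertex with `M`. Colour classes are matchings, so `M` stays a matching; after
`j` rounds `M` uses at most `j` colours and `j |R| ≤ k |M|`, since each round moves a class of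
size at least `|R| / k` into `M` and only shrinks `R`. With `j = ⌈k / (2Δ)⌉` this gives
`|R| ≤ 2Δ |M|`, and every other edge meets one of the `|M|` edges of `M`, each of which meets at
most `2Δ` edges, so `|E| ≤ 4Δ |M|`.
-/

open Finset

lemma Finset.exists_subset_forall_eq_card_le_mul {α ι : Type*} [Fintype ι] [DecidableEq ι]
    (s : Finset α) (f : α → ι) :
    ∃ t ⊆ s, (∀ x ∈ t, ∀ y ∈ t, f x = f y) ∧ #s ≤ Fintype.card ι * #t := by
  rcases s.eq_empty_or_nonempty with rfl | ⟨x₀, -⟩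
  · exact ⟨∅, empty_subset _, by simp, by simp⟩
  obtain ⟨i, -, hi⟩ := exists_max_image univ (fun i => #{x ∈ s | f x = i}) ⟨f x₀, mem_univ _⟩
  refine ⟨{x ∈ s | f x = i}, filter_subset _ _, ?_, ?_⟩
  · intro x hx y hy
    rw [(mem_filter.mp hx).2, (mem_filter.mp hy).2]
  · calc #s = ∑ j, #{x ∈ s | f x = j} := card_eq_sum_card_fiberwise fun x _ => mem_univ (f x)
      _ ≤ ∑ _j : ι, #{x ∈ s | f x = i} := sum_le_sum fun j _ => hi j (mem_univ j)
      _ = Fintype.card ι * #{x ∈ s | f x = i} := by simp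

lemma Nat.le_mul_of_ceil_div_mul_le {a b k d : ℕ} (hk : 0 < k) (hd : 0 < d)
    (h : ⌈(k : ℝ) / d⌉₊ * a ≤ k * b) : a ≤ d * b := by
  set t := ⌈(k : ℝ) / d⌉₊
  have ht : 0 < t := Nat.ceil_pos.mpr (by positivity)
  have hkt : k ≤ d * t := by
    have := Nat.le_ceil ((k : ℝ) / d)
    rw [div_le_iff₀ (by positivity)] at this
    exact_mod_cast this.trans_eq (mul_comm _ _)
  refine Nat.le_of_mul_le_mul_left ?_ ht
  calc t * a ≤ k * b := h
    _ ≤ d * t * b := Nat.mul_le_mul_right b hkt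
    _ = t * (d * b) := by ring

section

variable {V : Type*}

def VertexDisjoint (e f : Sym2 V) : Prop := ∀ v, v ∈ e → v ∉ f

lemma VertexDisjoint.symm {e f : Sym2 V} (h : VertexDisjoint e f) : VertexDisjoint f e :=
  fun v hf he => h v he hf

instance : Std.Symm (VertexDisjoint (V := V)) :=
  ⟨fun _ _ => VertexDisjoint.symm⟩

instance [Fintype V] [DecidableEq V] : DecidableRel (VertexDisjoint (V := V)) :=
  fun _ _ => by unfold VertexDisjoint; infer_instance

lemma not_vertexDisjoint_self (e : Sym2 V) : ¬ VertexDisjoint e e :=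
  fun h => h _ (Sym2.out_fst_mem e) (Sym2.out_fst_mem e)

namespace SimpleGraph

variable [Fintype V] {G : SimpleGraph V} [DecidableRel G.Adj]

lemma pairwise_vertexDisjoint_of_forall_eq {ι : Type*} {c : Sym2 V → ι}
    (hproper : ∀ e₁ ∈ G.edgeFinset, ∀ e₂ ∈ G.edgeFinset, e₁ ≠ e₂ →
      (∃ v, v ∈ e₁ ∧ v ∈ e₂) → c e₁ ≠ c e₂)
    {C : Finset (Sym2 V)} (hC : C ⊆ G.edgeFinset) (hmono : ∀ e ∈ C, ∀ f ∈ C, c e = c f) :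
    (C : Set (Sym2 V)).Pairwise VertexDisjoint :=
  fun e he f hf hne v hve hvf => hproper e (hC he) f (hC hf) hne ⟨v, hve, hvf⟩ (hmono e he f hf)

variable [DecidableEq V]

variable (G) in
lemma card_filter_not_vertexDisjoint_le (f : Sym2 V) :
    #{e ∈ G.edgeFinset | ¬ VertexDisjoint e f} ≤ 2 * G.maxDegree := by
  induction f using Sym2.inductionOn with
  | hf u v =>
    have hsub : {e ∈ G.edgeFinset | ¬ VertexDisjoint e s(u, v)} ⊆
        G.incidenceFinset u ∪ G.incidenceFinset v := by
      intro e he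
      simp only [VertexDisjoint, mem_filter, mem_edgeFinset, not_forall, not_not,
        Sym2.mem_iff] at he
      obtain ⟨he, w, hw, rfl | rfl⟩ := he
      · exact mem_union_left _ ((mem_incidenceFinset _ _ _).mpr ⟨he, hw⟩)
      · exact mem_union_right _ ((mem_incidenceFinset _ _ _).mpr ⟨he, hw⟩)
    calc _ ≤ #(G.incidenceFinset u ∪ G.incidenceFinset v) := card_le_card hsub
      _ ≤ #(G.incidenceFinset u) + #(G.incidenceFinset v) := card_union_le _ _
      _ ≤ 2 * G.maxDegree := by
        rw [card_incidenceFinset_eq_degree, card_incidenceFinset_eq_degree]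
        linarith [G.degree_le_maxDegree u, G.degree_le_maxDegree v]

variable (G) in
def edgesAvoiding (M : Finset (Sym2 V)) : Finset (Sym2 V) :=
  {e ∈ G.edgeFinset | ∀ f ∈ M, VertexDisjoint e f}

lemma mem_edgesAvoiding {M : Finset (Sym2 V)} {e : Sym2 V} :
    e ∈ G.edgesAvoiding M ↔ e ∈ G.edgeFinset ∧ ∀ f ∈ M, VertexDisjoint e f :=
  mem_filter

lemma edgesAvoiding_subset_edgeFinset (M : Finset (Sym2 V)) : G.edgesAvoiding M ⊆ G.edgeFinset :=
  filter_subset _ _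

lemma edgesAvoiding_anti {M M' : Finset (Sym2 V)} (h : M ⊆ M') :
    G.edgesAvoiding M' ⊆ G.edgesAvoiding M :=
  monotone_filter_right _ fun _ _ he f hf => he f (h hf)

lemma disjoint_edgesAvoiding (M : Finset (Sym2 V)) : Disjoint M (G.edgesAvoiding M) :=
  Finset.disjoint_left.mpr fun e he he' =>
    not_vertexDisjoint_self e ((mem_edgesAvoiding.mp he').2 e he)

variable (G) in
lemma card_edgeFinset_le (M : Finset (Sym2 V)) :
    #G.edgeFinset ≤ 2 * G.maxDegree * #M + #(G.edgesAvoiding M) := by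
  have hsub : G.edgeFinset ⊆
      M.biUnion (fun f => {e ∈ G.edgeFinset | ¬ VertexDisjoint e f}) ∪ G.edgesAvoiding M := by
    intro e he
    by_cases h : ∀ f ∈ M, VertexDisjoint e f
    · exact mem_union_right _ (mem_edgesAvoiding.mpr ⟨he, h⟩)
    · push Not at h
      obtain ⟨f, hf, hef⟩ := h
      exact mem_union_left _ (mem_biUnion.mpr ⟨f, hf, mem_filter.mpr ⟨he, hef⟩⟩)
  calc #G.edgeFinset
      ≤ #(M.biUnion fun f => {e ∈ G.edgeFinset | ¬ VertexDisjoint e f}) + #(G.edgesAvoiding M) :=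
        (card_le_card hsub).trans (card_union_le _ _)
    _ ≤ 2 * G.maxDegree * #M + #(G.edgesAvoiding M) := by
      gcongr
      calc _ ≤ ∑ f ∈ M, #{e ∈ G.edgeFinset | ¬ VertexDisjoint e f} := card_biUnion_le
        _ ≤ ∑ _f ∈ M, 2 * G.maxDegree :=
          sum_le_sum fun f _ => G.card_filter_not_vertexDisjoint_le f
        _ = 2 * G.maxDegree * #M := by rw [sum_const, smul_eq_mul, mul_comm]

theorem exists_matching_card_image_le {ι : Type*} [Fintype ι] [DecidableEq ι] {c : Sym2 V → ι}
    (hproper : ∀ e₁ ∈ G.edgeFinset, ∀ e₂ ∈ G.edgeFinset, e₁ ≠ e₂ →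
      (∃ v, v ∈ e₁ ∧ v ∈ e₂) → c e₁ ≠ c e₂) (t : ℕ) :
    ∃ M ⊆ G.edgeFinset, (M : Set (Sym2 V)).Pairwise VertexDisjoint ∧ #(M.image c) ≤ t ∧
      t * #(G.edgesAvoiding M) ≤ Fintype.card ι * #M := by
  induction t with
  | zero => exact ⟨∅, empty_subset _, by simp, by simp, by simp⟩
  | succ t ih =>
    obtain ⟨M, hME, hM, hcol, hcount⟩ := ih
    obtain ⟨C, hCR, hmono, hC⟩ := (G.edgesAvoiding M).exists_subset_forall_eq_card_le_mul c
    have hCE : C ⊆ G.edgeFinset := hCR.trans (edgesAvoiding_subset_edgeFinset M)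
    refine ⟨M ∪ C, union_subset hME hCE, ?_, ?_, ?_⟩
    · rw [coe_union, Set.pairwise_union_of_symm]
      exact ⟨hM, pairwise_vertexDisjoint_of_forall_eq hproper hCE hmono,
        fun e he f hf _ => ((mem_edgesAvoiding.mp (hCR hf)).2 e he).symm⟩
    · calc #((M ∪ C).image c) ≤ #(M.image c) + #(C.image c) := by
            rw [image_union]; exact card_union_le _ _
        _ ≤ t + 1 := add_le_add hcol (card_le_one.mpr (by simpa using hmono))
    · have hR : #(G.edgesAvoiding (M ∪ C)) ≤ #(G.edgesAvoiding M) :=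
        card_le_card (edgesAvoiding_anti subset_union_left)
      rw [card_union_of_disjoint ((disjoint_edgesAvoiding M).mono_right hCR)]
      calc (t + 1) * #(G.edgesAvoiding (M ∪ C))
          ≤ t * #(G.edgesAvoiding M) + #(G.edgesAvoiding M) := by rw [add_one_mul]; gcongr
        _ ≤ Fintype.card ι * #M + Fintype.card ι * #C := add_le_add hcount hC
        _ = Fintype.card ι * (#M + #C) := (mul_add _ _ _).symm

end SimpleGraph

end

/-- Let `G = (V,E)` be a finite graph with maximal degree `Δ ≥ 1`, and
suppose the edges of `G` are properly coloured with at most `k` colours.  Then `G`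
contains a matching `M` with at least `|E|/(4Δ)` edges whose edges use at most
`⌈k/(2Δ)⌉` distinct colours. -/
theorem matching_few_colours {V : Type*} [Fintype V] [DecidableEq V]
    (G : SimpleGraph V) [DecidableRel G.Adj]
    (hΔ : 1 ≤ G.maxDegree) {k : ℕ} (c : Sym2 V → Fin k)
    (hproper : ∀ e₁ ∈ G.edgeFinset, ∀ e₂ ∈ G.edgeFinset, e₁ ≠ e₂ →
      (∃ v, v ∈ e₁ ∧ v ∈ e₂) → c e₁ ≠ c e₂) :
    ∃ M ⊆ G.edgeFinset,
      (∀ e₁ ∈ M, ∀ e₂ ∈ M, e₁ ≠ e₂ → ∀ v, v ∈ e₁ → v ∉ e₂) ∧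
      (G.edgeFinset.card : ℝ) / (4 * G.maxDegree) ≤ M.card ∧
      (M.image c).card ≤ ⌈(k : ℝ) / (2 * G.maxDegree)⌉₊ := by
  obtain ⟨M, hME, hM, hcol, hcount⟩ :=
    SimpleGraph.exists_matching_card_image_le hproper ⌈(k : ℝ) / (2 * G.maxDegree)⌉₊
  refine ⟨M, hME, fun e₁ h₁ e₂ h₂ hne => hM h₁ h₂ hne, ?_, hcol⟩
  have hR : #(G.edgesAvoiding M) ≤ 2 * G.maxDegree * #M := by
    rcases Nat.eq_zero_or_pos k with rfl | hk
    · have : IsEmpty (Sym2 V) := ⟨fun e => (c e).elim0⟩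
      simp [Finset.eq_empty_of_isEmpty (G.edgesAvoiding M)]
    · exact Nat.le_mul_of_ceil_div_mul_le hk (by omega) (by simpa using hcount)
  have hE : #G.edgeFinset ≤ 4 * G.maxDegree * #M := by linarith [G.card_edgeFinset_le M]
  have hΔpos : (0 : ℝ) < G.maxDegree := by exact_mod_cast hΔ
  rw [div_le_iff₀ (by positivity)]
  exact_mod_cast hE.trans_eq (mul_comm _ _)
end

section
/- There exist a constant C > 0 and N₀ such that for all N ≥ N₀ the following holds. If A ⊂ ℤ is a set of N distinct integers with |A + A| ≤ S and |A × A| ≤ S, then there exist n ≥ N/32 pairwise disjoint pairs {u_i, v_i} (i = 1,…,n) of distinct elements of A such that |{u_i + v_i : 1 ≤ i ≤ n}| ≤ C·S/√N and |{u_i · v_i : 1 ≤ i ≤ n}| ≤ C·S/√N. -/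
/-!
Discard `0` and let `M = |A \ {0}|`. Pick a uniformly random set `U` of about
`|A + A| / (2√M)` sums and, independently, a random set `V` of about `|A · A| / (2√M)`
products, and keep the pairs `a < b` with `a + b ∈ U` and `a · b ∈ V`. Each of the `M²/2`
pairs survives with probability about `1 / (4M)`. Two distinct pairs through a common vertex
have distinct sums and distinct products (as `0` was discarded), so both survive with
probability about `1 / (16M²)`; there are at most `M³` such ordered pairs of pairs. Deleting
one pair from each surviving conflict leaves a matching whose expected size is at least
`M/8 - M/16 = M/16 ≥ |A|/32`.
-/

open Finset Pointwise

namespace PairMatching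

section Matching

variable {α : Type*}

def SharesVertex (e f : α × α) : Prop :=
  e.1 = f.1 ∨ e.1 = f.2 ∨ e.2 = f.1 ∨ e.2 = f.2

def IsMatching (F : Finset (α × α)) : Prop :=
  (F : Set (α × α)).Pairwise fun e f => ¬ SharesVertex e f

lemma exists_enum_of_isMatching {F : Finset (α × α)} (hF : IsMatching F)
    (hloop : ∀ e ∈ F, e.1 ≠ e.2) :
    ∃ u v : Fin #F → α, (∀ i, (u i, v i) ∈ F) ∧ Function.Injective u ∧
      Function.Injective v ∧ ∀ i j, u i ≠ v j := by
  set φ := F.equivFin.symm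
  have hφ : ∀ i j, i ≠ j → ¬ SharesVertex (φ i : α × α) (φ j) := fun i j hij =>
    hF (φ i).2 (φ j).2 fun h => hij (φ.injective (Subtype.ext h))
  refine ⟨fun i => (φ i : α × α).1, fun i => (φ i : α × α).2, fun i => (φ i).2,
    fun i j h => ?_, fun i j h => ?_, fun i j h => ?_⟩
  · by_contra hij
    exact hφ i j hij (Or.inl h)
  · by_contra hij
    exact hφ i j hij (Or.inr (Or.inr (Or.inr h)))
  · obtain rfl | hij := eq_or_ne i j
    · exact hloop _ (φ i).2 h
    · exact hφ i j hij (Or.inr (Or.inl h))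

variable [DecidableEq α]

instance : DecidableRel (SharesVertex (α := α)) := fun _ _ => by
  unfold SharesVertex; infer_instance

def conflicts (F : Finset (α × α)) : Finset ((α × α) × (α × α)) :=
  (F ×ˢ F).filter fun q => q.1 ≠ q.2 ∧ SharesVertex q.1 q.2

lemma mem_conflicts {F : Finset (α × α)} {q : (α × α) × (α × α)} :
    q ∈ conflicts F ↔ q.1 ∈ F ∧ q.2 ∈ F ∧ q.1 ≠ q.2 ∧ SharesVertex q.1 q.2 := by
  simp [conflicts, and_assoc]

lemma conflicts_mono {F G : Finset (α × α)} (h : F ⊆ G) : conflicts F ⊆ conflicts G :=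
  fun _ hq => by
    rw [mem_conflicts] at hq ⊢
    exact ⟨h hq.1, h hq.2.1, hq.2.2⟩

lemma exists_isMatching_subset (F : Finset (α × α)) :
    ∃ F' ⊆ F, IsMatching F' ∧ #F ≤ #F' + #(conflicts F) := by
  induction F using Finset.strongInduction with
  | H F ih =>
    obtain hF | ⟨⟨e, f⟩, hef⟩ := (conflicts F).eq_empty_or_nonempty
    · refine ⟨F, subset_rfl, fun e he f hf hne hsh => ?_, le_self_add⟩
      have : (e, f) ∈ conflicts F := mem_conflicts.2 ⟨he, hf, hne, hsh⟩
      simp [hF] at this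
    · have he : e ∈ F := (mem_conflicts.1 hef).1
      obtain ⟨F', hF'F, hF', hcard⟩ := ih (F.erase e) (erase_ssubset he)
      have hlt : #(conflicts (F.erase e)) < #(conflicts F) := by
        refine card_lt_card ⟨conflicts_mono (erase_subset e F), fun h => ?_⟩
        simpa using (mem_conflicts.1 (h hef)).1
      refine ⟨F', hF'F.trans (erase_subset e F), hF', ?_⟩
      have := card_erase_add_one he
      omega

end Matching

section RandomSubsets

variable {α β ι : Type*} [DecidableEq α] [DecidableEq β]

lemma card_filter_superset_powersetCard {s T : Finset α} (hs : s ⊆ T) {k : ℕ} (hk : #s ≤ k) :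
    #{U ∈ T.powersetCard k | s ⊆ U} = (#T - #s).choose (k - #s) := by
  rw [← card_sdiff_of_subset hs, ← card_powersetCard]
  refine card_bij' (fun U _ => U \ s) (fun V _ => V ∪ s) (fun U hU => ?_) (fun V hV => ?_)
    (fun U hU => ?_) (fun V hV => ?_)
  · simp only [mem_filter, mem_powersetCard] at hU ⊢
    exact ⟨sdiff_subset_sdiff hU.1.1 subset_rfl, by rw [card_sdiff_of_subset hU.2, hU.1.2]⟩
  · simp only [mem_filter, mem_powersetCard, subset_sdiff] at hV ⊢
    refine ⟨⟨union_subset hV.1.1 hs, ?_⟩, subset_union_right⟩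
    rw [card_union_of_disjoint hV.1.2, hV.2]
    omega
  · simp only [mem_filter] at hU
    exact sdiff_union_of_subset hU.2
  · simp only [mem_powersetCard, subset_sdiff] at hV
    exact union_sdiff_cancel_right hV.1.2

lemma card_filter_superset_powersetCard_mul {s T : Finset α} (hs : s ⊆ T) (k : ℕ) :
    #{U ∈ T.powersetCard k | s ⊆ U} * (#T).choose #s = (#T).choose k * k.choose #s := by
  obtain hk | hk := le_or_gt #s k
  · rw [card_filter_superset_powersetCard hs hk, Nat.choose_mul hk, mul_comm]
  · rw [Nat.choose_eq_zero_of_lt hk, mul_zero, mul_eq_zero]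
    refine Or.inl (card_eq_zero.2 (filter_eq_empty_iff.2 fun U hU hsU => ?_))
    have := card_le_card hsU
    rw [(mem_powersetCard.1 hU).2] at this
    omega

lemma card_filter_mem_powersetCard {T : Finset α} {x : α} (hx : x ∈ T) (k : ℕ) :
    (#{U ∈ T.powersetCard k | x ∈ U} : ℝ) = k / #T * (#T).choose k := by
  have h := card_filter_superset_powersetCard_mul (singleton_subset_iff.2 hx) k
  simp only [singleton_subset_iff, card_singleton, Nat.choose_one_right] at h
  have hT : (#T : ℝ) ≠ 0 := by exact_mod_cast (card_pos.2 ⟨x, hx⟩).ne'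
  field_simp
  exact_mod_cast h.trans (mul_comm _ _)

lemma card_filter_pair_mem_powersetCard_le {T : Finset α} {x y : α} (hx : x ∈ T) (hy : y ∈ T)
    (hxy : x ≠ y) {k : ℕ} (hk : k ≤ #T) :
    (#{U ∈ T.powersetCard k | x ∈ U ∧ y ∈ U} : ℝ) ≤ (k / #T) ^ 2 * (#T).choose k := by
  have hxyT : {x, y} ⊆ T := insert_subset hx (singleton_subset_iff.2 hy)
  have h := card_filter_superset_powersetCard_mul hxyT k
  simp only [insert_subset_iff, singleton_subset_iff, card_pair hxy] at h
  have hT : (2 : ℝ) ≤ #T := by exact_mod_cast (card_pair hxy).symm.trans_le (card_le_card hxyT)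
  have hkT : (k : ℝ) ≤ #T := by exact_mod_cast hk
  have hR : (#{U ∈ T.powersetCard k | x ∈ U ∧ y ∈ U} : ℝ) * (#T * (#T - 1))
      = (#T).choose k * (k * (k - 1)) := by
    have := congrArg (fun n : ℕ => (n : ℝ) * 2) h
    simp only [Nat.cast_mul, Nat.cast_choose_two] at this
    linarith
  rw [div_pow, div_mul_eq_mul_div, le_div_iff₀ (by positivity)]
  have hC : (0 : ℝ) ≤ (#T).choose k := by positivity
  have hc : (0 : ℝ) ≤ #{U ∈ T.powersetCard k | x ∈ U ∧ y ∈ U} := by positivity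
  nlinarith [mul_nonneg hC (mul_nonneg (Nat.cast_nonneg k) (sub_nonneg.2 hkT))]

lemma card_filter_mem_powersetCard_product {T : Finset α} {T' : Finset β} {x : α} {y : β}
    (hx : x ∈ T) (hy : y ∈ T') (k k' : ℕ) :
    (#{ω ∈ T.powersetCard k ×ˢ T'.powersetCard k' | x ∈ ω.1 ∧ y ∈ ω.2} : ℝ) =
      k / #T * (k' / #T') * #(T.powersetCard k ×ˢ T'.powersetCard k') := by
  rw [filter_product (fun U => x ∈ U) (fun V => y ∈ V), card_product, card_product,
    card_powersetCard, card_powersetCard, Nat.cast_mul, Nat.cast_mul,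
    card_filter_mem_powersetCard hx, card_filter_mem_powersetCard hy]
  ring

lemma card_filter_pair_mem_powersetCard_product_le {T : Finset α} {T' : Finset β}
    {x₁ x₂ : α} {y₁ y₂ : β} (hx₁ : x₁ ∈ T) (hx₂ : x₂ ∈ T) (hy₁ : y₁ ∈ T') (hy₂ : y₂ ∈ T')
    (hx : x₁ ≠ x₂) (hy : y₁ ≠ y₂) {k k' : ℕ} (hk : k ≤ #T) (hk' : k' ≤ #T') :
    (#{ω ∈ T.powersetCard k ×ˢ T'.powersetCard k' |
        (x₁ ∈ ω.1 ∧ x₂ ∈ ω.1) ∧ y₁ ∈ ω.2 ∧ y₂ ∈ ω.2} : ℝ) ≤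
      (k / #T * (k' / #T')) ^ 2 * #(T.powersetCard k ×ˢ T'.powersetCard k') := by
  rw [filter_product (fun U => x₁ ∈ U ∧ x₂ ∈ U) (fun V => y₁ ∈ V ∧ y₂ ∈ V), card_product,
    card_product, card_powersetCard, card_powersetCard, Nat.cast_mul, Nat.cast_mul]
  refine (mul_le_mul (card_filter_pair_mem_powersetCard_le hx₁ hx₂ hx hk)
    (card_filter_pair_mem_powersetCard_le hy₁ hy₂ hy hk') (by positivity)
    (by positivity)).trans_eq ?_
  ring

/-- First moment method for a uniformly random pair `(U, V)` of a `k`-subset of `T` and a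
`k'`-subset of `T'`: an item `e` survives if `σ e ∈ U` and `π e ∈ V`, which happens with
probability `p = k/#T * k'/#T'`; two items with distinct labels both survive with probability at
most `p ^ 2`. -/
lemma exists_powersetCard_surviving_sub_ge (E : Finset ι) (K : Finset (ι × ι)) (σ : ι → α)
    (π : ι → β) {T : Finset α} {T' : Finset β} {k k' : ℕ} (hk : k ≤ #T) (hk' : k' ≤ #T')
    (hσ : ∀ e ∈ E, σ e ∈ T) (hπ : ∀ e ∈ E, π e ∈ T')
    (hK : ∀ q ∈ K, q.1 ∈ E ∧ q.2 ∈ E ∧ σ q.1 ≠ σ q.2 ∧ π q.1 ≠ π q.2) :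
    ∃ U ∈ T.powersetCard k, ∃ V ∈ T'.powersetCard k',
      #E * (k / #T * (k' / #T')) - #K * (k / #T * (k' / #T')) ^ 2 ≤
        (#{e ∈ E | σ e ∈ U ∧ π e ∈ V} : ℝ) -
          #{q ∈ K | (σ q.1 ∈ U ∧ σ q.2 ∈ U) ∧ π q.1 ∈ V ∧ π q.2 ∈ V} := by
  set Ω := T.powersetCard k ×ˢ T'.powersetCard k'
  set p : ℝ := k / #T * (k' / #T')
  have hgood : ∑ ω ∈ Ω, (#{e ∈ E | σ e ∈ ω.1 ∧ π e ∈ ω.2} : ℝ) = #Ω * (#E * p) := by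
    have := sum_card_bipartiteAbove_eq_sum_card_bipartiteBelow (s := Ω) (t := E)
      (fun ω e => σ e ∈ ω.1 ∧ π e ∈ ω.2)
    simp only [bipartiteAbove, bipartiteBelow] at this
    rw [← Nat.cast_sum, this, Nat.cast_sum, sum_congr rfl fun e he =>
      card_filter_mem_powersetCard_product (hσ e he) (hπ e he) k k', sum_const, nsmul_eq_mul]
    ring
  have hbad : ∑ ω ∈ Ω,
      (#{q ∈ K | (σ q.1 ∈ ω.1 ∧ σ q.2 ∈ ω.1) ∧ π q.1 ∈ ω.2 ∧ π q.2 ∈ ω.2} : ℝ)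
        ≤ #Ω * (#K * p ^ 2) := by
    have := sum_card_bipartiteAbove_eq_sum_card_bipartiteBelow (s := Ω) (t := K)
      (fun ω q => (σ q.1 ∈ ω.1 ∧ σ q.2 ∈ ω.1) ∧ π q.1 ∈ ω.2 ∧ π q.2 ∈ ω.2)
    simp only [bipartiteAbove, bipartiteBelow] at this
    rw [← Nat.cast_sum, this, Nat.cast_sum]
    refine (sum_le_sum (g := fun _ => p ^ 2 * #Ω) fun q hq => ?_).trans_eq ?_
    · obtain ⟨h1, h2, hσq, hπq⟩ := hK q hq
      exact card_filter_pair_mem_powersetCard_product_le (hσ _ h1) (hσ _ h2) (hπ _ h1)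
        (hπ _ h2) hσq hπq hk hk'
    · rw [sum_const, nsmul_eq_mul]
      ring
  obtain ⟨ω, hω, h⟩ := exists_le_of_sum_le
    ((powersetCard_nonempty.2 hk).product (powersetCard_nonempty.2 hk'))
    (f := fun _ : Finset α × Finset β => #E * p - #K * p ^ 2)
    (g := fun ω : Finset α × Finset β => (#{e ∈ E | σ e ∈ ω.1 ∧ π e ∈ ω.2} : ℝ) -
      #{q ∈ K | (σ q.1 ∈ ω.1 ∧ σ q.2 ∈ ω.1) ∧ π q.1 ∈ ω.2 ∧ π q.2 ∈ ω.2})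
    (by simp only [sum_sub_distrib, sum_const, nsmul_eq_mul]; linarith)
  exact ⟨ω.1, (mem_product.1 hω).1, ω.2, (mem_product.1 hω).2, h⟩

end RandomSubsets

variable {α β γ : Type*} [DecidableEq α] [DecidableEq β] [DecidableEq γ]

lemma exists_isMatching_subset_card_image_le (E : Finset (α × α)) (σ : α × α → β)
    (π : α × α → γ) {T : Finset β} {T' : Finset γ} {k k' : ℕ} (hk : k ≤ #T) (hk' : k' ≤ #T')
    (hσ : ∀ e ∈ E, σ e ∈ T) (hπ : ∀ e ∈ E, π e ∈ T')
    (hconf : ∀ q ∈ conflicts E, σ q.1 ≠ σ q.2 ∧ π q.1 ≠ π q.2) :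
    ∃ F ⊆ E, IsMatching F ∧ #(F.image σ) ≤ k ∧ #(F.image π) ≤ k' ∧
      #E * (k / #T * (k' / #T')) - #(conflicts E) * (k / #T * (k' / #T')) ^ 2 ≤ (#F : ℝ) := by
  obtain ⟨U, hU, V, hV, hUV⟩ := exists_powersetCard_surviving_sub_ge E (conflicts E) σ π hk hk'
    hσ hπ fun q hq => ⟨(mem_conflicts.1 hq).1, (mem_conflicts.1 hq).2.1, hconf q hq⟩
  set G := {e ∈ E | σ e ∈ U ∧ π e ∈ V}
  obtain ⟨F, hFG, hF, hcard⟩ := exists_isMatching_subset G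
  have hGconf : #(conflicts G) ≤
      #{q ∈ conflicts E | (σ q.1 ∈ U ∧ σ q.2 ∈ U) ∧ π q.1 ∈ V ∧ π q.2 ∈ V} := by
    refine card_le_card fun q hq => ?_
    obtain ⟨h1, h2, hne, hsh⟩ := mem_conflicts.1 hq
    simp only [G, mem_filter] at h1 h2
    exact mem_filter.2 ⟨mem_conflicts.2 ⟨h1.1, h2.1, hne, hsh⟩, ⟨h1.2.1, h2.2.1⟩, h1.2.2, h2.2.2⟩
  refine ⟨F, hFG.trans (filter_subset _ _), hF, ?_, ?_, ?_⟩
  · refine (card_le_card (image_subset_iff.2 fun e he => ?_)).trans (mem_powersetCard.1 hU).2.le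
    exact (mem_filter.1 (hFG he)).2.1
  · refine (card_le_card (image_subset_iff.2 fun e he => ?_)).trans (mem_powersetCard.1 hV).2.le
    exact (mem_filter.1 (hFG he)).2.2
  · have hcard' : (#G : ℝ) ≤ #F + #(conflicts G) := by exact_mod_cast hcard
    have hGconf' := (Nat.cast_le (α := ℝ)).2 hGconf
    linarith

section LinearOrder

variable [LinearOrder α]

lemma exists_eq_of_mem_conflicts_filter_lt {s : Finset α} {q : (α × α) × (α × α)}
    (hq : q ∈ conflicts {e ∈ s ×ˢ s | e.1 < e.2}) :
    ∃ x ∈ s, ∃ y ∈ s, ∃ z ∈ s, y ≠ z ∧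
      q = ((min x y, max x y), (min x z, max x z)) := by
  obtain ⟨he, hf, hne, hshare⟩ := mem_conflicts.1 hq
  simp only [mem_filter, mem_product] at he hf
  obtain ⟨⟨a, b⟩, ⟨c, d⟩⟩ := q
  simp only [Prod.mk.injEq, ne_eq] at he hf hne ⊢
  rcases hshare with h | h | h | h <;> simp only at h
  · exact ⟨a, he.1.1, b, he.1.2, d, hf.1.2, by grind, by grind⟩
  · exact ⟨a, he.1.1, b, he.1.2, c, hf.1.1, by grind, by grind⟩
  · exact ⟨b, he.1.2, a, he.1.1, d, hf.1.2, by grind, by grind⟩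
  · exact ⟨b, he.1.2, a, he.1.1, c, hf.1.1, by grind, by grind⟩

lemma card_conflicts_filter_lt_le (s : Finset α) :
    #(conflicts {e ∈ s ×ˢ s | e.1 < e.2}) ≤ #s ^ 3 := by
  calc #(conflicts {e ∈ s ×ˢ s | e.1 < e.2})
      ≤ #((s ×ˢ s ×ˢ s).image fun t => ((min t.1 t.2.1, max t.1 t.2.1),
          (min t.1 t.2.2, max t.1 t.2.2))) := by
        refine card_le_card fun q hq => ?_
        obtain ⟨x, hx, y, hy, z, hz, -, rfl⟩ := exists_eq_of_mem_conflicts_filter_lt hq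
        exact mem_image.2 ⟨(x, y, z), by simp [hx, hy, hz]⟩
    _ ≤ #s ^ 3 := card_image_le.trans (by simp [pow_succ, mul_assoc])

end LinearOrder

lemma add_ne_add_and_mul_ne_mul_of_mem_conflicts {s : Finset ℤ} (h0 : (0 : ℤ) ∉ s)
    {q : (ℤ × ℤ) × (ℤ × ℤ)} (hq : q ∈ conflicts {e ∈ s ×ˢ s | e.1 < e.2}) :
    q.1.1 + q.1.2 ≠ q.2.1 + q.2.2 ∧ q.1.1 * q.1.2 ≠ q.2.1 * q.2.2 := by
  obtain ⟨x, hx, y, -, z, -, hyz, rfl⟩ := exists_eq_of_mem_conflicts_filter_lt hq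
  simp only [min_add_max, min_mul_max, ne_eq, add_right_inj,
    mul_right_inj' (ne_of_mem_of_not_mem hx h0)]
  exact ⟨hyz, hyz⟩

lemma div_le_mul_sub_mul_sq {s E K x : ℝ} (hs : 10 ≤ s) (hx : 1 / (4 * s ^ 2) ≤ x)
    (hx' : x ≤ (s + 2) ^ 2 / (4 * s ^ 4)) (hE : s ^ 2 * (s ^ 2 - 1) / 2 ≤ E)
    (hK : K ≤ s ^ 6) :
    (s ^ 2 + 1) / 32 ≤ E * x - K * x ^ 2 := by
  have hs0 : 0 < s := by linarith
  have hKx : K * x ≤ s ^ 2 * (s + 2) ^ 2 / 4 :=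
    calc K * x ≤ s ^ 6 * ((s + 2) ^ 2 / (4 * s ^ 4)) :=
          mul_le_mul hK hx' (le_trans (by positivity) hx) (by positivity)
      _ = s ^ 2 * (s + 2) ^ 2 / 4 := by field_simp
  have hquad : 0 ≤ s ^ 2 - 4 * s - 6 := by nlinarith
  have hrest : s ^ 2 * (s ^ 2 - 4 * s - 6) / 4 ≤ E - K * x := by nlinarith
  calc (s ^ 2 + 1) / 32 ≤ 1 / (4 * s ^ 2) * (s ^ 2 * (s ^ 2 - 4 * s - 6) / 4) := by
        field_simp; nlinarith
    _ ≤ x * (E - K * x) := mul_le_mul hx hrest (by positivity) (le_trans (by positivity) hx)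
    _ = E * x - K * x ^ 2 := by ring

lemma natCeil_div_two_mul_bounds {s : ℝ} {S : ℕ} (hs : 1 ≤ s) (hS : s ^ 2 ≤ S) :
    ⌈S / (2 * s)⌉₊ ≤ S ∧ 1 / (2 * s) ≤ ⌈S / (2 * s)⌉₊ / (S : ℝ) ∧
      ⌈S / (2 * s)⌉₊ / (S : ℝ) ≤ (s + 2) / (2 * s ^ 2) := by
  have hS0 : (0 : ℝ) < S := by nlinarith
  refine ⟨Nat.ceil_le.2 ?_, ?_, ?_⟩
  · rw [div_le_iff₀ (by positivity)]; nlinarith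
  · rw [le_div_iff₀ hS0, one_div_mul_eq_div]
    exact Nat.le_ceil _
  · rw [div_le_div_iff₀ hS0 (by positivity)]
    have := (Nat.ceil_lt_add_one (by positivity : (0:ℝ) ≤ S / (2 * s))).le
    have h2 : S / (2 * s) * (2 * s ^ 2) = S * s := by field_simp
    nlinarith

lemma natCeil_div_two_sqrt_le {M N S S' : ℕ} (hM : 0 < M) (hS' : S' ≤ S) (hNM : N ≤ 4 * M)
    (hN : 0 < N) (hNS : N ≤ S) :
    (⌈(S' : ℝ) / (2 * √M)⌉₊ : ℝ) ≤ 2 * S / √N := by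
  have hsN : 0 < √(N : ℝ) := Real.sqrt_pos.2 (by exact_mod_cast hN)
  have hNM' : √(N : ℝ) ≤ 2 * √M := Real.sqrt_le_iff.2 ⟨by positivity, by
    rw [mul_pow, Real.sq_sqrt (by positivity)]; exact_mod_cast hNM⟩
  have hNS' : √(N : ℝ) ≤ S := Real.sqrt_le_iff.2 ⟨by positivity, by
    exact_mod_cast hNS.trans (Nat.le_self_pow two_ne_zero S)⟩
  calc (⌈(S' : ℝ) / (2 * √M)⌉₊ : ℝ) ≤ S' / (2 * √M) + 1 :=
        (Nat.ceil_lt_add_one (by positivity)).le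
    _ ≤ S / √N + S / √N :=
        add_le_add (div_le_div₀ (by positivity) (by exact_mod_cast hS') hsN hNM')
          ((one_le_div hsN).2 hNS')
    _ = 2 * S / √N := by ring

lemma exists_isMatching_few_sums_products {s : Finset ℤ} (h0 : (0 : ℤ) ∉ s) (hs : 100 ≤ #s) :
    ∃ F ⊆ {e ∈ s ×ˢ s | e.1 < e.2}, IsMatching F ∧ ((#s : ℝ) + 1) / 32 ≤ #F ∧
      #(F.image fun e => e.1 + e.2) ≤ ⌈(#(s + s) : ℝ) / (2 * √(#s : ℝ))⌉₊ ∧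
      #(F.image fun e => e.1 * e.2) ≤ ⌈(#(s * s) : ℝ) / (2 * √(#s : ℝ))⌉₊ := by
  set r := √(#s : ℝ)
  have hr2 : r ^ 2 = #s := Real.sq_sqrt (Nat.cast_nonneg _)
  have hr : 10 ≤ r := (Real.le_sqrt' (by norm_num)).2 (by norm_num; exact_mod_cast hs)
  obtain ⟨a, ha⟩ : s.Nonempty := card_pos.1 (by omega)
  have hadd : r ^ 2 ≤ #(s + s) := by rw [hr2]; exact_mod_cast card_le_card_add_self
  have hmul : r ^ 2 ≤ #(s * s) := by
    rw [hr2]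
    exact_mod_cast card_le_card_mul_left_of_injective ha
      (mul_right_injective₀ (ne_of_mem_of_not_mem ha h0))
  obtain ⟨hks, hp, hp'⟩ := natCeil_div_two_mul_bounds (by linarith) hadd
  obtain ⟨hkp, hq, hq'⟩ := natCeil_div_two_mul_bounds (by linarith) hmul
  obtain ⟨F, hFE, hF, hsum, hprod, hsize⟩ := exists_isMatching_subset_card_image_le
    {e ∈ s ×ˢ s | e.1 < e.2} (fun e => e.1 + e.2) (fun e => e.1 * e.2) hks hkp
    (fun e he => by simp only [mem_filter, mem_product] at he; exact add_mem_add he.1.1 he.1.2)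
    (fun e he => by simp only [mem_filter, mem_product] at he; exact mul_mem_mul he.1.1 he.1.2)
    (fun q hq => add_ne_add_and_mul_ne_mul_of_mem_conflicts h0 hq)
  refine ⟨F, hFE, hF, le_trans ?_ hsize, hsum, hprod⟩
  rw [← hr2]
  refine div_le_mul_sub_mul_sq hr ?_ ?_ ?_ ?_
  · calc 1 / (4 * r ^ 2) = 1 / (2 * r) * (1 / (2 * r)) := by field_simp; ring
      _ ≤ _ := mul_le_mul hp hq (by positivity) (le_trans (by positivity) hp)
  · calc _ ≤ (r + 2) / (2 * r ^ 2) * ((r + 2) / (2 * r ^ 2)) :=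
          mul_le_mul hp' hq' (by positivity) (by positivity)
      _ = (r + 2) ^ 2 / (4 * r ^ 4) := by field_simp; ring
  · rw [card_product_filter_lt, Nat.cast_choose_two, hr2]
  · rw [show r ^ 6 = (r ^ 2) ^ 3 by ring, hr2]
    exact_mod_cast card_conflicts_filter_lt_le s

end PairMatching

open PairMatching

/-- There exist `C > 0` and `N₀` such that for all `N ≥ N₀`:
if `A ⊂ ℤ` has `N` elements with `|A + A| ≤ S` and `|A × A| ≤ S`, then there are
`n ≥ N/32` pairwise disjoint pairs `{uᵢ, vᵢ}` of distinct elements of `A` with at most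
`C·S/√N` distinct sums `uᵢ + vᵢ` and at most `C·S/√N` distinct products `uᵢ · vᵢ`. -/
theorem matching_in_integer_set :
    ∃ (C : ℝ) (N₀ : ℕ), 0 < C ∧ ∀ (A : Finset ℤ) (S : ℕ),
      N₀ ≤ A.card → (A + A).card ≤ S → (A * A).card ≤ S →
      ∃ (n : ℕ) (u v : Fin n → ℤ),
        (A.card : ℝ) / 32 ≤ n ∧
        (∀ i, u i ∈ A) ∧ (∀ i, v i ∈ A) ∧
        Function.Injective u ∧ Function.Injective v ∧ (∀ i j, u i ≠ v j) ∧
        ((Finset.image (fun i => u i + v i) Finset.univ).card : ℝ)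
          ≤ C * S / Real.sqrt A.card ∧
        ((Finset.image (fun i => u i * v i) Finset.univ).card : ℝ)
          ≤ C * S / Real.sqrt A.card := by
  refine ⟨2, 101, two_pos, fun A S hN hadd hmul => ?_⟩
  have hM : #A ≤ #(A.erase 0) + 1 := by have := pred_card_le_card_erase (s := A) (a := 0); omega
  obtain ⟨F, hFE, hF, hsize, hsum, hprod⟩ :=
    exists_isMatching_few_sums_products (notMem_erase 0 A) (by omega)
  have hmem : ∀ e ∈ F, e.1 ∈ A ∧ e.2 ∈ A ∧ e.1 < e.2 := fun e he => by
    have := hFE he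
    simp only [mem_filter, mem_product] at this
    exact ⟨mem_of_mem_erase this.1.1, mem_of_mem_erase this.1.2, this.2⟩
  obtain ⟨u, v, huv, hu, hv, hne⟩ := exists_enum_of_isMatching hF fun e he => (hmem e he).2.2.ne
  have himage : ∀ g : ℤ → ℤ → ℤ,
      #(univ.image fun i => g (u i) (v i)) ≤ #(F.image fun e => g e.1 e.2) := fun g =>
    card_le_card (image_subset_iff.2 fun i _ => mem_image_of_mem _ (huv i))
  have hbound : ∀ S' ≤ S, (⌈(S' : ℝ) / (2 * √(#(A.erase 0) : ℝ))⌉₊ : ℝ) ≤ 2 * S / √(#A : ℝ) :=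
    fun S' hS' => natCeil_div_two_sqrt_le (by omega) hS' (by omega) (by omega)
      ((card_le_card_add_self).trans hadd)
  refine ⟨#F, u, v, ?_, fun i => (hmem _ (huv i)).1, fun i => (hmem _ (huv i)).2.1, hu, hv,
    hne, ?_, ?_⟩
  · calc (#A : ℝ) / 32 ≤ ((#(A.erase 0) : ℝ) + 1) / 32 := by gcongr; exact_mod_cast hM
      _ ≤ #F := hsize
  · refine le_trans ?_ (hbound _ ((card_le_card (add_subset_add (erase_subset 0 A)
      (erase_subset 0 A))).trans hadd))
    exact_mod_cast (himage (· + ·)).trans hsum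
  · refine le_trans ?_ (hbound _ ((card_le_card (mul_subset_mul (erase_subset 0 A)
      (erase_subset 0 A))).trans hmul))
    exact_mod_cast (himage (· * ·)).trans hprod
end

section
/- There exist ε > 0 and n₀ such that for every n ≥ n₀ there exist n pairs of integers (a_i, b_i), i = 1,…,n, whose 2n entries are pairwise distinct, such that |{a_i + b_i : 1 ≤ i ≤ n}| ≤ n/(log n)^ε and |{a_i·b_i : 1 ≤ i ≤ n}| ≤ n/(log n)^ε, where log denotes the natural logarithm. -/
/-!
Split the indices into `J ≈ (log n)^(1/4)` blocks of `N ≈ n / J` indices, and let block `q`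
consist of the pairs `(2^(J-q) u(v), 2^(J+q+2) v)` for odd `v < 2N`. The products
`2^(2J+2) u(v) v` do not depend on the block, so there are at most `N` of them. The sums of
block `q` are `2^(J-q) (u(v) + 4^(q+1) v)`. Taking `u(v) = (A v mod Q) - v`, where the modulus `Q`
is divisible by a prime `p_q > 4^(q+2) J` and `A ≡ 1 - 4^(q+1) (mod p_q)` (Chinese remainders),
every bracket is a positive multiple of `p_q` below `4^(q+2) N`, so each block contributes at
most `N / J` sums. The entries are distinct by comparing 2-adic valuations (`u(v)` and `v` are
odd) and because `u` is injective, `A - 1` being a unit modulo `Q`. Finally `Q = 2^O(J^2)` fits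
below `N`.
-/

open Finset

theorem Int.two_pow_mul_odd_inj {α β : ℕ} {s t : ℤ} (hs : Odd s) (ht : Odd t)
    (h : 2 ^ α * s = 2 ^ β * t) : α = β ∧ s = t := by
  wlog hle : α ≤ β generalizing α β s t
  · obtain ⟨h₁, h₂⟩ := this ht hs h.symm (by omega)
    exact ⟨h₁.symm, h₂.symm⟩
  obtain ⟨k, rfl⟩ := Nat.exists_eq_add_of_le hle
  rw [pow_add, mul_assoc] at h
  have hst : s = 2 ^ k * t := mul_left_cancel₀ (by positivity) h
  cases k with
  | zero => simpa using hst
  | succ k =>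
    rw [hst, pow_succ, mul_comm _ (2 : ℤ), mul_assoc] at hs
    exact absurd hs (by simp)

theorem Finset.card_image_le_div_of_dvd {ι : Type*} {s : Finset ι} {f : ι → ℤ} {p B : ℕ}
    (hf : ∀ i ∈ s, 0 < f i ∧ f i ≤ B ∧ (p : ℤ) ∣ f i) : #(s.image f) ≤ B / p := by
  calc #(s.image f) ≤ #(({x ∈ Ioc 0 B | p ∣ x}).image ((↑) : ℕ → ℤ)) := by
        refine card_le_card fun y hy => ?_
        obtain ⟨i, hi, rfl⟩ := mem_image.mp hy
        obtain ⟨hpos, hle, hdvd⟩ := hf i hi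
        lift f i to ℕ using hpos.le with m
        simp only [mem_image, mem_filter, mem_Ioc, Nat.cast_inj, exists_eq_right]
        exact ⟨⟨by omega, by omega⟩, by exact_mod_cast hdvd⟩
    _ ≤ #{x ∈ Ioc 0 B | p ∣ x} := card_image_le
    _ = B / p := Nat.Ioc_filter_dvd_card_eq_div B p

theorem Int.exists_forall_dvd_sub {ι : Type*} [Finite ι] {p : ι → ℕ} (hp : ∀ i, (p i).Prime)
    (hinj : Function.Injective p) (r : ι → ℤ) : ∃ A : ℤ, ∀ i, (p i : ℤ) ∣ A - r i := by
  have hcop : Pairwise fun i j => IsCoprime (Ideal.span {(p i : ℤ)}) (Ideal.span {(p j : ℤ)}) := by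
    intro i j hij
    rw [Ideal.isCoprime_span_singleton_iff, Int.isCoprime_iff_gcd_eq_one,
      Int.gcd_natCast_natCast]
    exact (Nat.coprime_primes (hp i) (hp j)).mpr (hinj.ne hij)
  simpa only [Ideal.mem_span_singleton] using Ideal.exists_forall_sub_mem_ideal hcop r

theorem Nat.exists_strictMono_primes_between {m : ℕ → ℕ} (hm₀ : ∀ q, m q ≠ 0)
    (hm : ∀ q, 2 * m q < m (q + 1)) :
    ∃ p : ℕ → ℕ, StrictMono p ∧ ∀ q, (p q).Prime ∧ m q < p q ∧ p q ≤ 2 * m q := by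
  choose p hp hlt hle using fun q => Nat.exists_prime_lt_and_le_two_mul (m q) (hm₀ q)
  exact ⟨p, strictMono_nat_of_lt_succ fun q => (hle q).trans_lt ((hm q).trans (hlt (q + 1))),
    fun q => ⟨hp q, hlt q, hle q⟩⟩

theorem Int.exists_even_forall_dvd_sub {ι : Type*} [Finite ι] {p : ι → ℕ}
    (hp : ∀ i, (p i).Prime) (hp₂ : ∀ i, p i ≠ 2) (hinj : Function.Injective p) (r : ι → ℤ) :
    ∃ A : ℤ, Even A ∧ ∀ i, (p i : ℤ) ∣ A - r i := by
  have hinj' : Function.Injective fun o : Option ι => o.elim 2 p := by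
    rintro (_ | i) (_ | j) h <;> simp only [Option.elim] at h
    · rfl
    · exact absurd h.symm (hp₂ j)
    · exact absurd h (hp₂ i)
    · rw [hinj h]
  obtain ⟨A, hA⟩ := Int.exists_forall_dvd_sub (fun o => by cases o <;> simp [Nat.prime_two, hp])
    hinj' fun o => o.elim 0 r
  exact ⟨A, even_iff_two_dvd.mpr (by simpa using hA none), fun i => hA (some i)⟩

theorem Finset.card_image_comp_le {α β γ : Type*} [Fintype α] [Fintype β] [DecidableEq γ]
    (f : β → γ) (e : α → β) : #(univ.image (f ∘ e)) ≤ #(univ.image f) := by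
  classical
  rw [← image_image]
  exact card_le_card (image_subset_image (subset_univ _))

structure BlockModuli (J N : ℕ) where
  p : ℕ → ℕ
  Q : ℕ
  A : ℤ
  Q_pos : 0 < Q
  Q_le : Q ≤ N
  even_Q : Even Q
  even_A : Even A
  isCoprime : IsCoprime (A - 1) Q
  dvd_Q : ∀ q < J, p q ∣ Q
  le_p : ∀ q < J, 4 ^ (q + 2) * J ≤ p q
  dvd_A : ∀ q < J, (p q : ℤ) ∣ A + 4 ^ (q + 1) - 1

namespace BlockModuli

variable {J N : ℕ} (M : BlockModuli J N)

def u (v : ℤ) : ℤ := M.A * v % M.Q - v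

theorem dvd_mul_sub_emod (v : ℤ) : (M.Q : ℤ) ∣ M.A * v - M.A * v % M.Q :=
  (Int.mod_modEq _ _).dvd

theorem u_injective : Function.Injective M.u := by
  intro v w h
  have hdvd : (M.Q : ℤ) ∣ (M.A - 1) * (v - w) := by
    have key : (M.A - 1) * (v - w) = (M.A * v - M.A * v % M.Q) - (M.A * w - M.A * w % M.Q) +
        (M.u v - M.u w) := by unfold u; ring
    rw [key, h, sub_self, add_zero]
    exact dvd_sub (M.dvd_mul_sub_emod v) (M.dvd_mul_sub_emod w)
  have hwv : w ≡ v [ZMOD M.Q] := Int.modEq_iff_dvd.mpr (M.isCoprime.symm.dvd_of_dvd_mul_left hdvd)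
  have hmod : M.A * v % M.Q = M.A * w % M.Q := (hwv.mul_left M.A).eq.symm
  unfold u at h
  linarith

theorem odd_u {v : ℤ} (hv : Odd v) : Odd (M.u v) := by
  refine Even.sub_odd ?_ hv
  rw [Int.emod_def]
  exact (M.even_A.mul_right v).sub ((Int.even_coe_nat _).mpr M.even_Q |>.mul_right _)

theorem dvd_u_add {q : ℕ} (hq : q < J) (v : ℤ) : (M.p q : ℤ) ∣ M.u v + 4 ^ (q + 1) * v := by
  have key : M.u v + 4 ^ (q + 1) * v =
      (M.A + 4 ^ (q + 1) - 1) * v - (M.A * v - M.A * v % M.Q) := by unfold u; ring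
  rw [key]
  exact dvd_sub ((M.dvd_A q hq).mul_right v)
    ((Int.natCast_dvd_natCast.mpr (M.dvd_Q q hq)).trans (M.dvd_mul_sub_emod v))

def fst (i : Fin J × Fin N) : ℤ := 2 ^ (J - i.1 : ℕ) * M.u (2 * i.2 + 1)

def snd (i : Fin J × Fin N) : ℤ := 2 ^ (J + i.1 + 2 : ℕ) * (2 * i.2 + 1)

theorem fst_injective : Function.Injective M.fst := by
  rintro ⟨q, l⟩ ⟨q', l'⟩ h
  dsimp only [fst] at h
  obtain ⟨hq, hu⟩ := Int.two_pow_mul_odd_inj (M.odd_u (by simp)) (M.odd_u (by simp)) h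
  have hl : (l : ℤ) = l' := by linarith [M.u_injective hu]
  simp only [Prod.mk.injEq, Fin.ext_iff]
  exact ⟨by omega, by omega⟩

theorem snd_injective : Function.Injective (snd : Fin J × Fin N → ℤ) := by
  rintro ⟨q, l⟩ ⟨q', l'⟩ h
  dsimp only [snd] at h
  obtain ⟨hq, hl⟩ := Int.two_pow_mul_odd_inj (by simp) (by simp) h
  simp only [Prod.mk.injEq, Fin.ext_iff]
  exact ⟨by omega, by omega⟩

theorem fst_ne_snd (i j : Fin J × Fin N) : M.fst i ≠ snd j := fun h => by
  have := (Int.two_pow_mul_odd_inj (M.odd_u (by simp)) (by simp) h).1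
  omega

theorem fst_mul_snd (i : Fin J × Fin N) :
    M.fst i * snd i = 2 ^ (2 * J + 2) * (M.u (2 * i.2 + 1) * (2 * i.2 + 1)) := by
  have : 2 * J + 2 = (J - i.1) + (J + i.1 + 2) := by omega
  rw [fst, snd, this, pow_add]
  ring

theorem fst_add_snd (i : Fin J × Fin N) : M.fst i + snd i =
    2 ^ (J - i.1 : ℕ) * (M.u (2 * i.2 + 1) + 4 ^ (i.1 + 1 : ℕ) * (2 * i.2 + 1)) := by
  have : J + i.1 + 2 = (J - i.1) + 2 * (i.1 + 1) := by omega
  rw [fst, snd, this, pow_add, pow_mul]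
  ring

theorem card_image_mul_le : #(univ.image fun i => M.fst i * snd i) ≤ N := by
  have : (fun i => M.fst i * snd i) =
      (fun l : Fin N => 2 ^ (2 * J + 2) * (M.u (2 * l + 1) * (2 * l + 1))) ∘ Prod.snd :=
    funext M.fst_mul_snd
  rw [this]
  exact (card_image_comp_le _ _).trans (card_image_le.trans (by simp))

theorem u_add_mem_Ioc (q : ℕ) (l : Fin N) :
    0 < M.u (2 * l + 1) + 4 ^ (q + 1) * (2 * l + 1) ∧
      M.u (2 * l + 1) + 4 ^ (q + 1) * (2 * l + 1) ≤ (4 ^ (q + 2) * N : ℕ) := by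
  have hQ : (0 : ℤ) < M.Q := by exact_mod_cast M.Q_pos
  have hx₀ := Int.emod_nonneg (M.A * (2 * l + 1)) hQ.ne'
  have hx₁ := Int.emod_lt_of_pos (M.A * (2 * l + 1)) hQ
  have hQN : (M.Q : ℤ) ≤ N := by exact_mod_cast M.Q_le
  have hlN : (l : ℤ) + 1 ≤ N := by exact_mod_cast l.2
  have h4 : (4 : ℤ) ≤ 4 ^ (q + 1) := le_self_pow₀ (by norm_num) (by omega)
  push_cast
  rw [pow_succ _ (q + 1)]
  unfold u
  constructor <;> nlinarith

theorem card_image_u_add_le {q : ℕ} (hq : q < J) :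
    #(univ.image fun l : Fin N => M.u (2 * l + 1) + 4 ^ (q + 1) * (2 * l + 1)) ≤ N / J := by
  have hJ : 0 < J := by omega
  calc _ ≤ 4 ^ (q + 2) * N / M.p q := card_image_le_div_of_dvd fun l _ =>
        ⟨(M.u_add_mem_Ioc q l).1, (M.u_add_mem_Ioc q l).2, M.dvd_u_add hq _⟩
    _ ≤ 4 ^ (q + 2) * N / (4 ^ (q + 2) * J) := Nat.div_le_div_left (M.le_p q hq) (by positivity)
    _ = N / J := Nat.mul_div_mul_left _ _ (by positivity)

theorem card_image_add_le : #(univ.image fun i => M.fst i + snd i) ≤ N := by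
  have hsub : univ.image (fun i => M.fst i + snd i) ⊆
      univ.biUnion fun q : Fin J => univ.image fun l : Fin N => M.fst (q, l) + snd (q, l) := by
    simp only [subset_iff, mem_image, mem_biUnion, mem_univ, true_and]
    rintro _ ⟨⟨q, l⟩, rfl⟩
    exact ⟨q, l, rfl⟩
  have hblock (q : Fin J) : #(univ.image fun l : Fin N => M.fst (q, l) + snd (q, l)) ≤ N / J := by
    have : (fun l : Fin N => M.fst (q, l) + snd (q, l)) = (fun x => 2 ^ (J - q : ℕ) * x) ∘
        fun l : Fin N => M.u (2 * l + 1) + 4 ^ (q + 1 : ℕ) * (2 * l + 1) :=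
      funext fun l => M.fst_add_snd (q, l)
    rw [this, ← image_image]
    exact card_image_le.trans (M.card_image_u_add_le q.2)
  calc _ ≤ ∑ q : Fin J, N / J :=
        (card_le_card hsub).trans (card_biUnion_le.trans (sum_le_sum fun q _ => hblock q))
    _ ≤ N := by simpa using Nat.mul_div_le N J

end BlockModuli

theorem BlockModuli.exists_matching {J N n : ℕ} (M : BlockModuli J N) (hn : n ≤ J * N) :
    ∃ a b : Fin n → ℤ, Function.Injective a ∧ Function.Injective b ∧ (∀ i j, a i ≠ b j) ∧
      #(univ.image fun i => a i + b i) ≤ N ∧ #(univ.image fun i => a i * b i) ≤ N := by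
  let e : Fin n ↪ Fin J × Fin N := (Fin.castLEEmb hn).trans finProdFinEquiv.symm.toEmbedding
  exact ⟨M.fst ∘ e, snd ∘ e, M.fst_injective.comp e.injective, snd_injective.comp e.injective,
    fun i j => M.fst_ne_snd (e i) (e j),
    (card_image_comp_le (fun i => M.fst i + snd i) e).trans M.card_image_add_le,
    (card_image_comp_le (fun i => M.fst i * snd i) e).trans M.card_image_mul_le⟩

theorem two_mul_prod_le_two_pow {J : ℕ} (hJ : 0 < J) {p : ℕ → ℕ}
    (hp : ∀ q < J, p q ≤ 2 * (4 ^ (q + 2) * J)) : 2 * ∏ q ∈ range J, p q ≤ 2 ^ (7 * J ^ 2) := by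
  have hp' : ∀ q ∈ range J, p q ≤ 2 ^ (6 * J) := fun q hq => by
    have hq := mem_range.mp hq
    have h4 : 4 ^ (q + 2) ≤ 2 ^ (2 * J + 2) := by
      rw [show 2 * J + 2 = 2 * (J + 1) by ring, pow_mul]
      exact Nat.pow_le_pow_right (by norm_num) (by omega)
    calc p q ≤ 2 * (4 ^ (q + 2) * J) := hp q hq
      _ ≤ 2 * (2 ^ (2 * J + 2) * 2 ^ J) := by gcongr; exact Nat.lt_two_pow_self.le
      _ = 2 ^ (3 * J + 3) := by ring
      _ ≤ 2 ^ (6 * J) := Nat.pow_le_pow_right (by norm_num) (by omega)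
  calc 2 * ∏ q ∈ range J, p q ≤ 2 * ∏ q ∈ range J, 2 ^ (6 * J) := by
        gcongr with q hq; exact hp' q hq
    _ = 2 ^ (6 * J ^ 2 + 1) := by rw [prod_const, card_range, ← pow_mul]; ring
    _ ≤ 2 ^ (7 * J ^ 2) := Nat.pow_le_pow_right (by norm_num) (by nlinarith)

theorem BlockModuli.nonempty {J N : ℕ} (hJ : 0 < J) (hN : 2 ^ (7 * J ^ 2) ≤ N) :
    Nonempty (BlockModuli J N) := by
  obtain ⟨p, hmono, hp⟩ := Nat.exists_strictMono_primes_between (m := fun q => 4 ^ (q + 2) * J)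
    (fun q => by positivity) fun q => by
      have := Nat.mul_pos (pow_pos (by norm_num : 0 < 4) (q + 2)) hJ
      rw [show q + 1 + 2 = q + 2 + 1 by ring, pow_succ 4 (q + 2)]
      nlinarith
  have h16 (q : ℕ) : 16 < p q := by
    have : 4 ^ 2 ≤ 4 ^ (q + 2) := Nat.pow_le_pow_right (by norm_num) (by omega)
    nlinarith [(hp q).2.1]
  obtain ⟨A, hA, hAp⟩ := Int.exists_even_forall_dvd_sub (p := fun q : Fin J => p q)
    (fun q => (hp q).1) (fun q h => by have := h16 q; omega)
    (hmono.injective.comp Fin.val_injective) fun q => 1 - 4 ^ ((q : ℕ) + 1)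
  have hdvd_A (q : ℕ) (hq : q < J) : (p q : ℤ) ∣ A + 4 ^ (q + 1) - 1 := by
    simpa [sub_sub_eq_add_sub] using hAp ⟨q, hq⟩
  have hcop (q : ℕ) (hq : q < J) : IsCoprime (A - 1) (p q) := by
    refine ((Prime.coprime_iff_not_dvd (Nat.prime_iff_prime_int.mp (hp q).1)).mpr fun h => ?_).symm
    have h4 : (p q : ℤ) ∣ 4 ^ (q + 1) := by simpa using dvd_sub (hdvd_A q hq) h
    have := Int.le_of_dvd (by norm_num) ((Nat.prime_iff_prime_int.mp (hp q).1).dvd_of_dvd_pow h4)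
    have := h16 q
    omega
  refine ⟨⟨p, 2 * ∏ q ∈ range J, p q, A, ?_, ?_, even_two_mul _, hA, ?_,
    fun q hq => dvd_mul_of_dvd_right (dvd_prod_of_mem _ (mem_range.mpr hq)) 2,
    fun q _ => (hp q).2.1.le, hdvd_A⟩⟩
  · exact Nat.mul_pos two_pos (prod_pos fun q _ => (hp q).1.pos)
  · exact (two_mul_prod_le_two_pow hJ fun q _ => (hp q).2.2).trans hN
  · push_cast
    refine IsCoprime.mul_right (Int.isCoprime_two_right.mpr ?_) (IsCoprime.prod_right fun q hq =>
      hcop q (mem_range.mp hq))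
    obtain ⟨k, rfl⟩ := hA
    exact ⟨k - 1, by ring⟩

theorem Nat.lt_sqrt_sqrt_add_one_pow_four (L : ℕ) : L < (L.sqrt.sqrt + 1) ^ 4 :=
  calc L < (L.sqrt + 1) ^ 2 := Nat.lt_succ_sqrt' L
    _ ≤ ((L.sqrt.sqrt + 1) ^ 2) ^ 2 := by gcongr; exact Nat.lt_succ_sqrt' L.sqrt
    _ = (L.sqrt.sqrt + 1) ^ 4 := by ring

theorem Nat.eight_mul_sqrt_sqrt_add_one_sq_le {L : ℕ} (hL : 256 ≤ L) :
    8 * (L.sqrt.sqrt + 1) ^ 2 ≤ L := by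
  have ht : 4 ≤ L.sqrt.sqrt := Nat.le_sqrt.mpr (Nat.le_sqrt.mpr hL)
  have ht₄ : L.sqrt.sqrt ^ 4 ≤ L :=
    calc L.sqrt.sqrt ^ 4 = (L.sqrt.sqrt ^ 2) ^ 2 := by ring
      _ ≤ L.sqrt ^ 2 := by gcongr; exact Nat.sqrt_le' _
      _ ≤ L := Nat.sqrt_le' L
  generalize L.sqrt.sqrt = t at ht ht₄ ⊢
  nlinarith [Nat.mul_le_mul ht ht]

theorem natCast_div_add_one_le_div {n J : ℕ} {G : ℝ} (hG : 3 / 2 ≤ G) (hGJ : G ^ 2 ≤ J)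
    (hJn : 3 * J ≤ n) : ((n / J + 1 : ℕ) : ℝ) ≤ n / G := by
  have hJn' : 3 * (J : ℝ) ≤ n := by exact_mod_cast hJn
  have hJ₀ : (0 : ℝ) < J := by nlinarith
  rw [le_div_iff₀ (by positivity)]
  calc ((n / J + 1 : ℕ) : ℝ) * G ≤ (n / J + 1) * G := by
        gcongr; push_cast; gcongr; exact Nat.cast_div_le
    _ = n * G / J + G := by ring
    _ ≤ n / G + G := by
        refine add_le_add_left ?_ G
        rw [div_le_div_iff₀ hJ₀ (by positivity)]
        nlinarith [(Nat.cast_nonneg n : (0 : ℝ) ≤ n)]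
    _ ≤ n := by
        have : (n : ℝ) / G ≤ n / (3 / 2) := by gcongr
        nlinarith

theorem exists_block_size {n : ℕ} (hn : 2 ^ 256 ≤ n) :
    ∃ J : ℕ, 0 < J ∧ 2 ^ (7 * J ^ 2) ≤ n / J + 1 ∧
      ((n / J + 1 : ℕ) : ℝ) ≤ n / Real.log n ^ (1 / 8 : ℝ) := by
  set L := Nat.log 2 n
  have hL : 256 ≤ L := Nat.le_log_of_pow_le one_lt_two hn
  have hLn : 2 ^ L ≤ n :=
    Nat.pow_log_le_self 2 (Nat.pos_iff_ne_zero.mp (Nat.one_le_two_pow.trans hn))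
  have hnL : n < 2 ^ (L + 1) := Nat.lt_pow_succ_log_self one_lt_two n
  set J := L.sqrt.sqrt + 1
  have hJL : L < J ^ 4 := Nat.lt_sqrt_sqrt_add_one_pow_four L
  have h8J : 8 * J ^ 2 ≤ L := Nat.eight_mul_sqrt_sqrt_add_one_sq_le hL
  have hJJ : J ≤ J ^ 2 := Nat.le_self_pow two_ne_zero J
  have hlog : (L : ℝ) * Real.log 2 ≤ Real.log n := by
    rw [← Real.log_pow]
    exact Real.log_le_log (by positivity) (by exact_mod_cast hLn)
  have hlog' : Real.log n < (L + 1 : ℕ) * Real.log 2 := by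
    rw [← Real.log_pow]
    exact Real.log_lt_log (by positivity) (by exact_mod_cast hnL)
  have hL' : (256 : ℝ) ≤ L := by exact_mod_cast hL
  have hJL' : ((L + 1 : ℕ) : ℝ) ≤ J ^ 4 := by exact_mod_cast hJL
  have hG : (Real.log n ^ (1 / 8 : ℝ)) ^ 8 = Real.log n := by
    rw [← Real.rpow_natCast, ← Real.rpow_mul (by nlinarith [Real.log_two_gt_d9])]
    norm_num
  refine ⟨J, Nat.succ_pos _, ?_, natCast_div_add_one_le_div ?_ ?_ ?_⟩
  · refine ((Nat.le_div_iff_mul_le (Nat.succ_pos _)).mpr ?_).trans (Nat.le_succ _)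
    calc 2 ^ (7 * J ^ 2) * J ≤ 2 ^ (7 * J ^ 2) * 2 ^ (J ^ 2) :=
          Nat.mul_le_mul_left _ (Nat.lt_two_pow_self.le.trans (Nat.pow_le_pow_right two_pos hJJ))
      _ = 2 ^ (8 * J ^ 2) := by ring
      _ ≤ 2 ^ L := Nat.pow_le_pow_right two_pos h8J
      _ ≤ n := hLn
  · refine le_of_pow_le_pow_left₀ (n := 8) (by norm_num) (by positivity) ?_
    rw [hG]
    nlinarith [Real.log_two_gt_d9]
  · refine le_of_pow_le_pow_left₀ (n := 4) (by norm_num) (by positivity) ?_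
    rw [← pow_mul, hG]
    nlinarith [Real.log_two_lt_d9, Real.log_two_gt_d9]
  · have := Nat.lt_two_pow_self (n := L)
    omega

/-- There exist `ε > 0` and `n₀` such that for every `n ≥ n₀` there are
`n` pairs of integers, with pairwise distinct entries, having at most `n/(log n)^ε`
distinct sums and at most `n/(log n)^ε` distinct products. -/
theorem matching_sublinear_upper_bound :
    ∃ (ε : ℝ) (n₀ : ℕ), 0 < ε ∧ ∀ n : ℕ, n₀ ≤ n →
      ∃ a b : Fin n → ℤ,
        Function.Injective a ∧ Function.Injective b ∧ (∀ i j, a i ≠ b j) ∧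
        ((Finset.image (fun i => a i + b i) Finset.univ).card : ℝ)
          ≤ (n : ℝ) / Real.log n ^ ε ∧
        ((Finset.image (fun i => a i * b i) Finset.univ).card : ℝ)
          ≤ (n : ℝ) / Real.log n ^ ε := by
  refine ⟨1 / 8, 2 ^ 256, by norm_num, fun n hn => ?_⟩
  obtain ⟨J, hJ, hN, hbound⟩ := exists_block_size hn
  obtain ⟨M⟩ := BlockModuli.nonempty hJ hN
  obtain ⟨a, b, ha, hb, hab, hsum, hprod⟩ := M.exists_matching (Nat.lt_mul_div_succ n hJ).le
  exact ⟨a, b, ha, hb, hab, (Nat.cast_le.mpr hsum).trans hbound,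
    (Nat.cast_le.mpr hprod).trans hbound⟩
end

section
/- For every n ≥ 1 there exist n pairs of real numbers (a_i, b_i), i = 1,…,n, whose 2n entries are pairwise distinct, such that |{a_i + b_i : 1 ≤ i ≤ n}| ≤ ⌈√n⌉ and |{a_i·b_i : 1 ≤ i ≤ n}| ≤ ⌈√n⌉. (Together with the lower bound |S|·|P| ≥ n for the sum-set S and product-set P of any such real labeling, this shows the minimal possible value of max{|S|, |P|} over the reals is exactly ⌈√n⌉.) -/
/-!
Put `K = ⌈√n⌉` and index the `n ≤ K²` pairs by cells `(q, r)` of a `K × K` grid. The pair in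
cell `(q, r)` is the two roots of `x² - s_q x - (r + 1)`, so its sum is `s_q` and its product is
`-(r + 1)`. One root is positive and the other negative, and both roots are strictly monotone in
`r`; taking the row sums `s_q = (2K)^(q+1)` to grow geometrically makes the roots of different
rows lie in disjoint ranges, so all `2n` roots are distinct.
-/

open Finset

/-- For `0 < c`, `posRoot s c` and `negRoot s c` are the positive and the negative root of
`X² - s X - c`. -/
noncomputable def posRoot (s c : ℝ) : ℝ := s / 2 + √(s ^ 2 / 4 + c)

noncomputable def negRoot (s c : ℝ) : ℝ := s / 2 - √(s ^ 2 / 4 + c)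

section Roots

variable {s s' c c' : ℝ}

theorem posRoot_add_negRoot : posRoot s c + negRoot s c = s := by
  unfold posRoot negRoot; ring

theorem posRoot_mul_negRoot (hc : 0 ≤ c) : posRoot s c * negRoot s c = -c := by
  have h := Real.sq_sqrt (by positivity : 0 ≤ s ^ 2 / 4 + c)
  unfold posRoot negRoot
  linear_combination -h

theorem negRoot_neg (hc : 0 < c) : negRoot s c < 0 := by
  have : s / 2 < √(s ^ 2 / 4 + c) := Real.lt_sqrt_of_sq_lt (by linarith)
  unfold negRoot; linarith

theorem posRoot_pos (hc : 0 < c) : 0 < posRoot s c := by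
  have : -(s / 2) < √(s ^ 2 / 4 + c) := Real.lt_sqrt_of_sq_lt (by linarith)
  unfold posRoot; linarith

theorem lt_posRoot (hc : 0 < c) : s < posRoot s c := by
  linarith [posRoot_add_negRoot (s := s) (c := c), negRoot_neg (s := s) hc]

theorem posRoot_lt_posRoot_of_lt (hc : 0 ≤ c) (h : c < c') : posRoot s c < posRoot s c' := by
  have := Real.sqrt_lt_sqrt (by positivity : 0 ≤ s ^ 2 / 4 + c)
    (by linarith : s ^ 2 / 4 + c < s ^ 2 / 4 + c')
  unfold posRoot; linarith

theorem negRoot_lt_negRoot_of_lt (hc : 0 ≤ c) (h : c < c') : negRoot s c' < negRoot s c := by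
  have := posRoot_lt_posRoot_of_lt (s := s) hc h
  linarith [posRoot_add_negRoot (s := s) (c := c), posRoot_add_negRoot (s := s) (c := c')]

theorem posRoot_natCast_add_one_strictMono (s : ℝ) : StrictMono fun r : ℕ => posRoot s (r + 1) :=
  fun _ _ h => posRoot_lt_posRoot_of_lt (by positivity) (by gcongr)

theorem negRoot_natCast_add_one_strictAnti (s : ℝ) : StrictAnti fun r : ℕ => negRoot s (r + 1) :=
  fun _ _ h => negRoot_lt_negRoot_of_lt (by positivity) (by gcongr)

theorem negRoot_eq_neg_div (hc : 0 < c) : negRoot s c = -(c / posRoot s c) := by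
  have := (posRoot_pos (s := s) hc).ne'
  field_simp
  linarith [posRoot_mul_negRoot (s := s) hc.le]

theorem posRoot_lt_add (hs : 1 ≤ s) (hc : 0 < c) : posRoot s c < s + c := by
  have h1 : 1 < posRoot s c := hs.trans_lt (lt_posRoot hc)
  calc posRoot s c = s + c / posRoot s c := by
        linarith [posRoot_add_negRoot (s := s) (c := c), negRoot_eq_neg_div (s := s) hc]
    _ < s + c := by gcongr; exact div_lt_self hc h1

theorem posRoot_lt_posRoot_of_add_le (hs : 1 ≤ s) (hc : 0 < c) (hc' : 0 < c') (h : s + c ≤ s') :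
    posRoot s c < posRoot s' c' :=
  (posRoot_lt_add hs hc).trans_le (h.trans (lt_posRoot hc').le)

theorem negRoot_lt_negRoot_of_mul_le (hs : 1 ≤ s) (hc : 0 < c) (hc' : 0 < c')
    (h : c' * (s + c) ≤ c * s') : negRoot s c < negRoot s' c' := by
  have hs' : 0 < s' := by nlinarith
  rw [negRoot_eq_neg_div hc, negRoot_eq_neg_div hc', neg_lt_neg_iff]
  calc c' / posRoot s' c' < c' / s' := div_lt_div_of_pos_left hc' hs' (lt_posRoot hc')
    _ ≤ c / (s + c) := (div_le_div_iff₀ hs' (by linarith)).mpr (by linarith)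
    _ < c / posRoot s c := div_lt_div_of_pos_left hc (posRoot_pos hc) (posRoot_lt_add hs hc)

end Roots

theorem injOn_div_mod_of_injective_of_lt {α : Type*} [LinearOrder α] {f : ℕ → ℕ → α} {K : ℕ}
    (hrow : ∀ q, Function.Injective (f q))
    (hsep : ∀ q q' r r', q < q' → r < K → r' < K → f q r < f q' r') :
    Set.InjOn (fun i => f (i / K) (i % K)) (Set.Iio (K * K)) := by
  intro i hi j _ (h : f (i / K) (i % K) = f (j / K) (j % K))
  have hK : 0 < K := Nat.pos_of_mul_pos_left (Nat.zero_lt_of_lt hi)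
  have hq : i / K = j / K := by
    by_contra hne
    rcases Nat.lt_or_gt_of_ne hne with hlt | hlt
    · exact (hsep _ _ _ _ hlt (Nat.mod_lt _ hK) (Nat.mod_lt _ hK)).ne h
    · exact (hsep _ _ _ _ hlt (Nat.mod_lt _ hK) (Nat.mod_lt _ hK)).ne' h
  rw [hq] at h
  rw [← Nat.div_add_mod i K, ← Nat.div_add_mod j K, hq, hrow _ h]

theorem card_image_comp_le {ι β : Type*} [Fintype ι] [DecidableEq β] (g : ℕ → β) (φ : ι → ℕ)
    {K : ℕ} (hφ : ∀ i, φ i < K) : (univ.image fun i => g (φ i)).card ≤ K := by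
  calc (univ.image fun i => g (φ i)).card = ((univ.image φ).image g).card := by
        rw [image_image]; rfl
    _ ≤ (univ.image φ).card := card_image_le
    _ ≤ (range K).card := card_le_card fun x hx => by
        obtain ⟨i, -, rfl⟩ := mem_image.mp hx
        exact mem_range.mpr (hφ i)
    _ = K := card_range K

theorem le_ceil_sqrt_mul_self (n : ℕ) : n ≤ ⌈√(n : ℝ)⌉₊ * ⌈√(n : ℝ)⌉₊ := by
  have h := (Real.sqrt_le_left (Nat.cast_nonneg _)).mp (Nat.le_ceil √(n : ℝ))
  exact_mod_cast h.trans_eq (sq _)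

section Grid

noncomputable def rowSum (K q : ℕ) : ℝ := (2 * K) ^ (q + 1)

variable {K q q' r r' : ℕ}

theorem one_le_rowSum (hK : 1 ≤ K) : 1 ≤ rowSum K q :=
  one_le_pow₀ (by norm_cast; omega)

theorem mul_rowSum_add_le_rowSum (hK : 1 ≤ K) (h : q < q') :
    K * (rowSum K q + K) ≤ rowSum K q' := by
  have hK' : (1 : ℝ) ≤ K := by exact_mod_cast hK
  have hK2 : (K : ℝ) ≤ rowSum K q :=
    (by linarith : (K : ℝ) ≤ 2 * K).trans (le_self_pow₀ (by linarith) (by omega))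
  calc K * (rowSum K q + K) ≤ K * (2 * rowSum K q) := by gcongr; linarith
    _ = (2 * K) ^ (q + 2) := by rw [rowSum]; ring
    _ ≤ rowSum K q' := pow_le_pow_right₀ (by linarith) (by omega)

theorem posRoot_rowSum_lt (hq : q < q') (hr : r < K) :
    posRoot (rowSum K q) (r + 1) < posRoot (rowSum K q') (r' + 1) := by
  have hK : 1 ≤ K := by omega
  have hK' : (1 : ℝ) ≤ K := by exact_mod_cast hK
  have hrK : (r : ℝ) + 1 ≤ K := by exact_mod_cast hr
  have hgrow := mul_rowSum_add_le_rowSum hK hq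
  have hs := one_le_rowSum (q := q) hK
  refine posRoot_lt_posRoot_of_add_le hs (by positivity) (by positivity) ?_
  nlinarith

theorem negRoot_rowSum_lt (hq : q < q') (hr : r < K) (hr' : r' < K) :
    negRoot (rowSum K q) (r + 1) < negRoot (rowSum K q') (r' + 1) := by
  have hK : 1 ≤ K := by omega
  have hrK : (r : ℝ) + 1 ≤ K := by exact_mod_cast hr
  have hr'K : (r' : ℝ) + 1 ≤ K := by exact_mod_cast hr'
  have hs := one_le_rowSum (q := q) hK
  have hs' := one_le_rowSum (q := q') hK
  refine negRoot_lt_negRoot_of_mul_le hs (by positivity) (by positivity) ?_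
  calc ((r' : ℝ) + 1) * (rowSum K q + (r + 1)) ≤ K * (rowSum K q + K) := by gcongr
    _ ≤ rowSum K q' := mul_rowSum_add_le_rowSum hK hq
    _ ≤ ((r : ℝ) + 1) * rowSum K q' := le_mul_of_one_le_left (by linarith) (by simp)

theorem injOn_posRoot_grid :
    Set.InjOn (fun i => posRoot (rowSum K (i / K)) ((i % K : ℕ) + 1)) (Set.Iio (K * K)) :=
  injOn_div_mod_of_injective_of_lt (fun _ => (posRoot_natCast_add_one_strictMono _).injective)
    fun _ _ _ _ hq hr _ => posRoot_rowSum_lt hq hr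

theorem injOn_negRoot_grid :
    Set.InjOn (fun i => negRoot (rowSum K (i / K)) ((i % K : ℕ) + 1)) (Set.Iio (K * K)) :=
  injOn_div_mod_of_injective_of_lt (fun _ => (negRoot_natCast_add_one_strictAnti _).injective)
    fun _ _ _ _ hq hr hr' => negRoot_rowSum_lt hq hr hr'

end Grid

theorem real_matching_sqrt_upper_bound_general (n : ℕ) :
    ∃ a b : Fin n → ℝ,
      Function.Injective a ∧ Function.Injective b ∧ (∀ i j, a i ≠ b j) ∧
      (Finset.image (fun i => a i + b i) Finset.univ).card ≤ ⌈Real.sqrt n⌉₊ ∧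
      (Finset.image (fun i => a i * b i) Finset.univ).card ≤ ⌈Real.sqrt n⌉₊ := by
  set K := ⌈√(n : ℝ)⌉₊
  have hlt (i : Fin n) : (i : ℕ) < K * K := i.2.trans_le (le_ceil_sqrt_mul_self n)
  have hdiv (i : Fin n) : (i : ℕ) / K < K := Nat.div_lt_of_lt_mul (hlt i)
  have hmod (i : Fin n) : (i : ℕ) % K < K :=
    Nat.mod_lt _ (Nat.pos_of_mul_pos_left (Nat.zero_lt_of_lt (hlt i)))
  have hprod (s : ℝ) (m : ℕ) : posRoot s (m + 1) * negRoot s (m + 1) = -(m + 1) :=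
    posRoot_mul_negRoot (by positivity)
  refine ⟨fun i => posRoot (rowSum K (i / K)) ((i % K : ℕ) + 1),
    fun i => negRoot (rowSum K (i / K)) ((i % K : ℕ) + 1),
    fun i j h => Fin.ext (injOn_posRoot_grid (hlt i) (hlt j) h),
    fun i j h => Fin.ext (injOn_negRoot_grid (hlt i) (hlt j) h),
    fun i j => ((negRoot_neg (by positivity)).trans (posRoot_pos (by positivity))).ne', ?_, ?_⟩
  · simp_rw [posRoot_add_negRoot]
    exact card_image_comp_le (rowSum K) _ hdiv
  · simp_rw [hprod]
    exact card_image_comp_le (fun r => -((r : ℝ) + 1)) _ hmod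

/-- For every `n ≥ 1` there exist `n` pairs of real numbers, with
pairwise distinct entries, having at most `⌈√n⌉` distinct sums and at most `⌈√n⌉`
distinct products. -/
theorem real_matching_sqrt_upper_bound (n : ℕ) (hn : 1 ≤ n) :
    ∃ a b : Fin n → ℝ,
      Function.Injective a ∧ Function.Injective b ∧ (∀ i j, a i ≠ b j) ∧
      (Finset.image (fun i => a i + b i) Finset.univ).card ≤ ⌈Real.sqrt n⌉₊ ∧
      (Finset.image (fun i => a i * b i) Finset.univ).card ≤ ⌈Real.sqrt n⌉₊ :=
  real_matching_sqrt_upper_bound_general n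
end

section
/- Let k ≥ 2 and B ≥ 1 be integers such that for every set A ⊂ ℤ of k distinct integers, the set {x ∈ ℤ : A + x ⊆ Squares} has at most B elements. Then there exists c > 0 (depending only on k and B) such that for every n ≥ 1 and every n pairs of integers (a_i, b_i), i = 1,…,n, whose 2n entries are pairwise distinct, max{|{a_i + b_i : i ≤ n}|, |{a_i·b_i : i ≤ n}|} ≥ c·n^{k/(2k-1)}. -/
/-- `Squares` is the set of perfect squares in `ℤ`. -/
def Squares : Set ℤ := {m : ℤ | ∃ z : ℤ, m = z ^ 2}

/-!
Each pair `(aᵢ, bᵢ)` gives the edge `(aᵢ + bᵢ, aᵢ bᵢ)` of a bipartite graph between the sum set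
and the product set. Distinct pairs give distinct edges, because the sum and the product determine
`{aᵢ, bᵢ}`, so the graph has `n` edges. If a sum `s` is joined to a product `p` then
`s² - 4p = (a - b)²` is a square, so a sum joined to `k` products `Q` has its square among the
translates of `-4Q` into the squares; as `s ↦ s²` is at most two-to-one, any `k` products have at
most `2B` common neighbours. The Kővári–Sós–Turán count then bounds the number of edges by
`C · m^(2 - 1/k)`, where `m` is the larger of the two sets.
-/

open Finset

section KovariSosTuran

variable {α β : Type*} (r : α → β → Prop) [∀ a b, Decidable (r a b)] {s : Finset α}
  {t : Finset β} {k L : ℕ}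

/-- Double counting of the pairs `(a, Q)` with `Q` a `k`-set of neighbours of `a`. -/
theorem sum_choose_card_bipartiteAbove_le
    (h : ∀ Q ⊆ t, #Q = k → #{a ∈ s | ∀ b ∈ Q, r a b} ≤ L) :
    ∑ a ∈ s, (#(t.bipartiteAbove r a)).choose k ≤ L * (#t).choose k := by
  have hchoose : ∀ a, (#(t.bipartiteAbove r a)).choose k =
      #((t.powersetCard k).bipartiteAbove (fun a Q => ∀ b ∈ Q, r a b) a) := by
    intro a
    rw [← card_powersetCard]
    congr 1
    ext Q
    simp only [mem_powersetCard, mem_bipartiteAbove, subset_iff]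
    grind
  calc ∑ a ∈ s, (#(t.bipartiteAbove r a)).choose k
      = ∑ Q ∈ t.powersetCard k, #(s.bipartiteBelow (fun a Q => ∀ b ∈ Q, r a b) Q) := by
        simp_rw [hchoose]
        exact sum_card_bipartiteAbove_eq_sum_card_bipartiteBelow _
    _ ≤ ∑ _Q ∈ t.powersetCard k, L :=
        sum_le_sum fun Q hQ => h Q (mem_powersetCard.1 hQ).1 (mem_powersetCard.1 hQ).2
    _ = L * (#t).choose k := by rw [sum_const, card_powersetCard, smul_eq_mul, mul_comm]

theorem sum_pow_card_bipartiteAbove_sub_le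
    (h : ∀ Q ⊆ t, #Q = k → #{a ∈ s | ∀ b ∈ Q, r a b} ≤ L) :
    ∑ a ∈ s, (#(t.bipartiteAbove r a) - k) ^ k ≤ L * #t ^ k :=
  calc ∑ a ∈ s, (#(t.bipartiteAbove r a) - k) ^ k
      ≤ ∑ a ∈ s, k.factorial * (#(t.bipartiteAbove r a)).choose k := by
        gcongr with a
        rw [← Nat.descFactorial_eq_factorial_mul_choose]
        exact (Nat.pow_le_pow_left (by omega) k).trans (Nat.pow_sub_le_descFactorial _ k)
    _ ≤ k.factorial * (L * (#t).choose k) := by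
        rw [← mul_sum]
        gcongr
        exact sum_choose_card_bipartiteAbove_le r h
    _ ≤ L * #t ^ k := by
        rw [mul_left_comm, ← Nat.descFactorial_eq_factorial_mul_choose]
        gcongr
        exact Nat.descFactorial_le_pow _ _

/-- The **Kővári–Sós–Turán** bound, as a bound on the degree sum. -/
theorem sum_card_bipartiteAbove_pow_le (hk : k ≠ 0)
    (h : ∀ Q ⊆ t, #Q = k → #{a ∈ s | ∀ b ∈ Q, r a b} ≤ L) :
    (∑ a ∈ s, #(t.bipartiteAbove r a)) ^ k ≤
      2 ^ (k - 1) * (L + k ^ k) * max #s #t ^ (2 * k - 1) := by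
  set d := fun a => #(t.bipartiteAbove r a)
  set m := max #s #t
  obtain ⟨j, rfl⟩ : ∃ j, k = j + 1 := Nat.exists_eq_succ_of_ne_zero hk
  -- Split each degree as `(d - k) + k`: the first parts are controlled by the double count.
  have hsplit : ∑ a ∈ s, (d a - (j + 1) + (j + 1)) ^ (j + 1) ≤
      2 ^ j * (L * #t ^ (j + 1) + #s * (j + 1) ^ (j + 1)) :=
    calc ∑ a ∈ s, (d a - (j + 1) + (j + 1)) ^ (j + 1)
        ≤ ∑ a ∈ s, 2 ^ j * ((d a - (j + 1)) ^ (j + 1) + (j + 1) ^ (j + 1)) :=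
          sum_le_sum fun a _ => add_pow_le (Nat.zero_le _) (Nat.zero_le _) _
      _ ≤ 2 ^ j * (L * #t ^ (j + 1) + #s * (j + 1) ^ (j + 1)) := by
          rw [← mul_sum, sum_add_distrib, sum_const, smul_eq_mul]
          gcongr
          exact sum_pow_card_bipartiteAbove_sub_le r h
  calc (∑ a ∈ s, d a) ^ (j + 1)
      ≤ (∑ a ∈ s, (d a - (j + 1) + (j + 1))) ^ (j + 1) := by
        gcongr with a
        exact le_tsub_add
    _ ≤ #s ^ j * ∑ a ∈ s, (d a - (j + 1) + (j + 1)) ^ (j + 1) :=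
        pow_sum_le_card_mul_sum_pow (fun _ _ => Nat.zero_le _) j
    _ ≤ m ^ j * (2 ^ j * (L * #t ^ (j + 1) + #s * (j + 1) ^ (j + 1))) := by
        gcongr
        exact le_max_left _ _
    _ ≤ m ^ j * (2 ^ j * (L * m ^ (j + 1) + m ^ (j + 1) * (j + 1) ^ (j + 1))) := by
        gcongr
        · exact le_max_right _ _
        · exact (le_max_left _ _).trans (Nat.le_self_pow hk m)
    _ = 2 ^ (j + 1 - 1) * (L + (j + 1) ^ (j + 1)) * m ^ (2 * (j + 1) - 1) := by
        rw [show 2 * (j + 1) - 1 = j + (j + 1) by omega, Nat.add_sub_cancel, pow_add]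
        ring

end KovariSosTuran

theorem sum_card_bipartiteAbove_mem_eq_card {α β : Type*} [DecidableEq α] [DecidableEq β]
    (E : Finset (α × β)) :
    ∑ x ∈ E.image Prod.fst, #((E.image Prod.snd).bipartiteAbove (fun x y => (x, y) ∈ E) x) =
      #E := by
  rw [card_eq_sum_card_image Prod.fst E]
  refine sum_congr rfl fun x _ => card_nbij' (fun y => (x, y)) Prod.snd ?_ ?_ ?_ ?_
  · intro y hy
    simp_all
  · rintro ⟨x', y⟩ hfiber
    obtain ⟨hE, rfl⟩ := mem_filter.1 (mem_coe.1 hfiber)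
    exact (mem_bipartiteAbove _).2 ⟨mem_image_of_mem Prod.snd hE, hE⟩
  · intro y _
    rfl
  · rintro ⟨x', y⟩ he
    simp_all

theorem card_le_two_mul_ncard_of_sq_mem {R : Type*} [CommRing R] [NoZeroDivisors R]
    [DecidableEq R] {T : Set R} (hT : T.Finite) {F : Finset R} (hF : ∀ x ∈ F, x ^ 2 ∈ T) :
    #F ≤ 2 * T.ncard := by
  have hfiber : ∀ y ∈ F.image (· ^ 2), #{x ∈ F | x ^ 2 = y} ≤ 2 := by
    intro y hy
    obtain ⟨z, -, rfl⟩ := mem_image.1 hy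
    calc #{x ∈ F | x ^ 2 = z ^ 2} ≤ #{z, -z} := by
          refine card_le_card fun x hx => ?_
          simpa [sq_eq_sq_iff_eq_or_eq_neg] using (mem_filter.1 hx).2
      _ ≤ 2 := card_le_two
  calc #F ≤ 2 * #(F.image (· ^ 2)) := card_le_mul_card_image F 2 hfiber
    _ ≤ 2 * #hT.toFinset := by
        gcongr
        intro y hy
        obtain ⟨x, hx, rfl⟩ := mem_image.1 hy
        exact hT.mem_toFinset.2 (hF x hx)
    _ = 2 * T.ncard := by rw [Set.ncard_eq_toFinset_card T hT]

theorem rpow_div_le_mul_of_pow_le {x y K : ℝ} {k e : ℕ} (hx : 0 ≤ x) (hy : 0 ≤ y) (hK : 1 ≤ K)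
    (he : e ≠ 0) (h : x ^ k ≤ K * y ^ e) : x ^ ((k : ℝ) / e) ≤ K * y := by
  have he' : (e : ℝ)⁻¹ ≤ 1 := inv_le_one_of_one_le₀ (by exact_mod_cast Nat.one_le_iff_ne_zero.2 he)
  calc x ^ ((k : ℝ) / e) = (x ^ k) ^ (e : ℝ)⁻¹ := by
        rw [← Real.rpow_natCast, ← Real.rpow_mul hx, div_eq_mul_inv]
    _ ≤ (K * y ^ e) ^ (e : ℝ)⁻¹ := by gcongr
    _ = K ^ (e : ℝ)⁻¹ * y := by
        rw [Real.mul_rpow (by positivity) (by positivity), ← Real.rpow_natCast,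
          ← Real.rpow_mul hy, mul_inv_cancel₀ (by exact_mod_cast he), Real.rpow_one]
    _ ≤ K * y := by
        gcongr
        exact Real.rpow_le_self_of_one_le hK he'

section SumProduct

variable {n : ℕ} {a b : Fin n → ℤ}

def sumProductEdges (a b : Fin n → ℤ) : Finset (ℤ × ℤ) :=
  univ.image fun i => (a i + b i, a i * b i)

theorem card_sumProductEdges (ha : Function.Injective a) (hab : ∀ i j, a i ≠ b j) :
    #(sumProductEdges a b) = n := by
  rw [sumProductEdges, card_image_of_injective _ ?_, card_univ, Fintype.card_fin]
  intro i j hij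
  simp only [Prod.mk.injEq] at hij
  have hroot : (a i - a j) * (a i - b j) = 0 := by linear_combination a i * hij.1 - hij.2
  rcases mul_eq_zero.1 hroot with h | h
  · exact ha (sub_eq_zero.1 h)
  · exact absurd (sub_eq_zero.1 h) (hab i j)

theorem image_fst_sumProductEdges :
    (sumProductEdges a b).image Prod.fst = univ.image fun i => a i + b i := by
  rw [sumProductEdges, image_image]
  rfl

theorem image_snd_sumProductEdges :
    (sumProductEdges a b).image Prod.snd = univ.image fun i => a i * b i := by
  rw [sumProductEdges, image_image]
  rfl

theorem neg_four_mul_add_sq_mem_squares {x p : ℤ} (he : (x, p) ∈ sumProductEdges a b) :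
    -(4 * p) + x ^ 2 ∈ Squares := by
  obtain ⟨i, -, hi⟩ := mem_image.1 he
  simp only [Prod.mk.injEq] at hi
  exact ⟨a i - b i, by rw [← hi.1, ← hi.2]; ring⟩

theorem card_common_sums_le {k B : ℕ}
    (h : ∀ A : Finset ℤ, A.card = k →
      {x : ℤ | ∀ a ∈ A, a + x ∈ Squares}.Finite ∧
      {x : ℤ | ∀ a ∈ A, a + x ∈ Squares}.ncard ≤ B)
    {Q : Finset ℤ} (hQ : #Q = k) (s : Finset ℤ) :
    #{x ∈ s | ∀ p ∈ Q, (x, p) ∈ sumProductEdges a b} ≤ 2 * B := by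
  have hA : #(Q.image fun p => -(4 * p)) = k := by
    rw [card_image_of_injective _ fun p q hpq => by simpa using hpq, hQ]
  obtain ⟨hfin, hB⟩ := h _ hA
  refine (card_le_two_mul_ncard_of_sq_mem hfin fun x hx => ?_).trans (by omega)
  intro c hc
  obtain ⟨p, hp, rfl⟩ := mem_image.1 hc
  exact neg_four_mul_add_sq_mem_squares ((mem_filter.1 hx).2 p hp)

end SumProduct

theorem finite_translates_implies_matching_lower_bound_general
    (k B : ℕ) (hk : 2 ≤ k)
    (h : ∀ A : Finset ℤ, A.card = k →
      {x : ℤ | ∀ a ∈ A, a + x ∈ Squares}.Finite ∧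
      {x : ℤ | ∀ a ∈ A, a + x ∈ Squares}.ncard ≤ B) :
    ∃ c : ℝ, 0 < c ∧ ∀ n : ℕ, 1 ≤ n → ∀ a b : Fin n → ℤ,
      Function.Injective a → Function.Injective b → (∀ i j, a i ≠ b j) →
      c * (n : ℝ) ^ ((k : ℝ) / (2 * k - 1)) ≤
        max ((Finset.image (fun i => a i + b i) Finset.univ).card : ℝ)
          ((Finset.image (fun i => a i * b i) Finset.univ).card : ℝ) := by
  classical
  set K : ℕ := 2 ^ (k - 1) * (2 * B + k ^ k)
  have hK : (1 : ℝ) ≤ K := by exact_mod_cast Nat.one_le_iff_ne_zero.2 (by positivity)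
  refine ⟨(K : ℝ)⁻¹, by positivity, fun n _ a b ha _ hab => ?_⟩
  set E := sumProductEdges a b
  have hcount := sum_card_bipartiteAbove_pow_le (fun x p => (x, p) ∈ E) (by omega : k ≠ 0)
    (s := E.image Prod.fst) (t := E.image Prod.snd) fun Q _ hQ => card_common_sums_le h hQ _
  rw [sum_card_bipartiteAbove_mem_eq_card, card_sumProductEdges ha hab,
    image_fst_sumProductEdges, image_snd_sumProductEdges] at hcount
  have hexp : ((2 * k - 1 : ℕ) : ℝ) = 2 * k - 1 := by
    rw [Nat.cast_sub (by omega)]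
    push_cast
    ring
  rw [inv_mul_le_iff₀ (by positivity), ← hexp]
  exact rpow_div_le_mul_of_pow_le (by positivity) (by positivity) hK (by omega)
    (by exact_mod_cast hcount)

/-- Let `k ≥ 2` and `B ≥ 1` be such that every set of `k` distinct
integers has at most `B` translates into the perfect squares.  Then there is `c > 0`
such that every `n` pairs of integers, with pairwise distinct entries, have at least
`c·n^(k/(2k-1))` distinct sums or that many distinct products. -/
theorem finite_translates_implies_matching_lower_bound
    (k B : ℕ) (hk : 2 ≤ k) (hB : 1 ≤ B)
    (h : ∀ A : Finset ℤ, A.card = k →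
      {x : ℤ | ∀ a ∈ A, a + x ∈ Squares}.Finite ∧
      {x : ℤ | ∀ a ∈ A, a + x ∈ Squares}.ncard ≤ B) :
    ∃ c : ℝ, 0 < c ∧ ∀ n : ℕ, 1 ≤ n → ∀ a b : Fin n → ℤ,
      Function.Injective a → Function.Injective b → (∀ i j, a i ≠ b j) →
      c * (n : ℝ) ^ ((k : ℝ) / (2 * k - 1)) ≤
        max ((Finset.image (fun i => a i + b i) Finset.univ).card : ℝ)
          ((Finset.image (fun i => a i * b i) Finset.univ).card : ℝ) :=
  finite_translates_implies_matching_lower_bound_general k B hk h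
end

section
/- For every integer k ≥ 2 there exists c > 0 such that the following holds for all integers n ≥ 1, t ≥ 1 and r ≥ 1. Suppose that for every set A of k distinct integers with A ⊆ {-4t²,…,4t²}, the set {x ∈ {-4t²,…,4t²} : A + x ⊆ Squares} has at most r elements. Then for every n pairs of integers (a_i, b_i), i = 1,…,n, whose 2n entries are pairwise distinct and satisfy |a_i| ≤ t and |b_i| ≤ t for all i, one has max{|{a_i + b_i : i ≤ n}|, |{a_i·b_i : i ≤ n}|} ≥ c·n^{k/(2k-1)}·r^{-1/(2k-1)}. -/
/-!
Write `s_i = a_i + b_i` and `p_i = a_i b_i`. Since `s_i² - 4 p_i = (a_i - b_i)²`, the squared sums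
`s_i²` of the pairs with a common product `p` form a set `Q_p` that is translated into the squares
by `-4p`, all inside `[-4t², 4t²]`. Hence every `k`-subset of squared sums lies in at most `r` of
the sets `Q_p`, and double counting gives `∑_p C(|Q_p|, k) ≤ r C(|S|, k)`. A pair is determined
by its sum and product, so `|Q_p|` is at least half the number of pairs with product `p`. Either
`|P| ≳ n/k` already, or the sizes `|Q_p| - k` still sum to `≳ n`, and Hölder's inequality turns
the double count into `n^k ≲ r |P|^(k-1) |S|^k`.
-/

open Finset Function
open scoped Nat

lemma eq_or_eq_of_add_eq_of_mul_eq {R : Type*} [CommRing R] [NoZeroDivisors R] {x y u v : R}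
    (hs : x + y = u + v) (hp : x * y = u * v) : x = u ∨ x = v := by
  have h : (x - u) * (x - v) = 0 := by linear_combination x * hs - hp
  exact (mul_eq_zero.1 h).imp sub_eq_zero.1 sub_eq_zero.1

lemma sum_choose_card_le_mul_choose_card {α β : Type*} [DecidableEq β] {P : Finset α}
    {U : Finset β} {Q : α → Finset β} (hQ : ∀ p ∈ P, Q p ⊆ U) {k r : ℕ}
    (hr : ∀ A ∈ U.powersetCard k, #{p ∈ P | A ⊆ Q p} ≤ r) :
    ∑ p ∈ P, (#(Q p)).choose k ≤ r * (#U).choose k := by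
  calc ∑ p ∈ P, (#(Q p)).choose k
      = ∑ p ∈ P, #((U.powersetCard k).bipartiteAbove (fun p A => A ⊆ Q p) p) := by
        refine sum_congr rfl fun p hp => ?_
        rw [← card_powersetCard, bipartiteAbove]
        congr 1
        ext A
        simp only [mem_powersetCard, mem_filter]
        exact ⟨fun h => ⟨⟨h.1.trans (hQ p hp), h.2⟩, h.1⟩, fun h => ⟨h.2, h.1.2⟩⟩
    _ = ∑ A ∈ U.powersetCard k, #(P.bipartiteBelow (fun p A => A ⊆ Q p) A) :=
        sum_card_bipartiteAbove_eq_sum_card_bipartiteBelow _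
    _ ≤ ∑ _A ∈ U.powersetCard k, r := sum_le_sum hr
    _ = r * (#U).choose k := by rw [sum_const, card_powersetCard, smul_eq_mul, mul_comm]

lemma pow_sub_le_factorial_mul_choose (q k : ℕ) : (q + 1 - k) ^ k ≤ k ! * q.choose k :=
  Nat.descFactorial_eq_factorial_mul_choose q k ▸ Nat.pow_sub_le_descFactorial q k

lemma pow_sum_sub_mul_card_le {α : Type*} (s : Finset α) (q : α → ℕ) {k : ℕ} (hk : 1 ≤ k) :
    (∑ p ∈ s, q p - k * #s) ^ k ≤ #s ^ (k - 1) * (k ! * ∑ p ∈ s, (q p).choose k) := by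
  have hsum : ∑ p ∈ s, q p - k * #s ≤ ∑ p ∈ s, (q p + 1 - k) := by
    have : ∑ p ∈ s, q p ≤ ∑ p ∈ s, (q p + 1 - k + k) := sum_le_sum fun p _ => by omega
    rw [sum_add_distrib, sum_const, smul_eq_mul, mul_comm] at this
    omega
  obtain ⟨m, rfl⟩ : ∃ m, k = m + 1 := ⟨k - 1, by omega⟩
  calc _ ≤ (∑ p ∈ s, (q p + 1 - (m + 1))) ^ (m + 1) := Nat.pow_le_pow_left hsum _
    _ ≤ #s ^ m * ∑ p ∈ s, (q p + 1 - (m + 1)) ^ (m + 1) :=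
        pow_sum_le_card_mul_sum_pow (fun _ _ => Nat.zero_le _) m
    _ ≤ #s ^ (m + 1 - 1) * ((m + 1)! * ∑ p ∈ s, (q p).choose (m + 1)) := by
        rw [add_tsub_cancel_right, mul_sum _ _ ((m + 1)!)]
        gcongr with p
        exact pow_sub_le_factorial_mul_choose _ _

lemma rpow_div_natCast_pow {x : ℝ} (hx : 0 ≤ x) (y : ℝ) {m : ℕ} (hm : m ≠ 0) :
    (x ^ (y / m)) ^ m = x ^ y := by
  rw [← Real.rpow_natCast, ← Real.rpow_mul hx, div_mul_cancel₀ _ (by positivity)]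

section Matching

variable {ι : Type*} {a b : ι → ℤ}

lemma eq_of_add_eq_of_mul_eq (ha : Injective a) (hab : ∀ i j, a i ≠ b j) {i j : ι}
    (hs : a i + b i = a j + b j) (hp : a i * b i = a j * b j) : i = j :=
  (eq_or_eq_of_add_eq_of_mul_eq hs hp).elim (fun h => ha h) fun h => absurd h (hab i j)

variable [Fintype ι]

variable (a b) in
def sqSumsWithProd (p : ℤ) : Finset ℤ :=
  ({i | a i * b i = p} : Finset ι).image fun i => (a i + b i) ^ 2

lemma sqSumsWithProd_subset (p : ℤ) :
    sqSumsWithProd a b p ⊆ univ.image fun i => (a i + b i) ^ 2 :=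
  image_subset_image (subset_univ _)

lemma card_filter_sq_add_eq_and_mul_eq_le_two (ha : Injective a) (hab : ∀ i j, a i ≠ b j)
    (s p : ℤ) : #{i | (a i + b i) ^ 2 = s ∧ a i * b i = p} ≤ 2 := by
  set F : Finset ι := {i | (a i + b i) ^ 2 = s ∧ a i * b i = p}
  obtain hF | ⟨i₀, hi₀⟩ := F.eq_empty_or_nonempty
  · simp [hF]
  have hF : ∀ i ∈ F, (a i + b i) ^ 2 = s ∧ a i * b i = p := fun i hi => by simpa [F] using hi
  have hmaps : ∀ i ∈ F, a i + b i ∈ ({a i₀ + b i₀, -(a i₀ + b i₀)} : Finset ℤ) := fun i hi => by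
    simpa using sq_eq_sq_iff_eq_or_eq_neg.1 ((hF i hi).1.trans (hF i₀ hi₀).1.symm)
  have hinj : Set.InjOn (fun i => a i + b i) F := fun i hi j hj hs =>
    eq_of_add_eq_of_mul_eq ha hab hs ((hF i hi).2.trans (hF j hj).2.symm)
  exact (card_le_card_of_injOn _ hmaps hinj).trans card_le_two

lemma card_filter_mul_eq_le_two_mul_card_sqSumsWithProd (ha : Injective a)
    (hab : ∀ i j, a i ≠ b j) (p : ℤ) :
    #{i | a i * b i = p} ≤ 2 * #(sqSumsWithProd a b p) :=
  card_le_mul_card_image _ 2 fun s _ =>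
    (card_le_card fun i => by simp +contextual [and_comm]).trans
      (card_filter_sq_add_eq_and_mul_eq_le_two ha hab s p)

lemma card_le_two_mul_sum_card_sqSumsWithProd (ha : Injective a) (hab : ∀ i j, a i ≠ b j) :
    Fintype.card ι ≤ 2 * ∑ p ∈ univ.image (fun i => a i * b i), #(sqSumsWithProd a b p) := by
  rw [← Finset.card_univ, card_eq_sum_card_image (fun i => a i * b i), mul_sum]
  exact sum_le_sum fun p _ => card_filter_mul_eq_le_two_mul_card_sqSumsWithProd ha hab p

lemma sq_add_sub_four_mul_mem_squares (x y : ℤ) : (x + y) ^ 2 + -4 * (x * y) ∈ Squares :=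
  ⟨x - y, by ring⟩

lemma card_filter_subset_sqSumsWithProd_le_ncard {t : ℤ} (hat : ∀ i, |a i| ≤ t)
    (hbt : ∀ i, |b i| ≤ t) (A : Finset ℤ) :
    #{p ∈ univ.image (fun i => a i * b i) | A ⊆ sqSumsWithProd a b p} ≤
      {x ∈ Set.Icc (-(4 * t ^ 2)) (4 * t ^ 2) | ∀ s ∈ A, s + x ∈ Squares}.ncard := by
  rw [← Set.ncard_coe_finset]
  refine Set.ncard_le_ncard_of_injOn (fun p => -4 * p) ?_ (fun p _ q _ h => by simpa using h)
    ((Set.finite_Icc _ _).subset fun _ hx => hx.1)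
  intro p hp
  simp only [coe_filter, mem_image, mem_univ, true_and, Set.mem_ofPred_eq] at hp
  obtain ⟨⟨i, rfl⟩, hA⟩ := hp
  refine ⟨?_, fun s hs => ?_⟩
  · have := abs_le.1 (hat i); have := abs_le.1 (hbt i)
    constructor <;> nlinarith
  · obtain ⟨j, hj, rfl⟩ := mem_image.1 (hA hs)
    rw [← (mem_filter.1 hj).2]
    exact sq_add_sub_four_mul_mem_squares _ _

lemma sq_add_mem_Icc {t x y : ℤ} (hx : |x| ≤ t) (hy : |y| ≤ t) :
    (x + y) ^ 2 ∈ Set.Icc (-(4 * t ^ 2)) (4 * t ^ 2) := by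
  have := abs_le.1 hx; have := abs_le.1 hy
  constructor <;> nlinarith

lemma pow_sum_card_sqSumsWithProd_sub_le {k r : ℕ} (hk : 1 ≤ k)
    (hr : ∀ A ∈ (univ.image fun i => (a i + b i) ^ 2).powersetCard k,
      #{p ∈ univ.image (fun i => a i * b i) | A ⊆ sqSumsWithProd a b p} ≤ r) :
    (∑ p ∈ univ.image (fun i => a i * b i), #(sqSumsWithProd a b p)
        - k * #(univ.image fun i => a i * b i)) ^ k ≤
      r * #(univ.image fun i => a i * b i) ^ (k - 1) *
        #(univ.image fun i => (a i + b i) ^ 2) ^ k := by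
  set P := univ.image fun i => a i * b i
  set U := univ.image fun i => (a i + b i) ^ 2
  calc _ ≤ #P ^ (k - 1) * (k ! * ∑ p ∈ P, (#(sqSumsWithProd a b p)).choose k) :=
        pow_sum_sub_mul_card_le P _ hk
    _ ≤ #P ^ (k - 1) * (k ! * (r * (#U).choose k)) := by
        gcongr
        exact sum_choose_card_le_mul_choose_card (fun p _ => sqSumsWithProd_subset p) hr
    _ = #P ^ (k - 1) * (r * (#U).descFactorial k) := by
        rw [Nat.descFactorial_eq_factorial_mul_choose]; ring
    _ ≤ #P ^ (k - 1) * (r * #U ^ k) := by gcongr; exact Nat.descFactorial_le_pow _ _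
    _ = _ := by ring

lemma card_le_or_pow_card_le {k r M : ℕ} (hk : 1 ≤ k) (ha : Injective a)
    (hab : ∀ i j, a i ≠ b j)
    (hr : ∀ A ∈ (univ.image fun i => (a i + b i) ^ 2).powersetCard k,
      #{p ∈ univ.image (fun i => a i * b i) | A ⊆ sqSumsWithProd a b p} ≤ r)
    (hSM : #(univ.image fun i => a i + b i) ≤ M) (hPM : #(univ.image fun i => a i * b i) ≤ M) :
    Fintype.card ι ≤ 4 * k * M ∨ Fintype.card ι ^ k ≤ 4 ^ k * r * M ^ (2 * k - 1) := by
  set P := univ.image fun i => a i * b i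
  set U := univ.image fun i => (a i + b i) ^ 2
  have hUM : #U ≤ M := by
    have : U = (univ.image fun i => a i + b i).image (· ^ 2) := by rw [image_image]; rfl
    exact this ▸ card_image_le.trans hSM
  by_cases hP : Fintype.card ι ≤ 4 * k * #P
  · exact Or.inl (hP.trans (by gcongr))
  right
  have hn := card_le_two_mul_sum_card_sqSumsWithProd ha hab
  set N := ∑ p ∈ P, #(sqSumsWithProd a b p)
  have h4 : Fintype.card ι ≤ 4 * (N - k * #P) := by rw [mul_assoc] at hP; omega
  calc Fintype.card ι ^ k ≤ (4 * (N - k * #P)) ^ k := Nat.pow_le_pow_left h4 k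
    _ ≤ 4 ^ k * (r * #P ^ (k - 1) * #U ^ k) := by
        rw [mul_pow]; gcongr; exact pow_sum_card_sqSumsWithProd_sub_le hk hr
    _ ≤ 4 ^ k * (r * M ^ (k - 1) * M ^ k) := by gcongr
    _ = 4 ^ k * r * M ^ (2 * k - 1) := by
        rw [mul_assoc (r : ℕ), ← pow_add, show k - 1 + k = 2 * k - 1 by omega]; ring

end Matching

lemma le_of_le_or_pow_le {k : ℕ} (hk : 1 ≤ k) {n r M : ℝ} (hn : 1 ≤ n) (hr : 1 ≤ r)
    (hM : 0 ≤ M) (h : n ≤ 4 * k * M ∨ n ^ k ≤ 4 ^ k * r * M ^ (2 * k - 1)) :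
    (4 * k : ℝ)⁻¹ * n ^ ((k : ℝ) / (2 * k - 1)) * r ^ (-(1 : ℝ) / (2 * k - 1)) ≤ M := by
  have hm : ((2 * k - 1 : ℕ) : ℝ) = 2 * k - 1 := by
    rw [Nat.cast_sub (by omega)]; push_cast; ring
  have hk_real : (1 : ℝ) ≤ k := by exact_mod_cast hk
  have hr_pow : r ^ (-(1 : ℝ) / (2 * k - 1)) ≤ 1 :=
    Real.rpow_le_one_of_one_le_of_nonpos hr
      (div_nonpos_of_nonpos_of_nonneg (by norm_num) (by linarith))
  have hn_pow : n ^ ((k : ℝ) / (2 * k - 1)) ≤ n :=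
    Real.rpow_le_self_of_one_le hn ((div_le_one (by linarith)).2 (by linarith))
  rw [mul_assoc]
  rcases h with h | h
  · calc _ ≤ (4 * k : ℝ)⁻¹ * (n * 1) := by gcongr
      _ ≤ M := by rw [mul_one, inv_mul_le_iff₀ (by positivity)]; exact h
  calc _ ≤ (4 : ℝ)⁻¹ * (n ^ ((k : ℝ) / (2 * k - 1)) * r ^ (-(1 : ℝ) / (2 * k - 1))) := by
        gcongr; linarith
    _ ≤ M := by
      refine le_of_pow_le_pow_left₀ (n := 2 * k - 1) (by omega) hM ?_
      rw [mul_pow, mul_pow, ← hm, rpow_div_natCast_pow (by linarith) _ (by omega),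
        rpow_div_natCast_pow (by linarith) _ (by omega), Real.rpow_natCast, Real.rpow_neg_one]
      calc (4 : ℝ)⁻¹ ^ (2 * k - 1) * (n ^ k * r⁻¹) ≤ (4 : ℝ)⁻¹ ^ k * (n ^ k * r⁻¹) :=
            mul_le_mul_of_nonneg_right
              (pow_le_pow_of_le_one (by norm_num) (by norm_num) (by omega)) (by positivity)
        _ ≤ (4 : ℝ)⁻¹ ^ k * ((4 ^ k * r * M ^ (2 * k - 1)) * r⁻¹) := by gcongr
        _ = M ^ (2 * k - 1) := by rw [inv_pow]; field_simp

/-- For every `k ≥ 2` there is `c > 0` such that for all `n, t, r ≥ 1`: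
if every set of `k` distinct integers inside `{-4t²,…,4t²}` has at most `r` translates
`x ∈ {-4t²,…,4t²}` into the perfect squares, then every `n` pairs of integers bounded by
`t` in absolute value, with pairwise distinct entries, have at least
`c·n^(k/(2k-1))·r^(-1/(2k-1))` distinct sums or that many distinct products. -/
theorem bounded_translates_implies_matching_lower_bound (k : ℕ) (hk : 2 ≤ k) :
    ∃ c : ℝ, 0 < c ∧ ∀ n t r : ℕ, 1 ≤ n → 1 ≤ t → 1 ≤ r →
      (∀ A : Finset ℤ, A.card = k →
        (∀ a ∈ A, a ∈ Set.Icc (-(4 * (t : ℤ) ^ 2)) (4 * (t : ℤ) ^ 2)) →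
        ({x ∈ Set.Icc (-(4 * (t : ℤ) ^ 2)) (4 * (t : ℤ) ^ 2) |
          ∀ a ∈ A, a + x ∈ Squares}).ncard ≤ r) →
      ∀ a b : Fin n → ℤ,
        Function.Injective a → Function.Injective b → (∀ i j, a i ≠ b j) →
        (∀ i, |a i| ≤ (t : ℤ)) → (∀ i, |b i| ≤ (t : ℤ)) →
        c * (n : ℝ) ^ ((k : ℝ) / (2 * k - 1)) * (r : ℝ) ^ (-(1 : ℝ) / (2 * k - 1)) ≤
          max ((Finset.image (fun i => a i + b i) Finset.univ).card : ℝ)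
            ((Finset.image (fun i => a i * b i) Finset.univ).card : ℝ) := by
  refine ⟨(4 * k)⁻¹, by positivity, fun n t r hn _ hr H a b ha _ hab hat hbt => ?_⟩
  have hcount : ∀ A ∈ (univ.image fun i => (a i + b i) ^ 2).powersetCard k,
      #{p ∈ univ.image (fun i => a i * b i) | A ⊆ sqSumsWithProd a b p} ≤ r := by
    intro A hA
    obtain ⟨hAU, hAk⟩ := mem_powersetCard.1 hA
    refine (card_filter_subset_sqSumsWithProd_le_ncard hat hbt A).trans (H A hAk fun s hs => ?_)
    obtain ⟨i, -, rfl⟩ := mem_image.1 (hAU hs)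
    exact sq_add_mem_Icc (hat i) (hbt i)
  have key := card_le_or_pow_card_le (by omega) ha hab hcount (le_max_left _ _) (le_max_right _ _)
  rw [Fintype.card_fin] at key
  rw [← Nat.cast_max]
  exact le_of_le_or_pow_le (by omega) (by exact_mod_cast hn) (by exact_mod_cast hr)
    (Nat.cast_nonneg _) (by exact_mod_cast key)
end

section
/- For every C > 0 and every ε > 0 there exists n₀ such that for all n ≥ n₀ the following holds: for every n pairs of integers (a_i, b_i), i = 1,…,n, whose 2n entries are pairwise distinct and satisfy |a_i| ≤ n^C and |b_i| ≤ n^C for all i, one has max{|{a_i + b_i : i ≤ n}|, |{a_i·b_i : i ≤ n}|} ≥ n^{2/3 - ε}. -/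
/-!
Products alone already give the bound. If `a` is injective, the indices `i` with `a i * b i = p`
inject into the divisors of `p` via `i ↦ a i`, and `|p| ≤ n ^ (2 * C)`; the divisor bound
`d(m) ≤ K_δ * m ^ δ` with `δ = ε / (2 * C)` makes every fibre of `i ↦ a i * b i` of size
`O(n ^ ε)`, so there are `≫ n ^ (1 - ε)` distinct products. The divisor bound itself comes from
`d(m) / m ^ δ = ∏ (k + 1) / (p ^ k) ^ δ` over the prime powers `p ^ k ∥ m`: the factor is at
most `1` once `p ^ δ ≥ 2`, and uniformly bounded for the finitely many smaller primes.
-/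

open Finset Function Filter Real

lemma add_one_le_rpow_pow_of_two_le_rpow {x δ : ℝ} (hx : 0 ≤ x) (h : 2 ≤ x ^ δ) (k : ℕ) :
    (k + 1 : ℝ) ≤ (x ^ k) ^ δ :=
  calc (k + 1 : ℝ) ≤ 2 ^ k := by exact_mod_cast Nat.lt_two_pow_self
    _ ≤ (x ^ δ) ^ k := pow_le_pow_left₀ zero_le_two h k
    _ = (x ^ k) ^ δ := rpow_pow_comm hx δ k

lemma add_one_le_mul_rpow_pow_of_two_le {x δ : ℝ} (hx : 2 ≤ x) (hδ : 0 < δ) (k : ℕ) :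
    (k + 1 : ℝ) ≤ max 1 (δ * log 2)⁻¹ * (x ^ k) ^ δ := by
  set t := δ * log 2
  have ht : 0 < t := mul_pos hδ (log_pos one_lt_two)
  have hBt : 1 ≤ max 1 t⁻¹ * t := by
    rw [← inv_mul_cancel₀ ht.ne']
    exact mul_le_mul_of_nonneg_right (le_max_right _ _) ht.le
  have hexp : exp (k * t) ≤ (x ^ k) ^ δ := by
    rw [← rpow_natCast_mul (by linarith), rpow_def_of_pos (by linarith)]
    refine exp_le_exp.2 ?_
    have := mul_le_mul_of_nonneg_left (log_le_log two_pos hx) (by positivity : (0 : ℝ) ≤ k * δ)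
    linarith
  calc (k + 1 : ℝ) ≤ max 1 t⁻¹ + k * (max 1 t⁻¹ * t) := by
        nlinarith [le_max_left 1 t⁻¹, k.cast_nonneg (α := ℝ)]
    _ = max 1 t⁻¹ * (k * t + 1) := by ring
    _ ≤ max 1 t⁻¹ * (x ^ k) ^ δ :=
        mul_le_mul_of_nonneg_left ((add_one_le_exp _).trans hexp) (by positivity)

namespace Nat

theorem card_divisors_le_prod_mul_rpow {m : ℕ} (hm : m ≠ 0) (f : ℕ → ℝ) (δ : ℝ)
    (hf : ∀ p ∈ m.primeFactors,
      (m.factorization p + 1 : ℝ) ≤ f p * ((p : ℝ) ^ m.factorization p) ^ δ) :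
    (#m.divisors : ℝ) ≤ (∏ p ∈ m.primeFactors, f p) * (m : ℝ) ^ δ := by
  have hm' : (m : ℝ) = ∏ p ∈ m.primeFactors, (p : ℝ) ^ m.factorization p := by
    conv_lhs => rw [← prod_factorization_pow_eq_self hm]
    rw [prod_factorization_eq_prod_primeFactors]
    push_cast
    rfl
  rw [card_divisors hm, hm', ← finsetProd_rpow _ _ fun p _ ↦ by positivity,
    ← prod_mul_distrib]
  push_cast
  exact prod_le_prod (fun p _ ↦ by positivity) hf

theorem card_divisors_le_mul_rpow {δ : ℝ} (hδ : 0 < δ) :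
    ∃ K : ℝ, ∀ m : ℕ, (#m.divisors : ℝ) ≤ K * (m : ℝ) ^ δ := by
  set B : ℝ := max 1 (δ * Real.log 2)⁻¹
  set N := ⌈(2 : ℝ) ^ δ⁻¹⌉₊
  refine ⟨B ^ N, fun m ↦ ?_⟩
  rcases eq_or_ne m 0 with rfl | hm
  · simp [zero_rpow hδ.ne']
  have hf : ∀ p ∈ m.primeFactors, (m.factorization p + 1 : ℝ) ≤
      (if p < N then B else 1) * ((p : ℝ) ^ m.factorization p) ^ δ := by
    intro p hp
    have hp2 : (2 : ℝ) ≤ p := by exact_mod_cast (prime_of_mem_primeFactors hp).two_le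
    split_ifs with hpN
    · exact add_one_le_mul_rpow_pow_of_two_le hp2 hδ _
    · rw [one_mul]
      refine add_one_le_rpow_pow_of_two_le_rpow (by linarith) ?_ _
      calc (2 : ℝ) = ((2 : ℝ) ^ δ⁻¹) ^ δ := by
            rw [← rpow_mul zero_le_two, inv_mul_cancel₀ hδ.ne', rpow_one]
        _ ≤ (p : ℝ) ^ δ := by
          gcongr
          exact (le_ceil _).trans (by exact_mod_cast not_lt.1 hpN)
  refine (card_divisors_le_prod_mul_rpow hm _ δ hf).trans ?_
  gcongr
  rw [prod_ite, prod_const, prod_const_one, mul_one]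
  refine pow_le_pow_right₀ (le_max_left _ _) ?_
  calc #{p ∈ m.primeFactors | p < N} ≤ #(range N) :=
        card_le_card fun p hp ↦ mem_range.2 (mem_filter.1 hp).2
    _ = N := card_range N

end Nat

namespace Int

theorem card_divisors (z : ℤ) : #z.divisors = 2 * #z.natAbs.divisors := by
  rw [divisors, card_disjUnion, card_map, card_map, two_mul]

theorem card_divisors_mul_le {a b : ℤ} {M K δ : ℝ} (hδ : 0 ≤ δ)
    (hK : ∀ m : ℕ, (#m.divisors : ℝ) ≤ K * (m : ℝ) ^ δ) (ha : |(a : ℝ)| ≤ M)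
    (hb : |(b : ℝ)| ≤ M) :
    (#(a * b).divisors : ℝ) ≤ 2 * K * M ^ (2 * δ) := by
  have hK0 : 0 ≤ K := by simpa using (Nat.cast_nonneg _).trans (hK 1)
  have hab : ((a * b).natAbs : ℝ) ≤ M ^ 2 := by
    rw [Nat.cast_natAbs, Int.cast_abs, Int.cast_mul, abs_mul, sq]
    exact mul_le_mul ha hb (abs_nonneg _) ((abs_nonneg _).trans ha)
  rw [card_divisors, Nat.cast_mul, Nat.cast_two, mul_assoc]
  gcongr
  calc _ ≤ K * ((a * b).natAbs : ℝ) ^ δ := hK _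
    _ ≤ K * (M ^ 2) ^ δ := by gcongr
    _ = K * M ^ (2 * δ) := by
      rw [← Real.rpow_natCast, ← Real.rpow_mul ((abs_nonneg _).trans ha)]; norm_num

end Int

section ProductFibres

variable {ι : Type*} [Fintype ι] {a b : ι → ℤ}

theorem card_filter_mul_eq_le_card_divisors (ha : Injective a) {p : ℤ} (hp : p ≠ 0) :
    #{i | a i * b i = p} ≤ #p.divisors :=
  card_le_card_of_injOn a
    (fun i hi ↦ Int.mem_divisors.2 ⟨⟨b i, (mem_filter.1 hi).2.symm⟩, hp⟩) ha.injOn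

theorem card_filter_mul_eq_zero_le_two (ha : Injective a) (hb : Injective b) :
    #{i | a i * b i = 0} ≤ 2 := by
  classical
  have hle (c : ι → ℤ) (hc : Injective c) : #{i | c i = 0} ≤ 1 :=
    card_le_one.2 fun i hi j hj ↦ hc ((mem_filter.1 hi).2.trans (mem_filter.1 hj).2.symm)
  calc #{i | a i * b i = 0} = #{i | a i = 0 ∨ b i = 0} := by simp only [mul_eq_zero]
    _ ≤ #{i | a i = 0} + #{i | b i = 0} := by
      rw [filter_or]; exact card_union_le _ _
    _ ≤ 2 := add_le_add (hle a ha) (hle b hb)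

theorem card_le_mul_card_image_mul (ha : Injective a) (hb : Injective b) {T : ℝ} (hT2 : 2 ≤ T)
    (hT : ∀ i, (#(a i * b i).divisors : ℝ) ≤ T) :
    (Fintype.card ι : ℝ) ≤ T * #(univ.image fun i ↦ a i * b i) := by
  have hfibre : ∀ p ∈ univ.image fun i ↦ a i * b i, #{i | a i * b i = p} ≤ ⌊T⌋₊ := by
    intro p hp
    rcases eq_or_ne p 0 with rfl | hp0
    · exact (card_filter_mul_eq_zero_le_two ha hb).trans (Nat.le_floor (by exact_mod_cast hT2))
    · obtain ⟨i, -, rfl⟩ := mem_image.1 hp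
      exact (card_filter_mul_eq_le_card_divisors ha hp0).trans (Nat.le_floor (hT i))
  calc (Fintype.card ι : ℝ) ≤ (⌊T⌋₊ * #(univ.image fun i ↦ a i * b i) : ℕ) := by
        exact_mod_cast card_le_mul_card_image _ _ hfibre
    _ ≤ T * #(univ.image fun i ↦ a i * b i) := by
        push_cast; gcongr; exact Nat.floor_le (by linarith)

end ProductFibres

/-- For every `C > 0` and `ε > 0`, for all large `n`: every `n` pairs
of integers, with pairwise distinct entries all bounded by `n^C` in absolute value, have
at least `n^(2/3-ε)` distinct sums or that many distinct products. -/
theorem poly_bounded_matching_lower_bound (C ε : ℝ) (hC : 0 < C) (hε : 0 < ε) :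
    ∃ n₀ : ℕ, ∀ n : ℕ, n₀ ≤ n → ∀ a b : Fin n → ℤ,
      Function.Injective a → Function.Injective b → (∀ i j, a i ≠ b j) →
      (∀ i, ((|a i| : ℤ) : ℝ) ≤ (n : ℝ) ^ C) →
      (∀ i, ((|b i| : ℤ) : ℝ) ≤ (n : ℝ) ^ C) →
      (n : ℝ) ^ ((2 : ℝ) / 3 - ε) ≤
        max ((Finset.image (fun i => a i + b i) Finset.univ).card : ℝ)
          ((Finset.image (fun i => a i * b i) Finset.univ).card : ℝ) := by
  obtain ⟨K, hK⟩ := Nat.card_divisors_le_mul_rpow (δ := ε / (2 * C)) (by positivity)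
  have hK1 : 1 ≤ K := by simpa using hK 1
  obtain ⟨n₀, hn₀⟩ := eventually_atTop.1 <|
    ((tendsto_rpow_atTop (by norm_num : (0 : ℝ) < 1 / 3)).comp
      tendsto_natCast_atTop_atTop).eventually_ge_atTop (2 * K)
  refine ⟨max n₀ 1, fun n hn a b ha hb _ haM hbM ↦ le_max_of_le_right ?_⟩
  have hKn : 2 * K ≤ (n : ℝ) ^ (1 / 3 : ℝ) := hn₀ n ((le_max_left _ _).trans hn)
  have hn1 : (1 : ℝ) ≤ n := by exact_mod_cast (le_max_right _ _).trans hn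
  have hn : (0 : ℝ) < n := by linarith
  set T := 2 * K * (n : ℝ) ^ ε
  have hT2 : 2 ≤ T := by nlinarith [one_le_rpow hn1 hε.le]
  have hdiv (i : Fin n) : (#(a i * b i).divisors : ℝ) ≤ T := by
    have := Int.card_divisors_mul_le (by positivity) hK (by simpa using haM i)
      (by simpa using hbM i)
    rwa [← rpow_mul hn.le, show C * (2 * (ε / (2 * C))) = ε by field_simp] at this
  have hcount := card_le_mul_card_image_mul ha hb hT2 hdiv
  rw [Fintype.card_fin] at hcount
  refine le_of_mul_le_mul_right (?_ : _ * T ≤ _ * T) (by positivity)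
  calc (n : ℝ) ^ ((2 : ℝ) / 3 - ε) * T
        = 2 * K * ((n : ℝ) ^ ((2 : ℝ) / 3 - ε) * (n : ℝ) ^ ε) := by ring
    _ ≤ (n : ℝ) ^ (1 / 3 : ℝ) * ((n : ℝ) ^ ((2 : ℝ) / 3 - ε) * (n : ℝ) ^ ε) := by
        gcongr
    _ = n := by rw [← rpow_add hn, ← rpow_add hn]; norm_num
    _ ≤ _ := by rw [mul_comm]; exact hcount
end

section
/- There exist three distinct integers a₁, a₂, a₃ such that the set {x ∈ ℚ : a₁ + x, a₂ + x and a₃ + x are each the square of a rational number} is infinite. In particular, for every K ≥ 1 there exist three distinct integers a₁, a₂, a₃ and K distinct integers x₁,…,x_K such that a_i + x_j ∈ Squares for all i ∈ {1,2,3} and all j ≤ K. -/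
def IsSquareProgression {R : Type*} [Ring R] (c x : R) : Prop :=
  IsSquare (x - c) ∧ IsSquare x ∧ IsSquare (x + c)

noncomputable def congruentDouble {K : Type*} [Field K] (n x : K) : K :=
  (x ^ 2 + n ^ 2) ^ 2 / (4 * x * (x ^ 2 - n ^ 2))

section Field

variable {K : Type*} [Field K] [NeZero (2 : K)] {n x : K}

theorem congruentDouble_sub (hx : x ≠ 0) (hxn : x ^ 2 ≠ n ^ 2) :
    congruentDouble n x - n = (x ^ 2 - 2 * n * x - n ^ 2) ^ 2 / (4 * x * (x ^ 2 - n ^ 2)) := by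
  have h4 : (4 : K) ≠ 0 := by simpa [show (4 : K) = 2 * 2 by norm_num] using two_ne_zero
  have : x ^ 2 - n ^ 2 ≠ 0 := sub_ne_zero.mpr hxn
  unfold congruentDouble
  field_simp
  ring

theorem congruentDouble_add (hx : x ≠ 0) (hxn : x ^ 2 ≠ n ^ 2) :
    congruentDouble n x + n = (x ^ 2 + 2 * n * x - n ^ 2) ^ 2 / (4 * x * (x ^ 2 - n ^ 2)) := by
  have h4 : (4 : K) ≠ 0 := by simpa [show (4 : K) = 2 * 2 by norm_num] using two_ne_zero
  have : x ^ 2 - n ^ 2 ≠ 0 := sub_ne_zero.mpr hxn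
  unfold congruentDouble
  field_simp
  ring

theorem IsSquareProgression.congruentDouble (h : IsSquareProgression n x) (hx : x ≠ 0)
    (hxn : x ^ 2 ≠ n ^ 2) : IsSquareProgression n (congruentDouble n x) := by
  obtain ⟨hsub, hmid, hadd⟩ := h
  have hden : IsSquare (4 * x * (x ^ 2 - n ^ 2)) := by
    rw [show 4 * x * (x ^ 2 - n ^ 2) = 2 ^ 2 * x * ((x - n) * (x + n)) by ring]
    exact ((IsSquare.sq 2).mul hmid).mul (hsub.mul hadd)
  refine ⟨?_, (IsSquare.sq _).div hden, ?_⟩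
  · rw [congruentDouble_sub hx hxn]
    exact (IsSquare.sq _).div hden
  · rw [congruentDouble_add hx hxn]
    exact (IsSquare.sq _).div hden

end Field

theorem padicValRat_add_of_lt {p : ℕ} [Fact p.Prime] {q r : ℚ} (hq : q ≠ 0) (hr : r ≠ 0)
    (hval : padicValRat p q < padicValRat p r) : padicValRat p (q + r) = padicValRat p q := by
  refine padicValRat.add_eq_of_lt (fun h => hval.ne ?_) hq hr hval
  rw [eq_neg_of_add_eq_zero_right h, padicValRat.neg]

section Valuation

variable {n x : ℚ}

theorem sq_ne_sq_of_padicValRat_lt (hv : padicValRat 2 x < padicValRat 2 n) :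
    x ^ 2 ≠ n ^ 2 := by
  intro h
  have := congrArg (padicValRat 2) h
  simp only [padicValRat.pow] at this
  push_cast at this
  linarith

theorem congruentDouble_ne_zero (hn : n ≠ 0) (hx : x ≠ 0) (hxn : x ^ 2 ≠ n ^ 2) :
    congruentDouble n x ≠ 0 :=
  div_ne_zero (by positivity) (mul_ne_zero (by positivity) (sub_ne_zero.mpr hxn))

theorem padicValRat_congruentDouble (hn : n ≠ 0) (hx : x ≠ 0)
    (hv : padicValRat 2 x < padicValRat 2 n) :
    padicValRat 2 (congruentDouble n x) = padicValRat 2 x - 2 := by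
  have hsq : padicValRat 2 (x ^ 2) < padicValRat 2 (n ^ 2) := by
    simp only [padicValRat.pow]; push_cast; linarith
  have hxn : x ^ 2 - n ^ 2 ≠ 0 := sub_ne_zero.mpr (sq_ne_sq_of_padicValRat_lt hv)
  have hplus : padicValRat 2 (x ^ 2 + n ^ 2) = 2 * padicValRat 2 x := by
    rw [padicValRat_add_of_lt (by positivity) (by positivity) hsq, padicValRat.pow]
    push_cast; ring
  have hminus : padicValRat 2 (x ^ 2 - n ^ 2) = 2 * padicValRat 2 x := by
    rw [sub_eq_add_neg, padicValRat_add_of_lt (by positivity) (by simpa using hn)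
      (by rwa [padicValRat.neg]), padicValRat.pow]
    push_cast; ring
  have hfour : padicValRat 2 4 = 2 := by
    rw [show (4 : ℚ) = (2 : ℕ) ^ 2 by norm_num, padicValRat.pow, padicValRat.self one_lt_two]
    norm_num
  unfold congruentDouble
  rw [padicValRat.div (by positivity) (by positivity), padicValRat.pow, hplus,
    padicValRat.mul (by positivity) hxn, padicValRat.mul (by norm_num) hx, hfour, hminus]
  push_cast; ring

variable {x₀ : ℚ}

theorem padicValRat_congruentDouble_iterate (hn : n ≠ 0) (hx₀ : x₀ ≠ 0)
    (hv : padicValRat 2 x₀ < padicValRat 2 n) (k : ℕ) :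
    (congruentDouble n)^[k] x₀ ≠ 0 ∧
      padicValRat 2 ((congruentDouble n)^[k] x₀) = padicValRat 2 x₀ - 2 * k := by
  induction k with
  | zero => simpa using hx₀
  | succ k ih =>
    obtain ⟨hxk, hvk⟩ := ih
    have hlt : padicValRat 2 ((congruentDouble n)^[k] x₀) < padicValRat 2 n := by
      rw [hvk]; omega
    rw [Function.iterate_succ_apply']
    refine ⟨congruentDouble_ne_zero hn hxk (sq_ne_sq_of_padicValRat_lt hlt), ?_⟩
    rw [padicValRat_congruentDouble hn hxk hlt, hvk]
    push_cast; ring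

theorem injective_congruentDouble_iterate (hn : n ≠ 0) (hx₀ : x₀ ≠ 0)
    (hv : padicValRat 2 x₀ < padicValRat 2 n) :
    Function.Injective fun k => (congruentDouble n)^[k] x₀ := by
  intro j k hjk
  have := congrArg (padicValRat 2) hjk
  simp only [(padicValRat_congruentDouble_iterate hn hx₀ hv _).2] at this
  omega

theorem isSquareProgression_congruentDouble_iterate (h : IsSquareProgression n x₀)
    (hn : n ≠ 0) (hx₀ : x₀ ≠ 0) (hv : padicValRat 2 x₀ < padicValRat 2 n) (k : ℕ) :
    IsSquareProgression n ((congruentDouble n)^[k] x₀) := by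
  induction k with
  | zero => exact h
  | succ k ih =>
    obtain ⟨hxk, hvk⟩ := padicValRat_congruentDouble_iterate hn hx₀ hv k
    have hlt : padicValRat 2 ((congruentDouble n)^[k] x₀) < padicValRat 2 n := by
      rw [hvk]; omega
    rw [Function.iterate_succ_apply']
    exact ih.congruentDouble hxk (sq_ne_sq_of_padicValRat_lt hlt)

end Valuation

theorem exists_int_isSquareProgression_of_rat {ι : Type*} [Finite ι] (c : ℤ) (x : ι → ℚ)
    (hx : ∀ j, IsSquareProgression (c : ℚ) (x j)) :
    ∃ N : ℤ, N ≠ 0 ∧ ∃ y : ι → ℤ, ∀ j,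
      (y j : ℚ) = N ^ 2 * x j ∧ IsSquareProgression (N ^ 2 * c) (y j) := by
  obtain ⟨⟨N, hN⟩, hint⟩ :=
    IsLocalization.exist_integer_multiples_of_finite (nonZeroDivisors ℤ) x
  choose m hm using hint
  refine ⟨N, nonZeroDivisors.ne_zero hN, fun j => N * m j, fun j => ?_⟩
  have hy : ((N * m j : ℤ) : ℚ) = N ^ 2 * x j := by
    simp only [algebraMap_int_eq, eq_intCast, zsmul_eq_mul] at hm
    push_cast; rw [hm]; ring
  have hsq {z : ℤ} {q : ℚ} (hz : (z : ℚ) = N ^ 2 * q) (hq : IsSquare q) : IsSquare z :=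
    Rat.isSquare_intCast_iff.mp (hz ▸ (IsSquare.sq _).mul hq)
  obtain ⟨hsub, hmid, hadd⟩ := hx j
  exact ⟨hy, hsq (by rw [Int.cast_sub, hy]; push_cast; ring) hsub, hsq hy hmid,
    hsq (by rw [Int.cast_add, hy]; push_cast; ring) hadd⟩

theorem mem_Squares_iff_isSquare {m : ℤ} : m ∈ Squares ↔ IsSquare m :=
  (isSquare_iff_exists_sq m).symm

/-- There exist three distinct integers `a₁, a₂, a₃` such that the set
of rationals `x` for which `a₁ + x`, `a₂ + x`, `a₃ + x` are all squares of rationals is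
infinite.  In particular, for every `K ≥ 1` there exist three distinct integers and `K`
distinct integers `x₁,…,x_K` all of whose translates land in the perfect squares. -/
theorem three_integers_with_infinitely_many_square_translates :
    (∃ a₁ a₂ a₃ : ℤ, a₁ ≠ a₂ ∧ a₁ ≠ a₃ ∧ a₂ ≠ a₃ ∧
      {x : ℚ | (∃ q : ℚ, (a₁ : ℚ) + x = q ^ 2) ∧ (∃ q : ℚ, (a₂ : ℚ) + x = q ^ 2) ∧
        (∃ q : ℚ, (a₃ : ℚ) + x = q ^ 2)}.Infinite) ∧
    (∀ K : ℕ, 1 ≤ K → ∃ (a₁ a₂ a₃ : ℤ) (x : Fin K → ℤ),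
      a₁ ≠ a₂ ∧ a₁ ≠ a₃ ∧ a₂ ≠ a₃ ∧ Function.Injective x ∧
      ∀ j, a₁ + x j ∈ Squares ∧ a₂ + x j ∈ Squares ∧ a₃ + x j ∈ Squares) := by
  have hv : padicValRat 2 25 < padicValRat 2 24 := by
    rw [show (25 : ℚ) = (25 : ℕ) by norm_num, show (24 : ℚ) = (24 : ℕ) by norm_num,
      padicValRat.of_nat, padicValRat.of_nat, padicValNat.eq_zero_of_not_dvd (by norm_num)]
    exact_mod_cast one_le_padicValNat_of_dvd (by norm_num) (by norm_num)
  have hbase : IsSquareProgression (24 : ℚ) 25 :=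
    ⟨⟨1, by norm_num⟩, ⟨5, by norm_num⟩, ⟨7, by norm_num⟩⟩
  set x : ℕ → ℚ := fun k => (congruentDouble 24)^[k] 25
  have hinj : Function.Injective x :=
    injective_congruentDouble_iterate (by norm_num) (by norm_num) hv
  have hx k : IsSquareProgression (24 : ℚ) (x k) :=
    isSquareProgression_congruentDouble_iterate hbase (by norm_num) (by norm_num) hv k
  refine ⟨⟨-24, 0, 24, by norm_num, by norm_num, by norm_num, ?_⟩, fun K _ => ?_⟩
  · refine Set.infinite_of_injective_forall_mem hinj fun k => ?_
    obtain ⟨hsub, hmid, hadd⟩ := hx k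
    simp only [Set.mem_ofPred_eq, ← isSquare_iff_exists_sq]
    push_cast
    exact ⟨by rwa [neg_add_eq_sub], by rwa [zero_add], by rwa [add_comm]⟩
  obtain ⟨N, hN, y, hy⟩ := exists_int_isSquareProgression_of_rat 24 (fun j : Fin K => x j)
    (fun j => by exact_mod_cast hx j)
  have hN24 : N ^ 2 * 24 ≠ 0 := by positivity
  refine ⟨-(N ^ 2 * 24), 0, N ^ 2 * 24, y, by omega, by omega, by omega, fun j k hjk => ?_,
    fun j => ?_⟩
  · have := (hy j).1.symm.trans ((congrArg (Int.cast : ℤ → ℚ) hjk).trans (hy k).1)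
    exact Fin.ext (hinj (mul_left_cancel₀ (by positivity) this))
  · obtain ⟨-, hsub, hmid, hadd⟩ := hy j
    simp only [mem_Squares_iff_isSquare]
    exact ⟨by rwa [neg_add_eq_sub], by rwa [zero_add], by rwa [add_comm]⟩
end

section
/- Let F be a field with characteristic different from 2, let G = (V, E) be a finite simple graph, let A : V → F be injective, and let k ≥ 3 be an odd integer. Then the number of injective graph homomorphisms from the cycle graph on k vertices into G is at most |A⊕A|^k. (The number of such injective homomorphisms equals 2k times the number of k-cycles in G.) -/
/-!
Send a homomorphism `f` from the `k`-cycle to the sequence of its edge sums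
`A (f i) + A (f (i + 1))`, a word of length `k` over `A⊕A`. On an odd cycle the edge sums
determine the vertex values: the differences `d i` of two labellings with the same edge sums
satisfy `d (i + 1) = -d i`, so going once around gives `d 0 = -d 0`, and `2 ≠ 0` forces `d = 0`.
Hence the map is injective, even on all homomorphisms.
-/

open Fin.NatCast in
theorem Fin.eq_zero_of_forall_add_add_one_eq_zero {R : Type*} [CommRing R] [NoZeroDivisors R]
    (h2 : (2 : R) ≠ 0) {k : ℕ} [NeZero k] (hk : Odd k) {d : Fin k → R}
    (hd : ∀ i, d i + d (i + 1) = 0) : d = 0 := by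
  have hpow (n : ℕ) : d (n : Fin k) = (-1) ^ n * d 0 := by
    induction n with
    | zero => simp
    | succ n ih =>
      rw [Nat.cast_succ, eq_neg_of_add_eq_zero_right (hd n), ih]
      ring
  have hd0 : d 0 = 0 := by
    have hk' := hpow k
    rw [Fin.natCast_self, hk.neg_one_pow] at hk'
    exact (mul_eq_zero.mp (by linear_combination hk' : (2 : R) * d 0 = 0)).resolve_left h2
  funext i
  rw [← Fin.cast_val_eq_self i, hpow, hd0, mul_zero, Pi.zero_apply]

theorem Fin.eq_of_forall_add_add_one_eq {R : Type*} [CommRing R] [NoZeroDivisors R]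
    (h2 : (2 : R) ≠ 0) {k : ℕ} [NeZero k] (hk : Odd k) {x y : Fin k → R}
    (h : ∀ i, x i + x (i + 1) = y i + y (i + 1)) : x = y :=
  sub_eq_zero.mp <| Fin.eq_zero_of_forall_add_add_one_eq_zero h2 hk fun i => by
    simp only [Pi.sub_apply]
    linear_combination h i

namespace SimpleGraph

theorem cycleGraph_adj_add_one {n : ℕ} (i : Fin (n + 2)) :
    (cycleGraph (n + 2)).Adj i (i + 1) := by
  simp [cycleGraph_adj]

variable {V R : Type*} (G : SimpleGraph V)

/-- The sum-set `A⊕A` of `A` along the edges of `G`. -/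
def sumset [Add R] (A : V → R) : Set R := {x | ∃ u v, G.Adj u v ∧ x = A u + A v}

theorem finite_sumset [Finite V] [Add R] (A : V → R) : (G.sumset A).Finite :=
  (Set.finite_range fun p : V × V => A p.1 + A p.2).subset <| by
    rintro x ⟨u, v, -, rfl⟩
    exact ⟨(u, v), rfl⟩

def edgeSums [Add R] (A : V → R) {n : ℕ} (f : cycleGraph (n + 2) →g G) :
    Fin (n + 2) → G.sumset A :=
  fun i => ⟨A (f i) + A (f (i + 1)), f i, f (i + 1), f.map_adj (cycleGraph_adj_add_one i), rfl⟩

theorem edgeSums_injective [CommRing R] [NoZeroDivisors R] (h2 : (2 : R) ≠ 0) {A : V → R}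
    (hA : Function.Injective A) {n : ℕ} (hodd : Odd (n + 2)) :
    Function.Injective (G.edgeSums A (n := n)) := by
  intro f g hfg
  have hAfg : A ∘ f = A ∘ g := Fin.eq_of_forall_add_add_one_eq h2 hodd fun i =>
    congrArg Subtype.val (congrFun hfg i)
  exact RelHom.ext (congrFun (hA.comp_left hAfg))

theorem card_hom_cycleGraph_le_sumset_pow [Finite V] [CommRing R] [NoZeroDivisors R]
    (h2 : (2 : R) ≠ 0) {A : V → R} (hA : Function.Injective A) {n : ℕ} (hodd : Odd (n + 2)) :
    Nat.card (cycleGraph (n + 2) →g G) ≤ (G.sumset A).ncard ^ (n + 2) := by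
  have := (G.finite_sumset A).to_subtype
  calc Nat.card (cycleGraph (n + 2) →g G)
      ≤ Nat.card (Fin (n + 2) → G.sumset A) :=
        Nat.card_le_card_of_injective _ (G.edgeSums_injective h2 hA hodd)
    _ = (G.sumset A).ncard ^ (n + 2) := by
        rw [Nat.card_fun, Nat.card_fin, Nat.card_coe_set_eq]

end SimpleGraph

/-- Let `F` be a field of characteristic `≠ 2`, `G` a finite simple
graph, `A : V → F` injective, and `k ≥ 3` odd.  Then the number of injective graph
homomorphisms from the cycle graph on `k` vertices into `G` is at most `|A⊕A|^k`. -/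
theorem injective_cycle_homs_le_sumset_pow {F : Type*} [Field F] (hF : ringChar F ≠ 2)
    {V : Type*} [Fintype V] (G : SimpleGraph V) (A : V → F)
    (hA : Function.Injective A) (k : ℕ) (hk : 3 ≤ k) (hodd : Odd k) :
    {f : SimpleGraph.cycleGraph k →g G | Function.Injective f}.ncard ≤
      {x : F | ∃ u v : V, G.Adj u v ∧ x = A u + A v}.ncard ^ k := by
  obtain ⟨n, rfl⟩ : ∃ n, k = n + 2 := ⟨k - 2, by omega⟩
  exact (Set.ncard_le_card _).trans
    (G.card_hom_cycleGraph_le_sumset_pow (Ring.two_ne_zero hF) hA hodd)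
end

section
/- Let G = (V, E) be a connected finite simple graph on n ≥ 2 vertices with diameter r (the maximal graph distance between two vertices), and let A : V → ℤ be injective with s = |A⊕A|. Then 2^s · binomial(r + s, s) ≥ n/2. -/
/-!
Fix a root `u₀`. Along a walk `u₀ = v₀, v₁, …, vₖ = v` one has
`A vᵢ₊₁ = (A vᵢ + A vᵢ₊₁) - A vᵢ`, so `A v = ±A u₀ + ∑ₓ cₓ x` with `x` ranging over the sumset
and `∑ₓ |cₓ| ≤ k ≤ r`. Since `A` is injective, `v` is determined by the sign and the integer
vector `c`, and there are at most `2 ^ s * C(r + s, s)` such vectors: a sign pattern together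
with a vector of absolute values, i.e. a multiset of size `r` on `s + 1` letters, the extra
letter absorbing the slack `r - ∑ₓ |cₓ|`.
-/

open Finset Function

section Counting

variable (ι : Type*) [Fintype ι] (r : ℕ)

def sumLeEquivSumOptionEq :
    {m : ι → ℕ // ∑ i, m i ≤ r} ≃ {P : Option ι → ℕ // ∑ i, P i = r} where
  toFun m := ⟨fun i => i.elim (r - ∑ i, m.1 i) m.1, by
    simp only [Fintype.sum_option, Option.elim_none, Option.elim_some]; have := m.2; omega⟩
  invFun P := ⟨fun i => P.1 (some i), (Nat.le_add_left _ _).trans_eq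
    ((Fintype.sum_option _).symm.trans P.2)⟩
  left_inv m := rfl
  right_inv P := by
    obtain ⟨P, hP⟩ := P
    ext (_ | i)
    · rw [Fintype.sum_option] at hP; simp only [Option.elim_none]; omega
    · rfl

noncomputable def symOptionEquivSumLe [DecidableEq ι] :
    Sym (Option ι) r ≃ {m : ι → ℕ // ∑ i, m i ≤ r} :=
  (Sym.equivNatSumOfFintype _ r).trans (sumLeEquivSumOptionEq ι r).symm

instance : Finite {m : ι → ℕ // ∑ i, m i ≤ r} := by
  classical exact .of_equiv _ (symOptionEquivSumLe ι r)

theorem Nat.card_sum_le_eq_choose :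
    Nat.card {m : ι → ℕ // ∑ i, m i ≤ r} = (r + Fintype.card ι).choose (Fintype.card ι) := by
  classical
  rw [← Nat.card_congr (symOptionEquivSumLe ι r), Nat.card_eq_fintype_card,
    Sym.card_sym_eq_choose, Fintype.card_option,
    show Fintype.card ι + 1 + r - 1 = r + Fintype.card ι by omega, Nat.choose_symm_add]

variable {ι r}

def signAndNatAbs (c : {c : ι → ℤ // ∑ i, (c i).natAbs ≤ r}) :
    (ι → Bool) × {m : ι → ℕ // ∑ i, m i ≤ r} :=
  (fun i => decide (c.1 i < 0), ⟨fun i => (c.1 i).natAbs, c.2⟩)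

theorem signAndNatAbs_injective : Injective (signAndNatAbs (ι := ι) (r := r)) := by
  rintro ⟨c, _⟩ ⟨c', _⟩ h
  simp only [signAndNatAbs, Prod.mk.injEq, Subtype.mk.injEq, funext_iff, decide_eq_decide] at h
  refine Subtype.ext (funext fun i => ?_)
  have := h.1 i; have := h.2 i
  dsimp only; omega

instance : Finite {c : ι → ℤ // ∑ i, (c i).natAbs ≤ r} :=
  .of_injective _ signAndNatAbs_injective

variable (ι r)

theorem Int.card_natAbs_sum_le_le :
    Nat.card {c : ι → ℤ // ∑ i, (c i).natAbs ≤ r} ≤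
      2 ^ Fintype.card ι * (r + Fintype.card ι).choose (Fintype.card ι) :=
  (Nat.card_le_card_of_injective _ signAndNatAbs_injective).trans_eq <| by
    rw [Nat.card_prod, Nat.card_sum_le_eq_choose, Nat.card_fun,
      Nat.card_eq_fintype_card (α := Bool), Fintype.card_bool, Nat.card_eq_fintype_card]

end Counting

namespace SimpleGraph

variable {V M : Type*} (G : SimpleGraph V) [AddCommGroup M] (A : V → M)

def edgeSumset : Set M := {x | ∃ u v : V, G.Adj u v ∧ x = A u + A v}

variable {G A}

theorem Walk.exists_signed_sum_eq {S : Finset M} (hS : G.edgeSumset A ⊆ S) {u v : V}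
    (w : G.Walk u v) : ∃ (ε : ℤˣ) (c : S → ℤ),
      ∑ x, (c x).natAbs ≤ w.length ∧ A v = ε • A u + ∑ x, c x • (x : M) := by
  classical
  induction w with
  | nil => exact ⟨1, 0, by simp, by simp⟩
  | @cons u a v hadj p ih =>
    obtain ⟨ε, c, hlen, hA⟩ := ih
    let y : S := ⟨A u + A a, hS ⟨u, a, hadj, rfl⟩⟩
    let δ : S → ℤ := Pi.single y (ε : ℤ)
    have hδ : ∀ x ≠ y, δ x = 0 := fun x hx => Pi.single_eq_of_ne hx _
    have hδabs : ∑ x, (δ x).natAbs = 1 := by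
      rw [Fintype.sum_eq_single y fun x hx => by simp [hδ x hx]]
      simp [δ]
    have hδsum : ∑ x, δ x • (x : M) = ε • (y : M) := by
      rw [Fintype.sum_eq_single y fun x hx => by simp [hδ x hx]]
      simp [δ, Units.smul_def]
    refine ⟨-ε, c + δ, ?_, ?_⟩
    · calc ∑ x, ((c + δ) x).natAbs
          ≤ ∑ x, ((c x).natAbs + (δ x).natAbs) := sum_le_sum fun x _ => Int.natAbs_add_le _ _
        _ = ∑ x, (c x).natAbs + 1 := by rw [sum_add_distrib, hδabs]
        _ ≤ (Walk.cons hadj p).length := by simpa using hlen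
    · have hAa : A a = (y : M) - A u := by simp [y]
      rw [Pi.add_def]
      simp only [add_smul, sum_add_distrib, hδsum, hA, hAa, Units.neg_smul, smul_sub]
      abel

theorem Connected.card_le_of_injective [Finite V] (hconn : G.Connected) (hA : Injective A)
    {S : Finset M} (hS : G.edgeSumset A ⊆ S) :
    Nat.card V ≤ 2 * (2 ^ #S * (G.diam + #S).choose #S) := by
  have := hconn.nonempty
  obtain ⟨u₀⟩ := hconn.nonempty
  have hdiam : G.ediam ≠ ⊤ := G.connected_iff_ediam_ne_top.mp hconn
  have hrep (v : V) : ∃ (ε : ℤˣ) (c : S → ℤ),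
      ∑ x, (c x).natAbs ≤ G.diam ∧ A v = ε • A u₀ + ∑ x, c x • (x : M) := by
    obtain ⟨w, hw⟩ := hconn.exists_walk_length_eq_dist u₀ v
    obtain ⟨ε, c, hc, hv⟩ := w.exists_signed_sum_eq hS
    exact ⟨ε, c, hc.trans (hw ▸ G.dist_le_diam hdiam), hv⟩
  choose ε c hc hv using hrep
  let code (v : V) : ℤˣ × {c : S → ℤ // ∑ x, (c x).natAbs ≤ G.diam} := (ε v, ⟨c v, hc v⟩)
  have hcode : Injective code := fun v v' h => hA <| by
    simp only [code, Prod.mk.injEq, Subtype.mk.injEq] at h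
    rw [hv v, hv v', h.1, h.2]
  calc Nat.card V ≤ Nat.card (ℤˣ × {c : S → ℤ // ∑ x, (c x).natAbs ≤ G.diam}) :=
        Nat.card_le_card_of_injective _ hcode
    _ ≤ 2 * (2 ^ #S * (G.diam + #S).choose #S) := by
      rw [Nat.card_prod, Nat.card_eq_fintype_card (α := ℤˣ), Fintype.card_units_int]
      simpa using Nat.mul_le_mul_left 2 (Int.card_natAbs_sum_le_le S G.diam)

end SimpleGraph

theorem sumset_diameter_bound_general {V : Type*} [Fintype V] (G : SimpleGraph V)
    (hconn : G.Connected) (A : V → ℤ)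
    (hA : Function.Injective A) (s r : ℕ)
    (hs : s = {x : ℤ | ∃ u v : V, G.Adj u v ∧ x = A u + A v}.ncard)
    (hr : r = G.diam) :
    (Fintype.card V : ℝ) / 2 ≤ 2 ^ s * (r + s).choose s := by
  have hfin : (G.edgeSumset A).Finite :=
    (Set.finite_range fun p : V × V => A p.1 + A p.2).subset fun _ ⟨u, v, _, hx⟩ => ⟨(u, v), hx.symm⟩
  have hcard : #hfin.toFinset = s := by rw [hs, ← Set.ncard_eq_toFinset_card _ hfin]; rfl
  have hbound := hconn.card_le_of_injective hA hfin.coe_toFinset.ge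
  rw [hcard, ← hr, Nat.card_eq_fintype_card] at hbound
  rw [div_le_iff₀ two_pos]
  exact_mod_cast (by linarith : Fintype.card V ≤ 2 ^ s * (r + s).choose s * 2)

/-- Let `G` be a connected graph on `n ≥ 2` vertices with diameter `r`
and let `A : V → ℤ` be injective with `s = |A⊕A|`.  Then `2^s · C(r+s, s) ≥ n/2`. -/
theorem sumset_diameter_bound {V : Type*} [Fintype V] (G : SimpleGraph V)
    (hconn : G.Connected) (hn : 2 ≤ Fintype.card V) (A : V → ℤ)
    (hA : Function.Injective A) (s r : ℕ)
    (hs : s = {x : ℤ | ∃ u v : V, G.Adj u v ∧ x = A u + A v}.ncard)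
    (hr : r = G.diam) :
    (Fintype.card V : ℝ) / 2 ≤ 2 ^ s * (r + s).choose s :=
  sumset_diameter_bound_general G hconn A hA s r hs hr
end

section
/- For every δ ∈ (0, 1/2) there exist C > 0 and n₀ such that for every n ≥ n₀ there exists a simple graph G on the vertex set {1, 2, …, n} with no isolated vertices which is a δ-edge-expander and satisfies |{u + v : uv ∈ E(G)}| ≤ C·log n, where the sums u + v are taken in ℤ and log denotes the natural logarithm. -/
/-- `vol(S)`: the sum of the degrees of the vertices in `S`. -/
noncomputable def graphVol {V : Type*} [Fintype V] (G : SimpleGraph V) (S : Finset V) : ℕ :=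
  ∑ v ∈ S, (G.neighborSet v).ncard

/-- `e(S, S̄)`: the number of edges of `G` with exactly one endpoint in `S` (each such
edge is counted once, as the ordered pair going from `S` to its complement). -/
noncomputable def edgeBoundary {V : Type*} [Fintype V] (G : SimpleGraph V) (S : Finset V) : ℕ :=
  {p : V × V | G.Adj p.1 p.2 ∧ p.1 ∈ S ∧ p.2 ∉ S}.ncard

/-- `G` is a `δ`-edge-expander: `e(S, S̄) ≥ δ·min(vol S, vol S̄)` whenever both volumes
are nonzero. -/
def IsEdgeExpander {V : Type*} [Fintype V] [DecidableEq V] (G : SimpleGraph V)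
    (δ : ℝ) : Prop :=
  ∀ S : Finset V, graphVol G S ≠ 0 → graphVol G Sᶜ ≠ 0 →
    δ * (min (graphVol G S) (graphVol G Sᶜ) : ℕ) ≤ (edgeBoundary G S : ℝ)

/-!
Take a set `A ⊆ ℤ/n` of size `L ≍ log n` all of whose nontrivial Fourier coefficients are at most
`εL` in absolute value (a uniformly random `L`-tuple works, by Hoeffding's inequality and a union
bound over the `n - 1` frequencies), and join `u ≠ v` whenever `u + v ∈ A` in `ℤ/n`. Every vertex
has degree `L` or `L - 1`, and the Fourier bound shows that a set `S` of at most `n/2` vertices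
spans at most `(1/2 + ε) L |S|` ordered adjacent pairs, so most of its volume leaves `S`. The edge
sums `u + v` are integers in `[2, 2n]` that reduce modulo `n` into `A`, so there are at most `2L`.
-/

open Finset Filter

open MeasureTheory ProbabilityTheory in
theorem card_sum_ge_le_of_abs_le {α : Type*} [Fintype α] [Nonempty α] {f : α → ℝ}
    (hf : ∀ x, |f x| ≤ 1) (hf0 : ∑ x, f x = 0) (L : ℕ) {s : ℝ} (hs : 0 ≤ s) :
    (#{a : Fin L → α | s ≤ ∑ i, f (a i)} : ℝ) ≤
      Real.exp (-s ^ 2 / (2 * L)) * Fintype.card α ^ L := by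
  classical
  let _ : MeasurableSpace α := ⊤
  have : DiscreteMeasurableSpace α := ⟨fun _ => trivial⟩
  let ν := (PMF.uniformOfFintype α).toMeasure
  let μ := Measure.pi fun _ : Fin L => ν
  have hν : HasSubgaussianMGF f 1 ν := by
    convert hasSubgaussianMGF_of_mem_Icc_of_integral_eq_zero (μ := ν) (a := -1) (b := 1)
      Measurable.of_discrete.aemeasurable (ae_of_all _ fun x => abs_le.mp (hf x)) ?_
    · norm_num
    · simp [ν, PMF.integral_eq_sum, PMF.uniformOfFintype_apply, ← mul_sum, hf0]
  have hμ : ∀ i ∈ (univ : Finset (Fin L)), HasSubgaussianMGF (fun a : Fin L → α => f (a i)) 1 μ :=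
    fun i _ => .of_map (Y := Function.eval i) Measurable.of_discrete.aemeasurable
      (by rwa [(measurePreserving_eval _ i).map_eq])
  have hcount (S : Finset (Fin L → α)) : μ.real S = #S / Fintype.card α ^ L := by
    rw [measureReal_def, ← sum_measure_singleton]
    simp [μ, ν, PMF.uniformOfFintype_apply, div_eq_mul_inv]
  have h := HasSubgaussianMGF.measure_sum_ge_le_of_iIndepFun
    (iIndepFun_pi fun _ => Measurable.of_discrete.aemeasurable) hμ hs
  rw [← coe_filter_univ, hcount, div_le_iff₀ (by positivity)] at h
  simpa using h

lemma card_apply_eq_apply_le {ι α : Type*} [Fintype ι] [DecidableEq ι] [Fintype α] [DecidableEq α]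
    {i j : ι} (hij : i ≠ j) :
    #{a : ι → α | a i = a j} ≤ Fintype.card α ^ (Fintype.card ι - 1) := by
  calc #{a : ι → α | a i = a j} ≤ #(univ : Finset ({k // k ≠ i} → α)) := by
        refine card_le_card_of_injOn (fun a k => a k) (fun _ _ => mem_coe.mpr (mem_univ _)) ?_
        intro a ha b hb hab
        simp only [coe_filter, mem_univ, true_and, Set.mem_ofPred_eq] at ha hb
        funext k
        by_cases hk : k = i
        · subst hk; rw [ha, hb]; exact congrFun hab ⟨j, hij.symm⟩
        · exact congrFun hab ⟨k, hk⟩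
    _ = Fintype.card α ^ (Fintype.card ι - 1) := by simp

lemma card_not_injective_le {ι α : Type*} [Fintype ι] [DecidableEq ι] [Fintype α] [DecidableEq α] :
    #{a : ι → α | ¬ Function.Injective a} ≤
      Fintype.card ι ^ 2 * Fintype.card α ^ (Fintype.card ι - 1) := by
  calc #{a : ι → α | ¬ Function.Injective a}
      ≤ #((univ : Finset ι).offDiag.biUnion fun p => {a : ι → α | a p.1 = a p.2}) := by
        refine card_le_card fun a ha => ?_
        obtain ⟨i, j, hval, hij⟩ := Function.not_injective_iff.mp (mem_filter.mp ha).2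
        exact mem_biUnion.mpr ⟨(i, j), by simpa using hij, by simpa using hval⟩
    _ ≤ ∑ p ∈ (univ : Finset ι).offDiag, #{a : ι → α | a p.1 = a p.2} := card_biUnion_le
    _ ≤ ∑ p ∈ (univ : Finset ι).offDiag, Fintype.card α ^ (Fintype.card ι - 1) :=
        sum_le_sum fun p hp => card_apply_eq_apply_le (mem_offDiag.mp hp).2.2
    _ ≤ Fintype.card ι ^ 2 * Fintype.card α ^ (Fintype.card ι - 1) := by
        rw [sum_const, smul_eq_mul, offDiag_card, card_univ, sq]
        gcongr
        exact Nat.sub_le _ _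

lemma two_mul_card_not_injective_le {ι α : Type*} [Fintype ι] [DecidableEq ι] [Fintype α]
    [DecidableEq α] (h : 2 * Fintype.card ι ^ 2 ≤ Fintype.card α) :
    2 * #{a : ι → α | ¬ Function.Injective a} ≤ Fintype.card α ^ Fintype.card ι := by
  refine (Nat.mul_le_mul_left 2 card_not_injective_le).trans ?_
  generalize Fintype.card ι = L at h ⊢
  generalize Fintype.card α = m at h ⊢
  rcases L with _ | k
  · simp
  · rw [Nat.add_sub_cancel, ← mul_assoc, pow_succ' m]
    exact Nat.mul_le_mul_right _ h

lemma exists_mem_re_mul_ge_half_norm (z : ℂ) :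
    ∃ c ∈ ({1, -1, Complex.I, -Complex.I} : Finset ℂ), ‖z‖ / 2 ≤ (c * z).re := by
  have := Complex.norm_le_abs_re_add_abs_im z
  rcases le_total (‖z‖ / 2) |z.re| with h | h
  · rcases abs_cases z.re with ⟨hre, -⟩ | ⟨hre, -⟩
    · exact ⟨1, by simp, by simp; linarith⟩
    · exact ⟨-1, by simp, by simp; linarith⟩
  · rcases abs_cases z.im with ⟨him, -⟩ | ⟨him, -⟩
    · exact ⟨-Complex.I, by simp, by simp; linarith⟩
    · exact ⟨Complex.I, by simp, by simp; linarith⟩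

section Fourier

variable {n : ℕ} [NeZero n]

noncomputable def expSum (A : Finset (ZMod n)) (t : ZMod n) : ℂ :=
  ∑ a ∈ A, ZMod.stdAddChar (t * a)

def IsFourierUniform (ε : ℝ) (A : Finset (ZMod n)) : Prop :=
  ∀ t ≠ 0, ‖expSum A t‖ ≤ ε * #A

lemma expSum_zero (A : Finset (ZMod n)) : expSum A 0 = #A := by
  simp [expSum]

lemma sum_stdAddChar_mul_sub (x y : ZMod n) :
    ∑ t : ZMod n, (ZMod.stdAddChar (t * (x - y)) : ℂ) = if x = y then (n : ℂ) else 0 := by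
  rw [AddChar.sum_mulShift _ (ZMod.isPrimitive_stdAddChar n)]
  simp [sub_eq_zero]

lemma expSum_mul_conj (A B : Finset (ZMod n)) (t : ZMod n) :
    expSum A t * starRingEnd ℂ (expSum B t) = ∑ x ∈ A, ∑ y ∈ B, ZMod.stdAddChar (t * (x - y)) := by
  simp only [expSum, map_sum, sum_mul_sum, sub_eq_add_neg, mul_add, mul_neg,
    AddChar.map_add_eq_mul, AddChar.map_neg_eq_conj]

lemma sum_norm_expSum_sq (T : Finset (ZMod n)) : ∑ t, ‖expSum T t‖ ^ 2 = n * #T := by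
  suffices h : ∑ t, (‖expSum T t‖ ^ 2 : ℂ) = n * #T by exact_mod_cast h
  calc ∑ t, (‖expSum T t‖ ^ 2 : ℂ)
      = ∑ x ∈ T, ∑ y ∈ T, ∑ t : ZMod n, (ZMod.stdAddChar (t * (x - y)) : ℂ) := by
        simp only [← Complex.mul_conj', expSum_mul_conj]
        rw [sum_comm]; exact sum_congr rfl fun x _ => sum_comm
    _ = n * #T := by simp [sum_stdAddChar_mul_sub, mul_comm]

lemma expSum_sq_mul_conj (T A : Finset (ZMod n)) (t : ZMod n) :
    expSum T t ^ 2 * starRingEnd ℂ (expSum A t) =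
      ∑ q ∈ T ×ˢ T, ∑ a ∈ A, ZMod.stdAddChar (t * (q.1 + q.2 - a)) := by
  simp only [expSum, sq, map_sum, sum_mul_sum, ← sum_product', mul_add, sub_eq_add_neg,
    mul_neg, AddChar.map_add_eq_mul, AddChar.map_neg_eq_conj]

lemma card_sum_mem_mul_eq (T A : Finset (ZMod n)) :
    (#{q ∈ T ×ˢ T | q.1 + q.2 ∈ A} * n : ℂ) =
      ∑ t, expSum T t ^ 2 * starRingEnd ℂ (expSum A t) := by
  simp only [expSum_sq_mul_conj]
  rw [sum_comm]
  simp only [sum_comm (γ := ZMod n), sum_stdAddChar_mul_sub, sum_ite_eq, ← sum_filter, sum_const,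
    nsmul_eq_mul]

lemma card_sum_mem_mul_le {ε : ℝ} (hε : 0 ≤ ε) {A : Finset (ZMod n)} (hA : IsFourierUniform ε A)
    (T : Finset (ZMod n)) :
    (#{q ∈ T ×ˢ T | q.1 + q.2 ∈ A} * n : ℝ) ≤ #A * #T ^ 2 + ε * #A * (n * #T) := by
  have key := card_sum_mem_mul_eq T A
  rw [← add_sum_erase _ _ (mem_univ 0), expSum_zero, expSum_zero, Complex.conj_natCast] at key
  set tail := ∑ t ∈ univ.erase 0, expSum T t ^ 2 * starRingEnd ℂ (expSum A t)
  have htail : ‖tail‖ ≤ ε * #A * (n * #T) :=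
    calc ‖tail‖ ≤ ∑ t ∈ univ.erase 0, ‖expSum T t‖ ^ 2 * (ε * #A) := by
          refine norm_sum_le_of_le _ fun t ht => ?_
          rw [norm_mul, norm_pow, Complex.norm_conj]
          gcongr
          exact hA t (ne_of_mem_erase ht)
      _ ≤ ∑ t, ‖expSum T t‖ ^ 2 * (ε * #A) :=
          sum_le_sum_of_subset_of_nonneg (erase_subset _ _) fun _ _ _ => by positivity
      _ = ε * #A * (n * #T) := by rw [← sum_mul, sum_norm_expSum_sq]; ring
  have hre : (#{q ∈ T ×ˢ T | q.1 + q.2 ∈ A} * n : ℝ) = #T ^ 2 * #A + tail.re := by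
    simpa [sq] using congrArg Complex.re key
  linarith [Complex.re_le_norm tail]

lemma sum_stdAddChar_mul_eq_zero {t : ZMod n} (ht : t ≠ 0) :
    ∑ x : ZMod n, (ZMod.stdAddChar (t * x) : ℂ) = 0 :=
  AddChar.sum_eq_zero_of_ne_one (ZMod.isPrimitive_stdAddChar n ht)

lemma card_norm_sum_stdAddChar_gt_le {t : ZMod n} (ht : t ≠ 0) (L : ℕ) {ε : ℝ} (hε : 0 ≤ ε) :
    (#{a : Fin L → ZMod n | ε * L < ‖∑ i, (ZMod.stdAddChar (t * a i) : ℂ)‖} : ℝ) ≤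
      4 * Real.exp (-(ε ^ 2 * L / 8)) * n ^ L := by
  set D : Finset ℂ := {1, -1, Complex.I, -Complex.I}
  set F : ℂ → Finset (Fin L → ZMod n) := fun c =>
    {a | ε * L / 2 ≤ ∑ i, (c * ZMod.stdAddChar (t * a i)).re}
  have hsub : ({a | ε * L < ‖∑ i, (ZMod.stdAddChar (t * a i) : ℂ)‖} : Finset (Fin L → ZMod n)) ⊆
      D.biUnion F := by
    intro a ha
    obtain ⟨c, hc, hcz⟩ := exists_mem_re_mul_ge_half_norm (∑ i, (ZMod.stdAddChar (t * a i) : ℂ))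
    rw [mul_sum, Complex.re_sum] at hcz
    exact mem_biUnion.mpr ⟨c, hc, mem_filter.mpr ⟨mem_univ _, by linarith [(mem_filter.mp ha).2]⟩⟩
  have hF : ∀ c ∈ D, (#(F c) : ℝ) ≤ Real.exp (-(ε ^ 2 * L / 8)) * n ^ L := by
    intro c hc
    have hc1 : ‖c‖ = 1 := by simp [D] at hc; rcases hc with rfl | rfl | rfl | rfl <;> simp
    have h := card_sum_ge_le_of_abs_le (f := fun x : ZMod n => (c * ZMod.stdAddChar (t * x)).re)
      (fun x => by
        simpa [hc1, AddChar.norm_apply] using Complex.abs_re_le_norm (c * ZMod.stdAddChar (t * x)))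
      (by
        rw [← Complex.re_sum, ← mul_sum, sum_stdAddChar_mul_eq_zero ht, mul_zero, Complex.zero_re])
      L (s := ε * L / 2) (by positivity)
    have hexp : -(ε * L / 2) ^ 2 / (2 * L) = -(ε ^ 2 * L / 8) := by
      rcases eq_or_ne (L : ℝ) 0 with hL | hL
      · simp [hL]
      · field_simp; ring
    rwa [hexp, ZMod.card] at h
  calc (#{a : Fin L → ZMod n | ε * L < ‖∑ i, (ZMod.stdAddChar (t * a i) : ℂ)‖} : ℝ)
      ≤ #(D.biUnion F) := by exact_mod_cast card_le_card hsub
    _ ≤ ∑ c ∈ D, (#(F c) : ℝ) := by exact_mod_cast card_biUnion_le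
    _ ≤ ∑ c ∈ D, Real.exp (-(ε ^ 2 * L / 8)) * n ^ L := sum_le_sum hF
    _ ≤ 4 * Real.exp (-(ε ^ 2 * L / 8)) * n ^ L := by
        rw [sum_const, nsmul_eq_mul, mul_assoc]
        gcongr
        exact_mod_cast card_le_four

lemma card_exists_norm_sum_stdAddChar_gt_le (L : ℕ) {ε : ℝ} (hε : 0 ≤ ε) :
    (#{a : Fin L → ZMod n | ∃ t ≠ 0, ε * L < ‖∑ i, (ZMod.stdAddChar (t * a i) : ℂ)‖} : ℝ) ≤
      (n - 1) * (4 * Real.exp (-(ε ^ 2 * L / 8)) * n ^ L) := by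
  calc (#{a : Fin L → ZMod n | ∃ t ≠ 0, ε * L < ‖∑ i, (ZMod.stdAddChar (t * a i) : ℂ)‖} : ℝ)
      ≤ #((univ.erase 0).biUnion fun t =>
          ({a | ε * L < ‖∑ i, (ZMod.stdAddChar (t * a i) : ℂ)‖} : Finset (Fin L → ZMod n))) := by
        refine mod_cast card_le_card fun a ha => ?_
        obtain ⟨t, ht, hlarge⟩ := (mem_filter.mp ha).2
        exact mem_biUnion.mpr
          ⟨t, mem_erase.mpr ⟨ht, mem_univ _⟩, mem_filter.mpr ⟨mem_univ _, hlarge⟩⟩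
    _ ≤ ∑ t ∈ univ.erase (0 : ZMod n),
          (#{a : Fin L → ZMod n | ε * L < ‖∑ i, (ZMod.stdAddChar (t * a i) : ℂ)‖} : ℝ) :=
        mod_cast card_biUnion_le
    _ ≤ ∑ t ∈ univ.erase (0 : ZMod n), 4 * Real.exp (-(ε ^ 2 * L / 8)) * n ^ L :=
        sum_le_sum fun t ht => card_norm_sum_stdAddChar_gt_le (ne_of_mem_erase ht) L hε
    _ = (n - 1) * (4 * Real.exp (-(ε ^ 2 * L / 8)) * n ^ L) := by
        rw [sum_const, card_erase_of_mem (mem_univ _), card_univ, ZMod.card, nsmul_eq_mul,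
          Nat.cast_pred (Nat.pos_of_neZero n)]

theorem exists_card_eq_isFourierUniform {L : ℕ} {ε : ℝ} (hε : 0 ≤ ε)
    (hL : 8 * Real.log (8 * n) ≤ ε ^ 2 * L) (hLn : 2 * L ^ 2 ≤ n) :
    ∃ A : Finset (ZMod n), #A = L ∧ IsFourierUniform ε A := by
  have hn : (0 : ℝ) < n := by exact_mod_cast Nat.pos_of_neZero n
  have hq : 4 * Real.exp (-(ε ^ 2 * L / 8)) * n ≤ 1 / 2 := by
    have : Real.exp (-(ε ^ 2 * L / 8)) ≤ (8 * n : ℝ)⁻¹ := by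
      rw [← Real.exp_log (by positivity : (0 : ℝ) < 8 * n), ← Real.exp_neg]
      exact Real.exp_le_exp.mpr (by linarith)
    calc 4 * Real.exp (-(ε ^ 2 * L / 8)) * n ≤ 4 * (8 * n : ℝ)⁻¹ * n := by gcongr
      _ = 1 / 2 := by field_simp; norm_num
  set q := 4 * Real.exp (-(ε ^ 2 * L / 8))
  set NonInj : Finset (Fin L → ZMod n) := {a | ¬ Function.Injective a}
  set Large : Finset (Fin L → ZMod n) :=
    {a | ∃ t ≠ 0, ε * L < ‖∑ i, (ZMod.stdAddChar (t * a i) : ℂ)‖}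
  have hNonInj : (2 * #NonInj : ℝ) ≤ n ^ L := by
    have h := two_mul_card_not_injective_le (ι := Fin L) (α := ZMod n)
    simp only [Fintype.card_fin, ZMod.card] at h
    exact_mod_cast h hLn
  have hLarge : (#Large : ℝ) ≤ (n - 1) * (q * n ^ L) :=
    card_exists_norm_sum_stdAddChar_gt_le L hε
  have hcard : #(NonInj ∪ Large) < #(univ : Finset (Fin L → ZMod n)) := by
    have hqpos : 0 < q * n ^ L := by positivity
    have : (#(NonInj ∪ Large) : ℝ) < n ^ L :=
      calc (#(NonInj ∪ Large) : ℝ) ≤ #NonInj + #Large := by exact_mod_cast card_union_le _ _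
        _ < n ^ L / 2 + n * (q * n ^ L) := by linarith
        _ ≤ n ^ L := by linarith [mul_le_mul_of_nonneg_right hq (pow_nonneg hn.le L)]
    rw [card_univ, Fintype.card_fun, ZMod.card, Fintype.card_fin]
    exact_mod_cast this
  obtain ⟨a, -, ha⟩ := exists_mem_notMem_of_card_lt_card hcard
  simp only [NonInj, Large, mem_union, mem_filter, mem_univ, true_and, not_or, not_not,
    not_exists, not_and, not_lt] at ha
  refine ⟨univ.map ⟨a, ha.1⟩, by simp, fun t ht => ?_⟩
  simpa [expSum] using ha.2 t ht

end Fourier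

section EdgeExpansion

variable {V : Type*} [Fintype V] (G : SimpleGraph V)

lemma edgeBoundary_compl [DecidableEq V] (S : Finset V) : edgeBoundary G Sᶜ = edgeBoundary G S := by
  rw [edgeBoundary, edgeBoundary, ← Set.ncard_image_of_injective _ Prod.swap_injective]
  congr 1
  ext ⟨u, v⟩
  simp [G.adj_comm, and_comm]

lemma isEdgeExpander_of_forall_two_mul_card_le [DecidableEq V] {δ : ℝ} (hδ : 0 ≤ δ)
    (h : ∀ S : Finset V, 2 * #S ≤ Fintype.card V → δ * graphVol G S ≤ edgeBoundary G S) :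
    IsEdgeExpander G δ := by
  intro S _ _
  rcases le_total (2 * #S) (Fintype.card V) with hS | hS
  · refine le_trans ?_ (h S hS)
    gcongr
    exact min_le_left _ _
  · rw [← edgeBoundary_compl]
    refine le_trans ?_ (h Sᶜ (by rw [card_compl]; omega))
    gcongr
    exact min_le_right _ _

variable [DecidableRel G.Adj]

lemma graphVol_eq_sum_degree (S : Finset V) : graphVol G S = ∑ v ∈ S, G.degree v := by
  refine sum_congr rfl fun v _ => ?_
  rw [← SimpleGraph.card_neighborFinset_eq_degree, SimpleGraph.neighborFinset_def,
    Set.ncard_eq_toFinset_card']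

lemma edgeBoundary_eq_card [DecidableEq V] (S : Finset V) :
    edgeBoundary G S = #{p ∈ S ×ˢ Sᶜ | G.Adj p.1 p.2} := by
  rw [edgeBoundary, ← Set.ncard_coe_finset]
  congr 1
  ext p
  simp [and_comm]

lemma graphVol_eq_edgeBoundary_add [DecidableEq V] (S : Finset V) :
    graphVol G S = edgeBoundary G S + #{p ∈ S ×ˢ S | G.Adj p.1 p.2} := by
  rw [graphVol_eq_sum_degree, edgeBoundary_eq_card, card_filter, card_filter, sum_product,
    sum_product, ← sum_add_distrib]
  refine sum_congr rfl fun v _ => ?_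
  rw [sum_compl_add_sum, ← card_filter, ← SimpleGraph.card_neighborFinset_eq_degree,
    SimpleGraph.neighborFinset_eq_filter]

end EdgeExpansion

section CayleySumGraph

variable {V : Type*} {n : ℕ} (e : V ≃ ZMod n) (A : Finset (ZMod n))

def cayleySumGraph : SimpleGraph V where
  Adj u v := u ≠ v ∧ e u + e v ∈ A
  symm := ⟨fun _ _ h => ⟨h.1.symm, add_comm (e _) _ ▸ h.2⟩⟩
  loopless := ⟨fun _ h => h.1 rfl⟩

instance [DecidableEq V] : DecidableRel (cayleySumGraph e A).Adj :=
  fun _ _ => inferInstanceAs (Decidable (_ ∧ _))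

@[simp] lemma cayleySumGraph_adj {u v : V} :
    (cayleySumGraph e A).Adj u v ↔ u ≠ v ∧ e u + e v ∈ A := Iff.rfl

variable [DecidableEq V]

lemma card_adj_le_card_sum_mem (S : Finset V) :
    #{p ∈ S ×ˢ S | (cayleySumGraph e A).Adj p.1 p.2} ≤
      #{q ∈ S.map e.toEmbedding ×ˢ S.map e.toEmbedding | q.1 + q.2 ∈ A} := by
  refine card_le_card_of_injOn (Prod.map e e) ?_ (e.injective.prodMap e.injective).injOn
  intro p hp
  simp only [coe_filter, mem_product, Set.mem_ofPred_eq, cayleySumGraph_adj] at hp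
  simp [hp]

variable [Fintype V]

lemma degree_cayleySumGraph (v : V) :
    (cayleySumGraph e A).degree v = #(A.erase (e v + e v)) := by
  rw [← SimpleGraph.card_neighborFinset_eq_degree]
  refine card_nbij' (fun w => e v + e w) (fun a => e.symm (a - e v)) ?_ ?_ ?_ ?_
  · intro w hw
    simp only [mem_coe, SimpleGraph.mem_neighborFinset, cayleySumGraph_adj] at hw
    simpa [hw.2] using fun h => hw.1 (e.injective h).symm
  · intro a ha
    simp only [coe_erase, Set.mem_sdiff, Set.mem_singleton_iff, mem_coe] at ha
    simp only [mem_coe, SimpleGraph.mem_neighborFinset, cayleySumGraph_adj, Equiv.apply_symm_apply,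
      add_sub_cancel]
    exact ⟨fun h => ha.2 (eq_sub_iff_add_eq.mp (e.eq_symm_apply.mp h)).symm, ha.1⟩
  · intro w _; simp
  · intro a _; simp

lemma card_le_degree_add_one (v : V) : #A ≤ (cayleySumGraph e A).degree v + 1 := by
  have := pred_card_le_card_erase (s := A) (a := e v + e v)
  rw [degree_cayleySumGraph]
  omega

lemma exists_adj_cayleySumGraph (hA : 2 ≤ #A) (v : V) : ∃ w, (cayleySumGraph e A).Adj v w := by
  rw [← SimpleGraph.degree_pos_iff_exists_adj]
  have := card_le_degree_add_one e A v
  omega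

lemma degree_le_card (v : V) : (cayleySumGraph e A).degree v ≤ #A := by
  rw [degree_cayleySumGraph]; exact card_erase_le

lemma card_mul_card_le_graphVol_add (S : Finset V) :
    #A * #S ≤ graphVol (cayleySumGraph e A) S + #S := by
  calc #A * #S = ∑ v ∈ S, #A := by rw [sum_const, smul_eq_mul, mul_comm]
    _ ≤ ∑ v ∈ S, ((cayleySumGraph e A).degree v + 1) :=
        sum_le_sum fun v _ => card_le_degree_add_one e A v
    _ = graphVol (cayleySumGraph e A) S + #S := by
        rw [sum_add_distrib, graphVol_eq_sum_degree, card_eq_sum_ones]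

lemma graphVol_le_card_mul_card (S : Finset V) : graphVol (cayleySumGraph e A) S ≤ #A * #S := by
  rw [graphVol_eq_sum_degree, mul_comm, ← smul_eq_mul]
  exact sum_le_card_nsmul _ _ _ fun v _ => degree_le_card e A v

variable [NeZero n] {e A}

lemma mul_graphVol_le_edgeBoundary {ε δ : ℝ} (hε : 0 ≤ ε) (hδ : 0 ≤ δ) (hA : IsFourierUniform ε A)
    (hAδ : 1 ≤ (1 / 2 - ε - δ) * #A) {S : Finset V} (hS : 2 * #S ≤ n) :
    δ * graphVol (cayleySumGraph e A) S ≤ edgeBoundary (cayleySumGraph e A) S := by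
  set G := cayleySumGraph e A
  set I := #{p ∈ S ×ˢ S | G.Adj p.1 p.2}
  have hvol : (graphVol G S : ℝ) = edgeBoundary G S + I := by
    exact_mod_cast graphVol_eq_edgeBoundary_add G S
  have hvol_le : (graphVol G S : ℝ) ≤ #A * #S := by exact_mod_cast graphVol_le_card_mul_card e A S
  have hvol_ge : (#A * #S : ℝ) ≤ graphVol G S + #S := by
    exact_mod_cast card_mul_card_le_graphVol_add e A S
  have hn : (0 : ℝ) < n := by exact_mod_cast Nat.pos_of_neZero n
  have hSn : (2 * #S : ℝ) ≤ n := by exact_mod_cast hS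
  have hI : (I : ℝ) ≤ (1 / 2 + ε) * #A * #S := by
    have hcount := card_sum_mem_mul_le hε hA (S.map e.toEmbedding)
    rw [card_map] at hcount
    have hIT : (I : ℝ) ≤ #{q ∈ S.map e.toEmbedding ×ˢ S.map e.toEmbedding | q.1 + q.2 ∈ A} := by
      exact_mod_cast card_adj_le_card_sum_mem e A S
    have hsq : 0 ≤ (#A * #S : ℝ) * (n - 2 * #S) := mul_nonneg (by positivity) (by linarith)
    refine le_of_mul_le_mul_right ?_ hn
    calc (I : ℝ) * n
        ≤ #{q ∈ S.map e.toEmbedding ×ˢ S.map e.toEmbedding | q.1 + q.2 ∈ A} * n := by gcongr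
      _ ≤ #A * #S ^ 2 + ε * #A * (n * #S) := hcount
      _ ≤ (1 / 2 + ε) * #A * #S * n := by linear_combination hsq / 2
  have hδA : 0 ≤ (#S : ℝ) * ((1 / 2 - ε - δ) * #A - 1) := mul_nonneg (by positivity) (by linarith)
  calc δ * graphVol G S ≤ δ * (#A * #S) := by gcongr
    _ ≤ #A * #S - #S - (1 / 2 + ε) * #A * #S := by linear_combination hδA
    _ ≤ edgeBoundary G S := by linarith

theorem isEdgeExpander_cayleySumGraph {ε δ : ℝ} (hε : 0 ≤ ε) (hδ : 0 ≤ δ)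
    (hA : IsFourierUniform ε A) (hAδ : 1 ≤ (1 / 2 - ε - δ) * #A) :
    IsEdgeExpander (cayleySumGraph e A) δ :=
  isEdgeExpander_of_forall_two_mul_card_le _ hδ fun _ hS =>
    mul_graphVol_le_edgeBoundary hε hδ hA hAδ (by rwa [Fintype.card_congr e, ZMod.card] at hS)

end CayleySumGraph

noncomputable def shiftLabel (n : ℕ) [NeZero n] : Fin n ≃ ZMod n :=
  Equiv.ofBijective (fun v => ((v : ℕ) : ZMod n) + 1) <|
    (Fintype.bijective_iff_injective_and_card _).mpr ⟨fun u v h => by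
      simpa [ZMod.val_natCast, Nat.mod_eq_of_lt, Fin.ext_iff] using
        congrArg ZMod.val (add_right_cancel h), by simp⟩

lemma ncard_le_card_of_subset_Ico {n : ℕ} {A : Finset (ZMod n)} {X : Set ℤ} {a : ℤ}
    (hX : X ⊆ Set.Ico a (a + n)) (hA : ∀ x ∈ X, (x : ZMod n) ∈ A) : X.ncard ≤ #A := by
  rw [← Set.ncard_coe_finset A]
  refine Set.ncard_le_ncard_of_injOn (fun x : ℤ => (x : ZMod n)) hA fun x hx y hy hxy => ?_
  have hdvd := (ZMod.intCast_eq_intCast_iff_dvd_sub x y n).mp hxy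
  obtain ⟨hx1, hx2⟩ := hX hx
  obtain ⟨hy1, hy2⟩ := hX hy
  have := Int.eq_zero_of_abs_lt_dvd hdvd (abs_lt.mpr ⟨by omega, by omega⟩)
  omega

lemma ncard_le_two_mul_card_of_subset_Ico {n : ℕ} {A : Finset (ZMod n)} {X : Set ℤ} {a : ℤ}
    (hX : X ⊆ Set.Ico a (a + 2 * n)) (hA : ∀ x ∈ X, (x : ZMod n) ∈ A) : X.ncard ≤ 2 * #A := by
  have hsplit : X = X ∩ Set.Ico a (a + n) ∪ X ∩ Set.Ico (a + n) (a + n + n) := by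
    rw [← Set.inter_union_distrib_left, Set.Ico_union_Ico_eq_Ico (by omega) (by omega), eq_comm,
      Set.inter_eq_left, add_assoc, ← two_mul]
    exact hX
  rw [hsplit, two_mul]
  refine (Set.ncard_union_le _ _).trans (add_le_add ?_ ?_) <;>
    exact ncard_le_card_of_subset_Ico Set.inter_subset_right fun x hx => hA x hx.1

lemma ncard_sumset_cayleySumGraph_le {n : ℕ} [NeZero n] (A : Finset (ZMod n)) :
    {x : ℤ | ∃ u v : Fin n, (cayleySumGraph (shiftLabel n) A).Adj u v ∧
      x = ((u : ℕ) + 1 : ℤ) + ((v : ℕ) + 1 : ℤ)}.ncard ≤ 2 * #A := by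
  refine ncard_le_two_mul_card_of_subset_Ico (a := 2) ?_ ?_
  · rintro _ ⟨u, v, -, rfl⟩
    have := u.isLt
    have := v.isLt
    simp only [Set.mem_Ico]
    omega
  · rintro _ ⟨u, v, huv, rfl⟩
    simpa [shiftLabel, add_add_add_comm, one_add_one_eq_two] using huv.2

lemma eventually_two_mul_sq_le (K : ℝ) :
    ∀ᶠ m : ℕ in atTop, 2 * (K * Real.log m + 1) ^ 2 ≤ m := by
  have h : (fun x : ℝ => 2 * K ^ 2 * Real.log x ^ 2 + 4 * K * Real.log x ^ 1 + 2) =o[atTop] id :=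
    ((Real.isLittleO_pow_log_id_atTop.const_mul_left _).add
      (Real.isLittleO_pow_log_id_atTop.const_mul_left _)).add
      (Asymptotics.isLittleO_const_id_atTop _)
  have hreal : ∀ᶠ x : ℝ in atTop, 2 * (K * Real.log x + 1) ^ 2 ≤ x := by
    filter_upwards [h.bound one_pos, eventually_ge_atTop 0] with x hx hx0
    rw [Real.norm_eq_abs, id, Real.norm_of_nonneg hx0, one_mul] at hx
    linarith [le_abs_self (2 * K ^ 2 * Real.log x ^ 2 + 4 * K * Real.log x ^ 1 + 2)]
  exact tendsto_natCast_atTop_atTop.eventually hreal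

lemma one_le_log_and_log_eight_mul_le {n : ℕ} (hn : 8 ≤ n) :
    1 ≤ Real.log n ∧ Real.log (8 * n) ≤ 2 * Real.log n := by
  have hn' : (8 : ℝ) ≤ n := by exact_mod_cast hn
  refine ⟨?_, ?_⟩
  · rw [Real.le_log_iff_exp_le (by positivity)]
    linarith [Real.exp_one_lt_d9]
  · rw [Real.log_mul (by norm_num) (by positivity), two_mul]
    gcongr

theorem exists_expander_ncard_sumset_le {n L : ℕ} [NeZero n] {ε δ : ℝ} (hε : 0 ≤ ε) (hδ : 0 ≤ δ)
    (hL : 8 * Real.log (8 * n) ≤ ε ^ 2 * L) (hLn : 2 * L ^ 2 ≤ n)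
    (hLδ : 1 ≤ (1 / 2 - ε - δ) * L) :
    ∃ G : SimpleGraph (Fin n),
      (∀ v : Fin n, ∃ w, G.Adj v w) ∧ IsEdgeExpander G δ ∧
      {x : ℤ | ∃ u v : Fin n, G.Adj u v ∧
        x = ((u : ℕ) + 1 : ℤ) + ((v : ℕ) + 1 : ℤ)}.ncard ≤ 2 * L := by
  obtain ⟨A, hAL, hA⟩ := exists_card_eq_isFourierUniform hε hL hLn
  subst hAL
  have hA2 : 2 ≤ #A := by
    have : (1 / 2 - ε - δ) * #A ≤ 1 / 2 * #A := by gcongr; linarith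
    exact_mod_cast (by linarith : (2 : ℝ) ≤ #A)
  exact ⟨cayleySumGraph (shiftLabel n) A, exists_adj_cayleySumGraph _ A hA2,
    isEdgeExpander_cayleySumGraph hε hδ hA hLδ, ncard_sumset_cayleySumGraph_le A⟩

/-- For every `δ ∈ (0, 1/2)` there are `C > 0` and `n₀` such that for
every `n ≥ n₀` there is a `δ`-edge-expander with no isolated vertices on the vertex set
`{1, 2, …, n}` (modelled as `Fin n`, vertex `i` carrying the integer label `i + 1`) whose
sum-set `{u + v : uv ∈ E(G)} ⊆ ℤ` has at most `C·log n` elements. -/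
theorem expander_with_small_sumset (δ : ℝ) (hδ0 : 0 < δ) (hδ : δ < 1 / 2) :
    ∃ (C : ℝ) (n₀ : ℕ), 0 < C ∧ ∀ n : ℕ, n₀ ≤ n →
      ∃ G : SimpleGraph (Fin n),
        (∀ v : Fin n, ∃ w, G.Adj v w) ∧ IsEdgeExpander G δ ∧
        ({x : ℤ | ∃ u v : Fin n, G.Adj u v ∧
            x = ((u : ℕ) + 1 : ℤ) + ((v : ℕ) + 1 : ℤ)}.ncard : ℝ) ≤ C * Real.log n := by
  set ε := (1 / 2 - δ) / 2 with hε_def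
  have hε : 0 < ε := by positivity
  -- `K` makes `ε ^ 2 * L ≥ 16 * log n`: enough for the union bound and for `ε * L ≥ 1`.
  set K := 16 / ε ^ 2
  obtain ⟨n₀, hn₀⟩ := eventually_atTop.mp ((eventually_two_mul_sq_le K).and (eventually_ge_atTop 8))
  refine ⟨2 * (K + 1), n₀, by positivity, fun n hn => ?_⟩
  obtain ⟨hKn, hn8⟩ := hn₀ n hn
  have : NeZero n := ⟨by omega⟩
  obtain ⟨hlog1, hlog8⟩ := one_le_log_and_log_eight_mul_le hn8
  set L := ⌈K * Real.log n⌉₊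
  have hLK : (L : ℝ) < K * Real.log n + 1 := Nat.ceil_lt_add_one (by positivity)
  have hεL : 16 * Real.log n ≤ ε ^ 2 * L :=
    calc 16 * Real.log n = ε ^ 2 * (K * Real.log n) := by simp only [K]; field_simp
      _ ≤ ε ^ 2 * L := by gcongr; exact Nat.le_ceil _
  have hL2 : (2 * L ^ 2 : ℝ) ≤ n :=
    calc (2 * L ^ 2 : ℝ) ≤ 2 * (K * Real.log n + 1) ^ 2 := by gcongr
      _ ≤ n := hKn
  have hεL1 : 1 ≤ ε * L := by
    have : ε ^ 2 * L ≤ ε * L := by gcongr; exact pow_le_of_le_one hε.le (by linarith) two_ne_zero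
    linarith
  obtain ⟨G, hG, hGδ, hGsum⟩ := exists_expander_ncard_sumset_le (L := L) hε.le hδ0.le
    (by linarith) (by exact_mod_cast hL2) (by rwa [show 1 / 2 - ε - δ = ε by linarith])
  refine ⟨G, hG, hGδ, ?_⟩
  calc (_ : ℝ) ≤ 2 * L := by exact_mod_cast hGsum
    _ ≤ 2 * (K + 1) * Real.log n := by linarith
end

section
/- For every integer n ≥ 2 and every integer d with 1 ≤ d ≤ n^{2/3}, there exists a subset T of ℤ/nℤ of cardinality d such that for every complex number ω with ω^n = 1 and ω ≠ 1, one has |Σ_{s ∈ T} ω^{s̃}| ≤ 3·√d·√(log(10n)), where s̃ ∈ {0,…,n-1} is the representative of s and log denotes the natural logarithm. -/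
/-!
Choose `T ⊆ ℤ/nℤ` at random, keeping each residue independently with probability `p = d/n`;
`bernoulliWeight p T` is the probability of `T`. For a nontrivial `n`-th root of unity `ω`, the
real and imaginary parts of `∑_{s ∈ T} ω^s` are sums of independent centred terms bounded by `1`,
of total variance at most `p n / 2` (at most `p n` when `ω = -1`), because
`∑_s Re(ω^s)² - ∑_s Im(ω^s)² = Re ∑_s ω^{2s}` vanishes unless `ω² = 1`. With `L = log (10 n)`
and threshold `t = 3 √(d L / 2)`, a Chernoff bound makes `|Re|` or `|Im|` reach `t` with
probability at most `4 (10 n)⁻²` (`4 (10 n)⁻¹` for `ω = -1`), so by a union bound over the roots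
some `T` is good for all of them with probability above `1 - 1/(n+1)`. Since `d` is a mode of the
binomial distribution `B(n, d/n)`, the event `|T| = d` has probability at least `1/(n+1)`, so
some good `T` has exactly `d` elements, and then `‖∑_{s ∈ T} ω^s‖ ≤ √2 t = 3 √d √L`.
For `d ≤ 9 L` the trivial bound `‖∑_{s ∈ T} ω^s‖ ≤ d ≤ 3 √d √L` suffices; otherwise the Chernoff
parameter `√(2 L / d)` is below `1`, as the estimate `e^x ≤ 1 + x + x²` behind it requires.
-/

open Finset Real

theorem apply_le_apply_of_unimodal {α : Type*} [Preorder α] {f : ℕ → α} {m : ℕ}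
    (hup : ∀ k < m, f k ≤ f (k + 1)) (hdown : ∀ k ≥ m, f (k + 1) ≤ f k) (k : ℕ) :
    f k ≤ f m := by
  rcases le_total k m with h | h
  · induction h using Nat.decreasingInduction with
    | self => exact le_rfl
    | of_succ k hk ih => exact (hup k hk).trans ih
  · exact antitoneOn_nat_Ici_of_succ_le hdown (le_refl m) h h

namespace Nat

theorem choose_succ_mul_pow_mul_pow {n d k : ℕ} (hk : k < n) :
    n.choose (k + 1) * d ^ (k + 1) * (n - d) ^ (n - (k + 1)) * ((k + 1) * (n - d)) =
      n.choose k * d ^ k * (n - d) ^ (n - k) * ((n - k) * d) := by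
  obtain ⟨m, hm⟩ : ∃ m, n - k = m + 1 := ⟨n - k - 1, by omega⟩
  rw [show n - (k + 1) = m by omega, hm]
  calc _ = n.choose (k + 1) * (k + 1) * d ^ (k + 1) * (n - d) ^ (m + 1) := by ring
    _ = _ := by rw [choose_succ_right_eq, hm]; ring

theorem choose_mul_pow_mul_pow_le {n d : ℕ} (hd : d ≤ n) (k : ℕ) :
    n.choose k * d ^ k * (n - d) ^ (n - k) ≤ n.choose d * d ^ d * (n - d) ^ (n - d) := by
  rcases hd.eq_or_lt with rfl | hd
  · rcases lt_trichotomy k d with hk | rfl | hk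
    · simp [Nat.sub_ne_zero_of_lt hk]
    · exact le_rfl
    · simp [Nat.choose_eq_zero_of_lt hk]
  refine apply_le_apply_of_unimodal (f := fun k ↦ n.choose k * d ^ k * (n - d) ^ (n - k))
    (fun k hk ↦ ?_) (fun k hk ↦ ?_) k
  · refine Nat.le_of_mul_le_mul_right ?_ (by grind : 0 < (k + 1) * (n - d))
    rw [choose_succ_mul_pow_mul_pow (hk.trans hd)]
    exact Nat.mul_le_mul_left _ ((Nat.mul_le_mul hk (by omega)).trans_eq (mul_comm _ _))
  · rcases lt_or_ge k n with hkn | hkn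
    · refine Nat.le_of_mul_le_mul_right ?_ (by grind : 0 < (k + 1) * (n - d))
      rw [choose_succ_mul_pow_mul_pow hkn]
      exact Nat.mul_le_mul_left _ ((Nat.mul_le_mul (by omega) (by omega)).trans_eq (mul_comm _ _))
    · simp [Nat.choose_eq_zero_of_lt (Nat.lt_succ_of_le hkn)]

theorem pow_self_le_succ_mul_choose_mul_pow_mul_pow {n d : ℕ} (hd : d ≤ n) :
    n ^ n ≤ (n + 1) * (n.choose d * d ^ d * (n - d) ^ (n - d)) := by
  calc n ^ n = ∑ k ∈ range (n + 1), n.choose k * d ^ k * (n - d) ^ (n - k) := by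
        have h := add_pow d (n - d) n
        rw [Nat.add_sub_cancel' hd] at h
        rw [h]
        exact sum_congr rfl fun k _ ↦ by simp only [Nat.cast_id]; ring
    _ ≤ ∑ _k ∈ range (n + 1), n.choose d * d ^ d * (n - d) ^ (n - d) :=
        sum_le_sum fun k _ ↦ choose_mul_pow_mul_pow_le hd k
    _ = _ := by simp

end Nat

section UnionBound

variable {β M : Type*} [AddCommMonoid M] [PartialOrder M] [IsOrderedAddMonoid M]
  {f : β → M}

theorem sum_filter_or_le (hf : ∀ x, 0 ≤ f x) (s : Finset β) (P Q : β → Prop) [DecidablePred P]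
    [DecidablePred Q] :
    ∑ x ∈ s with P x ∨ Q x, f x ≤ ∑ x ∈ s with P x, f x + ∑ x ∈ s with Q x, f x := by
  classical
  rw [filter_or, ← sum_union_inter]
  exact le_add_of_nonneg_right (sum_nonneg fun x _ ↦ hf x)

theorem sum_filter_exists_le {ι : Type*} (hf : ∀ x, 0 ≤ f x) (s : Finset β) (I : Finset ι)
    (P : ι → β → Prop) [∀ i, DecidablePred (P i)] [DecidablePred fun x ↦ ∃ i ∈ I, P i x] :
    ∑ x ∈ s with ∃ i ∈ I, P i x, f x ≤ ∑ i ∈ I, ∑ x ∈ s with P i x, f x := by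
  simp_rw [sum_filter]
  rw [sum_comm]
  refine sum_le_sum fun x _ ↦ ?_
  split_ifs with h
  · obtain ⟨i, hi, hPi⟩ := h
    calc f x = if P i x then f x else 0 := (if_pos hPi).symm
      _ ≤ _ := single_le_sum (f := fun i ↦ if P i x then f x else 0)
          (fun j _ ↦ by split_ifs <;> simp [hf]) hi
  · exact sum_nonneg fun i _ ↦ by split_ifs <;> simp [hf]

theorem exists_mem_and_not_of_sum_filter_lt (hf : ∀ x, 0 ≤ f x) {s : Finset β} {P Q : β → Prop}
    [DecidablePred P] [DecidablePred Q]
    (h : ∑ x ∈ s with P x, f x < ∑ x ∈ s with Q x, f x) : ∃ x ∈ s, Q x ∧ ¬P x := by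
  by_contra! hPQ
  refine h.not_ge (sum_le_sum_of_subset_of_nonneg (fun x hx ↦ ?_) fun x _ _ ↦ hf x)
  simp only [mem_filter] at hx ⊢
  exact ⟨hx.1, hPQ x hx.1 hx.2⟩

end UnionBound

section BernoulliSubset

variable {α : Type*} [Fintype α]

def bernoulliWeight (p : ℝ) (T : Finset α) : ℝ :=
  p ^ #T * (1 - p) ^ (Fintype.card α - #T)

theorem bernoulliWeight_nonneg {p : ℝ} (hp₀ : 0 ≤ p) (hp₁ : p ≤ 1) (T : Finset α) :
    0 ≤ bernoulliWeight p T := by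
  have : 0 ≤ 1 - p := by linarith
  unfold bernoulliWeight
  positivity

theorem sum_bernoulliWeight_mul_prod (p : ℝ) (g : α → ℝ) :
    ∑ T, bernoulliWeight p T * ∏ s ∈ T, g s = ∏ s, (p * g s + (1 - p)) := by
  classical
  rw [prod_add, powerset_univ]
  refine sum_congr rfl fun T _ ↦ ?_
  rw [prod_mul_distrib, prod_const, prod_const, card_univ_sdiff, bernoulliWeight]
  ring

theorem sum_bernoulliWeight_card_eq (p : ℝ) (d : ℕ) :
    ∑ T : Finset α with #T = d, bernoulliWeight p T =
      (Fintype.card α).choose d * p ^ d * (1 - p) ^ (Fintype.card α - d) := by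
  rw [sum_congr rfl fun T hT ↦ by rw [bernoulliWeight, (mem_filter.1 hT).2], sum_const,
    ← powerset_univ, ← powersetCard_eq_filter, card_powersetCard, card_univ, nsmul_eq_mul,
    mul_assoc]

theorem mul_exp_add_one_sub_le_exp {p x : ℝ} (hp : 0 ≤ p) (hx : |x| ≤ 1) :
    p * exp x + (1 - p) ≤ exp (p * (x + x ^ 2)) := by
  have h := (abs_le.1 (abs_exp_sub_one_sub_id_le hx)).2
  calc p * exp x + (1 - p) = 1 + p * (exp x - 1) := by ring
    _ ≤ 1 + p * (x + x ^ 2) := by gcongr; linarith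
    _ ≤ _ := by linarith [add_one_le_exp (p * (x + x ^ 2))]

theorem sum_bernoulliWeight_mul_exp_le {p : ℝ} (hp₀ : 0 ≤ p) (hp₁ : p ≤ 1) {x : α → ℝ}
    (hx : ∀ s, |x s| ≤ 1) :
    ∑ T, bernoulliWeight p T * exp (∑ s ∈ T, x s) ≤ exp (p * ∑ s, (x s + x s ^ 2)) := by
  simp_rw [exp_sum, sum_bernoulliWeight_mul_prod, mul_sum, exp_sum]
  exact prod_le_prod (fun s _ ↦ by nlinarith [exp_pos (x s)])
    fun s _ ↦ mul_exp_add_one_sub_le_exp hp₀ (hx s)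

theorem sum_bernoulliWeight_le_exp {p lam t : ℝ} (hp₀ : 0 ≤ p) (hp₁ : p ≤ 1) (hlam : 0 ≤ lam)
    {c : α → ℝ} (hc : ∀ s, |lam * c s| ≤ 1) (hc₀ : ∑ s, c s = 0) :
    ∑ T : Finset α with t ≤ ∑ s ∈ T, c s, bernoulliWeight p T ≤
      exp (p * lam ^ 2 * ∑ s, c s ^ 2 - lam * t) := by
  calc ∑ T : Finset α with t ≤ ∑ s ∈ T, c s, bernoulliWeight p T
      ≤ ∑ T, bernoulliWeight p T * exp (∑ s ∈ T, lam * c s - lam * t) := by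
        rw [sum_filter]
        refine sum_le_sum fun T _ ↦ ?_
        split_ifs with hT
        · refine le_mul_of_one_le_right (bernoulliWeight_nonneg hp₀ hp₁ T) (one_le_exp ?_)
          rw [← mul_sum]; nlinarith
        · exact mul_nonneg (bernoulliWeight_nonneg hp₀ hp₁ T) (exp_pos _).le
    _ = (∑ T, bernoulliWeight p T * exp (∑ s ∈ T, lam * c s)) * exp (-(lam * t)) := by
        simp_rw [sub_eq_add_neg, exp_add, sum_mul, mul_assoc]
    _ ≤ exp (p * ∑ s, (lam * c s + (lam * c s) ^ 2)) * exp (-(lam * t)) := by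
        gcongr; exact sum_bernoulliWeight_mul_exp_le hp₀ hp₁ hc
    _ = _ := by
        rw [← exp_add, sum_add_distrib, ← mul_sum, hc₀]
        congr 1; simp_rw [mul_pow, ← mul_sum]; ring

theorem sum_bernoulliWeight_le_abs_le {p lam t V : ℝ} (hp₀ : 0 ≤ p)
    (hp₁ : p ≤ 1) (hlam : 0 ≤ lam) {c : α → ℝ} (hc : ∀ s, |lam * c s| ≤ 1) (hc₀ : ∑ s, c s = 0)
    (hV : ∑ s, c s ^ 2 ≤ V) :
    ∑ T : Finset α with t ≤ |∑ s ∈ T, c s|, bernoulliWeight p T ≤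
      2 * exp (p * lam ^ 2 * V - lam * t) := by
  have hw := bernoulliWeight_nonneg (α := α) hp₀ hp₁
  have hexp : exp (p * lam ^ 2 * ∑ s, c s ^ 2 - lam * t) ≤ exp (p * lam ^ 2 * V - lam * t) := by
    gcongr
  simp_rw [le_abs, ← sum_neg_distrib]
  refine (sum_filter_or_le hw _ _ _).trans ?_
  have h₁ := sum_bernoulliWeight_le_exp (t := t) hp₀ hp₁ hlam hc hc₀
  have h₂ := sum_bernoulliWeight_le_exp (t := t) (c := fun s ↦ -c s) hp₀ hp₁ hlam
    (fun s ↦ by rw [mul_neg, abs_neg]; exact hc s) (by rw [sum_neg_distrib, hc₀, neg_zero])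
  simp only [neg_sq] at h₂
  linarith

theorem inv_succ_le_sum_bernoulliWeight_card_eq (hα : Fintype.card α ≠ 0) {d : ℕ}
    (hd : d ≤ Fintype.card α) :
    1 / (Fintype.card α + 1 : ℝ) ≤
      ∑ T : Finset α with #T = d, bernoulliWeight (d / Fintype.card α) T := by
  rw [sum_bernoulliWeight_card_eq]
  set N := Fintype.card α
  have hN : (0 : ℝ) < N := by positivity
  have h1 : 1 - (d : ℝ) / N = ((N - d : ℕ) : ℝ) / N := by
    rw [Nat.cast_sub hd]; field_simp
  rw [h1, div_pow, div_pow, div_le_iff₀ (by positivity)]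
  calc 1 = (N : ℝ) ^ N / N ^ N := (div_self (by positivity)).symm
    _ ≤ (N + 1) * (N.choose d * d ^ d * (N - d : ℕ) ^ (N - d)) / N ^ N := by
        gcongr; exact_mod_cast Nat.pow_self_le_succ_mul_choose_mul_pow_mul_pow hd
    _ = _ := by
        rw [show (N : ℝ) ^ N = N ^ d * N ^ (N - d) by rw [← pow_add, Nat.add_sub_cancel' hd]]
        field_simp

end BernoulliSubset

section RootsOfUnity

variable {n : ℕ} [NeZero n] {ω : ℂ}

theorem ZMod.sum_pow_val_eq_zero (hω : ω ^ n = 1) (hω₁ : ω ≠ 1) :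
    ∑ s : ZMod n, ω ^ s.val = 0 := by
  obtain ⟨m, rfl⟩ := Nat.exists_eq_succ_of_ne_zero (NeZero.ne n)
  rw [show ∑ s : ZMod (m + 1), ω ^ s.val = ∑ i ∈ range (m + 1), ω ^ i from
    Fin.sum_univ_eq_sum_range (ω ^ ·) _, geom_sum_eq hω₁, hω, sub_self, zero_div]

theorem norm_pow_val_eq_one (hω : ω ^ n = 1) (s : ZMod n) : ‖ω ^ s.val‖ = 1 := by
  rw [norm_pow, Complex.norm_eq_one_of_pow_eq_one hω (NeZero.ne n), one_pow]

theorem sum_re_sq_add_sum_im_sq (hω : ω ^ n = 1) :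
    ∑ s : ZMod n, (ω ^ s.val).re ^ 2 + ∑ s : ZMod n, (ω ^ s.val).im ^ 2 = n := by
  have h (s : ZMod n) : (ω ^ s.val).re ^ 2 + (ω ^ s.val).im ^ 2 = 1 := by
    have := norm_pow_val_eq_one hω s
    rwa [Complex.norm_eq_sqrt_sq_add_sq, sqrt_eq_one] at this
  simp [← sum_add_distrib, h]

theorem sum_re_sq_sub_sum_im_sq (hω : ω ^ n = 1) (hω₁ : ω ≠ 1) (hω₂ : ω ≠ -1) :
    ∑ s : ZMod n, (ω ^ s.val).re ^ 2 - ∑ s : ZMod n, (ω ^ s.val).im ^ 2 = 0 := by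
  have h (s : ZMod n) : (ω ^ s.val).re ^ 2 - (ω ^ s.val).im ^ 2 = ((ω ^ 2) ^ s.val).re := by
    rw [← pow_mul, mul_comm, pow_mul, sq (ω ^ s.val), Complex.mul_re]; ring
  have hsq : (ω ^ 2) ^ n = 1 := by rw [← pow_mul, mul_comm, pow_mul, hω, one_pow]
  rw [← sum_sub_distrib]
  simp_rw [h, ← Complex.re_sum, ZMod.sum_pow_val_eq_zero hsq (by simp [hω₁, hω₂]),
    Complex.zero_re]

theorem norm_sum_pow_val_le_card (hω : ω ^ n = 1) (T : Finset (ZMod n)) :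
    ‖∑ s ∈ T, ω ^ s.val‖ ≤ #T :=
  (norm_sum_le _ _).trans_eq (by simp [norm_pow_val_eq_one hω])

theorem sum_re_sq_le_and_sum_im_sq_le (hω : ω ^ n = 1) (hω₁ : ω ≠ 1) :
    ∑ s : ZMod n, (ω ^ s.val).re ^ 2 ≤ (if ω = -1 then n else n / 2 : ℝ) ∧
      ∑ s : ZMod n, (ω ^ s.val).im ^ 2 ≤ (if ω = -1 then n else n / 2 : ℝ) := by
  have hadd := sum_re_sq_add_sum_im_sq hω
  have hre : 0 ≤ ∑ s : ZMod n, (ω ^ s.val).re ^ 2 := sum_nonneg fun s _ ↦ sq_nonneg _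
  have him : 0 ≤ ∑ s : ZMod n, (ω ^ s.val).im ^ 2 := sum_nonneg fun s _ ↦ sq_nonneg _
  split_ifs with hω₂
  · constructor <;> linarith
  · have hsub := sum_re_sq_sub_sum_im_sq hω hω₁ hω₂
    constructor <;> linarith

theorem sum_bernoulliWeight_le_abs_re_or_le_abs_im_le (hω : ω ^ n = 1) (hω₁ : ω ≠ 1)
    {p lam t : ℝ} (hp₀ : 0 ≤ p) (hp₁ : p ≤ 1) (hlam₀ : 0 ≤ lam) (hlam₁ : lam ≤ 1) :
    ∑ T : Finset (ZMod n) with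
        t ≤ |(∑ s ∈ T, ω ^ s.val).re| ∨ t ≤ |(∑ s ∈ T, ω ^ s.val).im|, bernoulliWeight p T ≤
      4 * exp (p * lam ^ 2 * (if ω = -1 then n else n / 2 : ℝ) - lam * t) := by
  obtain ⟨hVre, hVim⟩ := sum_re_sq_le_and_sum_im_sq_le hω hω₁
  have hsum := ZMod.sum_pow_val_eq_zero hω hω₁
  have hlam {x : ℝ} (hx : |x| ≤ 1) : |lam * x| ≤ 1 := by
    rw [abs_mul, abs_of_nonneg hlam₀]; exact mul_le_one₀ hlam₁ (abs_nonneg x) hx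
  have hre := sum_bernoulliWeight_le_abs_le (t := t) hp₀ hp₁ hlam₀
    (fun s ↦ hlam ((Complex.abs_re_le_norm _).trans (norm_pow_val_eq_one hω s).le))
    (by rw [← Complex.re_sum, hsum, Complex.zero_re]) hVre
  have him := sum_bernoulliWeight_le_abs_le (t := t) hp₀ hp₁ hlam₀
    (fun s ↦ hlam ((Complex.abs_im_le_norm _).trans (norm_pow_val_eq_one hω s).le))
    (by rw [← Complex.im_sum, hsum, Complex.zero_im]) hVim
  simp_rw [Complex.re_sum, Complex.im_sum]
  refine (sum_filter_or_le (bernoulliWeight_nonneg hp₀ hp₁) _ _ _).trans ?_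
  linarith

end RootsOfUnity

theorem exists_card_eq_forall_abs_re_lt_and_abs_im_lt {n d : ℕ} [NeZero n] (hdn : d ≤ n)
    {lam t : ℝ} (hlam₀ : 0 ≤ lam) (hlam₁ : lam ≤ 1)
    (hsmall : 4 * n * exp (d / n * lam ^ 2 * (n / 2) - lam * t) +
      4 * exp (d / n * lam ^ 2 * n - lam * t) < 1 / (n + 1)) :
    ∃ T : Finset (ZMod n), #T = d ∧ ∀ ω : ℂ, ω ^ n = 1 → ω ≠ 1 →
      |(∑ s ∈ T, ω ^ s.val).re| < t ∧ |(∑ s ∈ T, ω ^ s.val).im| < t := by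
  classical
  set p : ℝ := d / n
  have hp₀ : 0 ≤ p := by positivity
  have hp₁ : p ≤ 1 := div_le_one_of_le₀ (by exact_mod_cast hdn) (Nat.cast_nonneg n)
  have hw := bernoulliWeight_nonneg (α := ZMod n) hp₀ hp₁
  set R := (Polynomial.nthRootsFinset n (1 : ℂ)).erase 1
  have hR : #R ≤ n := (card_erase_le).trans <|
    (Multiset.toFinset_card_le _).trans (Polynomial.card_nthRoots n 1)
  have hbad : ∑ T : Finset (ZMod n) with ∃ ω ∈ R,
        t ≤ |(∑ s ∈ T, ω ^ s.val).re| ∨ t ≤ |(∑ s ∈ T, ω ^ s.val).im|, bernoulliWeight p T ≤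
      4 * n * exp (p * lam ^ 2 * (n / 2) - lam * t) + 4 * exp (p * lam ^ 2 * n - lam * t) := by
    refine (sum_filter_exists_le hw _ _ _).trans ?_
    calc _ ≤ ∑ ω ∈ R, (4 * exp (p * lam ^ 2 * (n / 2) - lam * t) +
          if ω = -1 then 4 * exp (p * lam ^ 2 * n - lam * t) else 0) := by
          refine sum_le_sum fun ω hω ↦ ?_
          obtain ⟨hω₁, hω⟩ := mem_erase.1 hω
          refine (sum_bernoulliWeight_le_abs_re_or_le_abs_im_le
            ((Polynomial.mem_nthRootsFinset (NeZero.pos n) 1).1 hω) hω₁ hp₀ hp₁ hlam₀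
            hlam₁).trans ?_
          split_ifs <;> simp [exp_nonneg]
      _ ≤ n * (4 * exp (p * lam ^ 2 * (n / 2) - lam * t)) +
          4 * exp (p * lam ^ 2 * n - lam * t) := by
          rw [sum_add_distrib, sum_const, sum_ite_eq', nsmul_eq_mul]
          gcongr
          split_ifs <;> simp [exp_nonneg]
      _ = _ := by ring
  have hcard := inv_succ_le_sum_bernoulliWeight_card_eq (α := ZMod n) (d := d)
    (by simp [NeZero.ne n]) (by simpa using hdn)
  rw [ZMod.card] at hcard
  obtain ⟨T, -, hT, hgood⟩ := exists_mem_and_not_of_sum_filter_lt hw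
    (hbad.trans_lt (hsmall.trans_le hcard))
  refine ⟨T, hT, fun ω hω hω₁ ↦ ?_⟩
  simp only [not_exists, not_and, not_or, not_le] at hgood
  exact hgood ω (mem_erase.2 ⟨hω₁, (Polynomial.mem_nthRootsFinset (NeZero.pos n) 1).2 hω⟩)

theorem four_mul_exp_neg_two_mul_log_add_lt {x : ℝ} (hx : 1 ≤ x) :
    4 * x * exp (-(2 * log (10 * x))) + 4 * exp (-log (10 * x)) < 1 / (x + 1) := by
  have h : exp (-log (10 * x)) = (10 * x)⁻¹ := by rw [exp_neg, exp_log (by positivity)]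
  rw [show -(2 * log (10 * x)) = -log (10 * x) + -log (10 * x) by ring, exp_add, h]
  field_simp
  nlinarith

theorem exists_flat_subset_of_log_lt {n d : ℕ} [NeZero n] (hdn : d ≤ n)
    (hd : 9 * log (10 * n) < d) :
    ∃ T : Finset (ZMod n), #T = d ∧ ∀ ω : ℂ, ω ^ n = 1 → ω ≠ 1 →
      ‖∑ s ∈ T, ω ^ s.val‖ ≤ 3 * √d * √(log (10 * n)) := by
  set L := log (10 * n)
  have hn : (1 : ℝ) ≤ n := by exact_mod_cast NeZero.one_le
  have hL : 0 < L := log_pos (by linarith)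
  have hd₀ : (0 : ℝ) < d := by linarith
  set u := √d * √L / √2
  have hu : u ^ 2 = d * L / 2 := by
    rw [div_pow, mul_pow, sq_sqrt hd₀.le, sq_sqrt hL.le, sq_sqrt zero_le_two]
  set lam := 2 * u / d
  set t := 3 * u
  have hlam_t : lam * t = 3 * L := by simp only [lam, t]; field_simp; nlinarith
  have hlam_sq : lam ^ 2 * d = 2 * L := by simp only [lam]; field_simp; nlinarith
  have hlam₁ : lam ≤ 1 := by rw [div_le_one hd₀]; nlinarith
  have e₁ : (d : ℝ) / n * lam ^ 2 * (n / 2) - lam * t = -(2 * L) := by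
    rw [show (d : ℝ) / n * lam ^ 2 * (n / 2) = lam ^ 2 * d / 2 by field_simp, hlam_sq, hlam_t]
    ring
  have e₂ : (d : ℝ) / n * lam ^ 2 * n - lam * t = -L := by
    rw [show (d : ℝ) / n * lam ^ 2 * n = lam ^ 2 * d by field_simp, hlam_sq, hlam_t]
    ring
  obtain ⟨T, hT, hgood⟩ := exists_card_eq_forall_abs_re_lt_and_abs_im_lt hdn (by positivity)
    hlam₁ (by rw [e₁, e₂]; exact four_mul_exp_neg_two_mul_log_add_lt hn)
  refine ⟨T, hT, fun ω hω hω₁ ↦ ?_⟩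
  obtain ⟨hre, him⟩ := hgood ω hω hω₁
  calc ‖∑ s ∈ T, ω ^ s.val‖ ≤ √2 * max |(∑ s ∈ T, ω ^ s.val).re| |(∑ s ∈ T, ω ^ s.val).im| :=
        Complex.norm_le_sqrt_two_mul_max _
    _ ≤ √2 * t := by gcongr; exact max_le hre.le him.le
    _ = 3 * √d * √L := by simp only [t, u]; field_simp

theorem exists_flat_subset_of_le {n d : ℕ} [NeZero n] (hdn : d ≤ n) :
    ∃ T : Finset (ZMod n), #T = d ∧ ∀ ω : ℂ, ω ^ n = 1 → ω ≠ 1 →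
      ‖∑ s ∈ T, ω ^ s.val‖ ≤ 3 * √d * √(log (10 * n)) := by
  by_cases hd : d ≤ 9 * log (10 * n)
  · obtain ⟨T, -, hT⟩ := exists_subset_card_eq (s := (univ : Finset (ZMod n)))
      (by simpa using hdn)
    refine ⟨T, hT, fun ω hω _ ↦ (norm_sum_pow_val_le_card hω T).trans ?_⟩
    calc (#T : ℝ) = √d * √d := by rw [hT, mul_self_sqrt d.cast_nonneg]
      _ ≤ √d * √(3 ^ 2 * log (10 * n)) := by gcongr; linarith
      _ = 3 * √d * √(log (10 * n)) := by rw [sqrt_mul (by norm_num), sqrt_sq (by norm_num)]; ring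
  · exact exists_flat_subset_of_log_lt hdn (not_le.1 hd)

theorem exists_flat_subset_zmod_general (n : ℕ) (hn : 2 ≤ n) (d : ℕ)
    (hd2 : (d : ℝ) ≤ (n : ℝ) ^ ((2 : ℝ) / 3)) :
    ∃ T : Finset (ZMod n), T.card = d ∧
      ∀ ω : ℂ, ω ^ n = 1 → ω ≠ 1 →
        ‖∑ s ∈ T, ω ^ (s.val)‖ ≤
          3 * Real.sqrt d * Real.sqrt (Real.log (10 * n)) := by
  have : NeZero n := ⟨by omega⟩
  have hn₁ : (1 : ℝ) ≤ n := by exact_mod_cast hn.trans' one_le_two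
  exact exists_flat_subset_of_le
    (by exact_mod_cast hd2.trans (rpow_le_self_of_one_le hn₁ (by norm_num)))

/-- For every `n ≥ 2` and every `d` with `1 ≤ d ≤ n^(2/3)`, there is a
subset `T ⊆ ℤ/nℤ` of cardinality `d` such that for every nontrivial `n`-th root of unity
`ω ∈ ℂ`, `|∑_{s ∈ T} ω^s̃| ≤ 3·√d·√(log(10n))`, where `s̃ ∈ {0,…,n-1}` is the canonical
representative of `s`. -/
theorem exists_flat_subset_zmod (n : ℕ) (hn : 2 ≤ n) (d : ℕ) (hd1 : 1 ≤ d)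
    (hd2 : (d : ℝ) ≤ (n : ℝ) ^ ((2 : ℝ) / 3)) :
    ∃ T : Finset (ZMod n), T.card = d ∧
      ∀ ω : ℂ, ω ^ n = 1 → ω ≠ 1 →
        ‖∑ s ∈ T, ω ^ (s.val)‖ ≤
          3 * Real.sqrt d * Real.sqrt (Real.log (10 * n)) :=
  exists_flat_subset_zmod_general n hn d hd2
end
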